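/- arXiv:2602.18427 — 7 statements merged into one kernel-verified Lean document; each statement's English description precedes it below -/
import Mathlib

section
/- For every odd n ≥ 5, the dimension of the convex hull of the n×n VHSASMs in ℝ^{n×n} equals (n−5)²/4 (a nonnegative integer since n is odd). -/
/-- An `n × n` alternating sign matrix: entries in `{-1, 0, 1}`, all row- and
column-prefix sums lie in `{0, 1}`, and all full row and column sums equal `1`. -/
def IsASM (n : ℕ) (X : Fin n → Fin n → ℝ) : Prop :=
  (∀ i j, X i j = -1 ∨ X i j = 0 ∨ X i j = 1) ∧
  (∀ i j, (∑ j' ∈ Finset.Iic j, X i j') = 0 ∨ (∑ j' ∈ Finset.Iic j, X i j') = 1) ∧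
  (∀ i j, (∑ i' ∈ Finset.Iic i, X i' j) = 0 ∨ (∑ i' ∈ Finset.Iic i, X i' j) = 1) ∧
  (∀ i, (∑ j, X i j) = 1) ∧
  (∀ j, (∑ i, X i j) = 1)

namespace VHSaux

open Finset

/-! ### ℕ-indexed entries and prefix sums -/

/-- Entry of a matrix, with ℕ indices, `0` out of range. -/
def ent {n : ℕ} (X : Fin n → Fin n → ℝ) (i j : ℕ) : ℝ :=
  if h : i < n ∧ j < n then X ⟨i, h.1⟩ ⟨j, h.2⟩ else 0

lemma ent_apply {n : ℕ} (X : Fin n → Fin n → ℝ) (i j : Fin n) :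
    ent X i j = X i j := by
  simp [ent, i.isLt, j.isLt]

lemma ent_oob {n : ℕ} (X : Fin n → Fin n → ℝ) {i j : ℕ} (h : ¬ (i < n ∧ j < n)) :
    ent X i j = 0 := by simp [ent, h]

lemma ent_sub {n : ℕ} (X Y : Fin n → Fin n → ℝ) (i j : ℕ) :
    ent (X - Y) i j = ent X i j - ent Y i j := by
  unfold ent; split <;> simp

lemma ent_add {n : ℕ} (X Y : Fin n → Fin n → ℝ) (i j : ℕ) :
    ent (X + Y) i j = ent X i j + ent Y i j := by
  unfold ent; split <;> simp

lemma ent_smul {n : ℕ} (c : ℝ) (X : Fin n → Fin n → ℝ) (i j : ℕ) :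
    ent (c • X) i j = c * ent X i j := by
  unfold ent; split <;> simp

lemma ent_zero {n : ℕ} (i j : ℕ) : ent (0 : Fin n → Fin n → ℝ) i j = 0 := by
  unfold ent; split <;> simp

/-- Row prefix sums with ℕ indices. -/
def rp {n : ℕ} (X : Fin n → Fin n → ℝ) (i j : ℕ) : ℝ :=
  ∑ k ∈ Finset.range (j+1), ent X i k

/-- Column prefix sums with ℕ indices. -/
def cp {n : ℕ} (X : Fin n → Fin n → ℝ) (i j : ℕ) : ℝ :=
  ∑ k ∈ Finset.range (i+1), ent X k j

/-- Rectangular (corner) prefix sums with ℕ indices. -/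
def pp {n : ℕ} (X : Fin n → Fin n → ℝ) (i j : ℕ) : ℝ :=
  ∑ k ∈ Finset.range (i+1), rp X k j

lemma pp_eq_sum_cp {n : ℕ} (X : Fin n → Fin n → ℝ) (i j : ℕ) :
    pp X i j = ∑ k ∈ Finset.range (j+1), cp X i k := by
  unfold pp rp cp
  exact Finset.sum_comm

/-- Conversion: `Fin`-world `Iic`-sums are ℕ-world prefix sums. -/
lemma sum_Iic_eq {n : ℕ} (f : Fin n → ℝ) (j : Fin n) (g : ℕ → ℝ)
    (hg : ∀ x : Fin n, g x = f x) :
    ∑ x ∈ Finset.Iic j, f x = ∑ k ∈ Finset.range ((j : ℕ)+1), g k := by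
  have h1 : ∑ x ∈ Finset.Iic j, f x = ∑ k ∈ (Finset.Iic j).map Fin.valEmbedding, g k := by
    rw [Finset.sum_map]
    exact Finset.sum_congr rfl fun x _ => (hg x).symm
  rw [h1, Fin.map_valEmbedding_Iic]
  congr 1
  ext k
  simp [Nat.lt_succ_iff]

lemma sum_Iic_row {n : ℕ} (X : Fin n → Fin n → ℝ) (i j : Fin n) :
    ∑ x ∈ Finset.Iic j, X i x = rp X i j := by
  exact sum_Iic_eq _ j (ent X i) (fun x => ent_apply X i x)

lemma sum_Iic_col {n : ℕ} (X : Fin n → Fin n → ℝ) (i j : Fin n) :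
    ∑ x ∈ Finset.Iic i, X x j = cp X i j := by
  exact sum_Iic_eq _ i (fun k => ent X k j) (fun x => ent_apply X x j)

lemma sum_univ_row {n : ℕ} (X : Fin n → Fin n → ℝ) (i : Fin n) :
    ∑ x, X i x = ∑ k ∈ Finset.range n, ent X i k := by
  rw [← Fin.sum_univ_eq_sum_range]
  exact Finset.sum_congr rfl fun x _ => (ent_apply X i x).symm

lemma sum_univ_col {n : ℕ} (X : Fin n → Fin n → ℝ) (j : Fin n) :
    ∑ x, X x j = ∑ k ∈ Finset.range n, ent X k j := by
  rw [← Fin.sum_univ_eq_sum_range]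
  exact Finset.sum_congr rfl fun x _ => (ent_apply X x j).symm

/-- Integrality of sums of integer-valued reals. -/
lemma sum_int {s : Finset ℕ} {f : ℕ → ℝ} (h : ∀ x ∈ s, ∃ z : ℤ, f x = z) :
    ∃ z : ℤ, ∑ x ∈ s, f x = z := by
  classical
  induction s using Finset.induction with
  | empty => exact ⟨0, by simp⟩
  | @insert a s' hx ih =>
    obtain ⟨z1, hz1⟩ := h a (Finset.mem_insert_self a s')
    obtain ⟨z2, hz2⟩ := ih fun x hxs => h x (Finset.mem_insert_of_mem hxs)
    exact ⟨z1 + z2, by rw [Finset.sum_insert hx, hz1, hz2]; push_cast; ring⟩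

/-- Transpose. -/
def tr {n : ℕ} (X : Fin n → Fin n → ℝ) : Fin n → Fin n → ℝ := fun i j => X j i

lemma ent_tr {n : ℕ} (X : Fin n → Fin n → ℝ) (i j : ℕ) :
    ent (tr X) i j = ent X j i := by
  unfold ent tr
  by_cases h : i < n ∧ j < n
  · rw [dif_pos h, dif_pos ⟨h.2, h.1⟩]
  · rw [dif_neg h, dif_neg (by tauto)]

lemma isASM_tr {n : ℕ} {X : Fin n → Fin n → ℝ} (h : IsASM n X) : IsASM n (VHSaux.tr X) := by
  obtain ⟨h1, h2, h3, h4, h5⟩ := h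
  exact ⟨fun i j => h1 j i, fun i j => h3 j i, fun i j => h2 j i, h5, h4⟩


/-! ### Symmetry in ℕ-world -/

lemma ent_eq {n : ℕ} (X : Fin n → Fin n → ℝ) {i j : ℕ} (hi : i < n) (hj : j < n) :
    ent X i j = X ⟨i, hi⟩ ⟨j, hj⟩ := dif_pos ⟨hi, hj⟩

section Sym

variable {m : ℕ} {X : Fin (2*m+1) → Fin (2*m+1) → ℝ}

lemma symv_ent (hs : ∀ i j, X i j = X i (Fin.rev j)) (i j : ℕ) (hj : j ≤ 2*m) :
    ent X i j = ent X i (2*m - j) := by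
  by_cases hi : i < 2*m+1
  · rw [ent_eq X hi (by omega), ent_eq X hi (by omega : 2*m - j < 2*m+1)]
    have h := hs ⟨i, hi⟩ ⟨j, by omega⟩
    have hrev : (Fin.rev (⟨j, by omega⟩ : Fin (2*m+1))) = ⟨2*m - j, by omega⟩ := by
      apply Fin.ext
      rw [Fin.val_rev]
      show 2*m+1 - (j+1) = 2*m - j
      omega
    rw [hrev] at h
    exact h
  · rw [ent_oob X (by omega), ent_oob X (by omega)]

lemma symh_ent (hs : ∀ i j, X i j = X (Fin.rev i) j) (i j : ℕ) (hi : i ≤ 2*m) :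
    ent X i j = ent X (2*m - i) j := by
  by_cases hj : j < 2*m+1
  · rw [ent_eq X (by omega) hj, ent_eq X (by omega : 2*m - i < 2*m+1) hj]
    have h := hs ⟨i, by omega⟩ ⟨j, hj⟩
    have hrev : (Fin.rev (⟨i, by omega⟩ : Fin (2*m+1))) = ⟨2*m - i, by omega⟩ := by
      apply Fin.ext
      rw [Fin.val_rev]
      show 2*m+1 - (i+1) = 2*m - i
      omega
    rw [hrev] at h
    exact h
  · rw [ent_oob X (by omega), ent_oob X (by omega)]

/-! ### Forced entries of VHSASMs -/

lemma entries_mem (hX : IsASM (2*m+1) X) (i j : ℕ) :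
    ent X i j = -1 ∨ ent X i j = 0 ∨ ent X i j = 1 := by
  by_cases h : i < 2*m+1 ∧ j < 2*m+1
  · rw [ent_eq X h.1 h.2]; exact hX.1 _ _
  · rw [ent_oob X h]; tauto

lemma rp01 (hX : IsASM (2*m+1) X) (i j : ℕ) (hi : i < 2*m+1) (hj : j < 2*m+1) :
    rp X i j = 0 ∨ rp X i j = 1 := by
  have := hX.2.1 ⟨i, hi⟩ ⟨j, hj⟩
  rwa [sum_Iic_row] at this

lemma cp01 (hX : IsASM (2*m+1) X) (i j : ℕ) (hi : i < 2*m+1) (hj : j < 2*m+1) :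
    cp X i j = 0 ∨ cp X i j = 1 := by
  have := hX.2.2.1 ⟨i, hi⟩ ⟨j, hj⟩
  rwa [sum_Iic_col] at this

lemma rowsum_one (hX : IsASM (2*m+1) X) (i : ℕ) (hi : i < 2*m+1) :
    ∑ k ∈ Finset.range (2*m+1), ent X i k = 1 := by
  have := hX.2.2.2.1 ⟨i, hi⟩
  rwa [sum_univ_row] at this

lemma colsum_one (hX : IsASM (2*m+1) X) (j : ℕ) (hj : j < 2*m+1) :
    ∑ k ∈ Finset.range (2*m+1), ent X k j = 1 := by
  have := hX.2.2.2.2 ⟨j, hj⟩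
  rwa [sum_univ_col] at this

lemma forced_row0 (hX : IsASM (2*m+1) X) (hs : ∀ i j, X i j = X i (Fin.rev j))
    (j : ℕ) (hj : j ≤ 2*m) : ent X 0 j = if j = m then 1 else 0 := by
  have h01 : ∀ k, k ≤ 2*m → ent X 0 k = 0 ∨ ent X 0 k = 1 := by
    intro k hk
    have h := cp01 hX 0 k (by omega) (by omega)
    simpa [cp] using h
  have hsum := rowsum_one hX 0 (by omega)
  have hzero : ∀ k, k ≤ 2*m → k ≠ m → ent X 0 k = 0 := by
    intro k hk hkm
    rcases h01 k hk with h | h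
    · exact h
    exfalso
    have hk2 : ent X 0 (2*m - k) = 1 := by
      rw [← symv_ent hs 0 k hk]; exact h
    have hne : k ≠ 2*m - k := by omega
    have hsub : ({k, 2*m - k} : Finset ℕ) ⊆ Finset.range (2*m+1) := by
      intro x hx
      simp only [Finset.mem_insert, Finset.mem_singleton] at hx
      rcases hx with rfl | rfl <;> · simp only [Finset.mem_range]; omega
    have hnn : ∀ x ∈ Finset.range (2*m+1), x ∉ ({k, 2*m - k} : Finset ℕ) → 0 ≤ ent X 0 x := by
      intro x hx _
      rcases h01 x (by simp at hx; omega) with h' | h' <;> rw [h'] <;> norm_num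
    have hle := Finset.sum_le_sum_of_subset_of_nonneg hsub hnn
    rw [Finset.sum_pair hne, h, hk2, hsum] at hle
    norm_num at hle
  by_cases hjm : j = m
  · rw [if_pos hjm]
    have hss : ∑ k ∈ Finset.range (2*m+1), ent X 0 k = ent X 0 m := by
      refine Finset.sum_eq_single_of_mem m (by simp only [Finset.mem_range]; omega) ?_
      intro b hb hbm
      exact hzero b (by simp only [Finset.mem_range] at hb; omega) hbm
    rw [hss] at hsum
    rw [hjm]
    exact hsum
  · simp [hjm, hzero j hj hjm]

lemma forced_col0 (hX : IsASM (2*m+1) X) (hs : ∀ i j, X i j = X (Fin.rev i) j)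
    (i : ℕ) (hi : i ≤ 2*m) : ent X i 0 = if i = m then 1 else 0 := by
  have h := forced_row0 (X := tr X) (isASM_tr hX) (fun a b => hs b a) i hi
  rwa [ent_tr] at h

lemma center_split (hX : IsASM (2*m+1) X) (hs : ∀ i j, X i j = X (Fin.rev i) j)
    (j : ℕ) (hj : j < 2*m+1) :
    ent X m j = 1 - 2 * ∑ k ∈ Finset.range m, ent X k j := by
  have hcs := colsum_one hX j hj
  have hsplit : ∑ k ∈ Finset.range (2*m+1), ent X k j
      = (∑ k ∈ Finset.range (m+1), ent X k j) + ∑ k ∈ Finset.Ico (m+1) (2*m+1), ent X k j := by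
    rw [Finset.range_eq_Ico, Finset.range_eq_Ico]
    exact (Finset.sum_Ico_consecutive (fun k => ent X k j) (by omega : 0 ≤ m+1) (by omega : m+1 ≤ 2*m+1)).symm
  have htail : ∑ k ∈ Finset.Ico (m+1) (2*m+1), ent X k j = ∑ k ∈ Finset.range m, ent X k j := by
    rw [Finset.sum_Ico_eq_sum_range]
    have hmm : 2*m+1 - (m+1) = m := by omega
    rw [hmm]
    have h1 : ∀ k ∈ Finset.range m, ent X (m+1+k) j = ent X (m-1-k) j := by
      intro k hk
      simp only [Finset.mem_range] at hk
      rw [symh_ent hs (m+1+k) j (by omega)]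
      congr 1
      omega
    rw [Finset.sum_congr rfl h1]
    exact Finset.sum_range_reflect (fun k => ent X k j) m
  rw [hsplit, htail, Finset.sum_range_succ] at hcs
  linarith

lemma center_pm (hX : IsASM (2*m+1) X) (hs : ∀ i j, X i j = X (Fin.rev i) j)
    (j : ℕ) (hj : j < 2*m+1) : ent X m j = 1 ∨ ent X m j = -1 := by
  have hsplit := center_split hX hs j hj
  obtain ⟨z, hz⟩ := sum_int (s := Finset.range m) (f := fun k => ent X k j)
    (fun x _ => by
      rcases entries_mem hX x j with h | h | h
      exacts [⟨-1, by simp [h]⟩, ⟨0, by simp [h]⟩, ⟨1, by simp [h]⟩])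
  rcases entries_mem hX m j with h | h | h
  · right; exact h
  · exfalso
    rw [h, hz] at hsplit
    have : ((2*z - 1 : ℤ) : ℝ) = 0 := by push_cast; linarith
    have h2 : (2*z - 1 : ℤ) = 0 := by exact_mod_cast this
    omega
  · left; exact h

lemma center_rp (hX : IsASM (2*m+1) X) (hs : ∀ i j, X i j = X (Fin.rev i) j)
    (j : ℕ) (hj : j ≤ 2*m) : rp X m j = if Even j then 1 else 0 := by
  induction j with
  | zero =>
    have h1 : rp X m 0 = ent X m 0 := by simp [rp]
    have h2 := center_pm hX hs 0 (by omega)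
    have h3 := rp01 hX m 0 (by omega) (by omega)
    rw [h1] at h3
    rw [if_pos (Even.zero)]
    rw [h1]
    rcases h2 with h | h <;> rcases h3 with h' | h' <;>
      first
        | exact h'
        | (exfalso; rw [h] at h'; norm_num at h')
  | succ k ih =>
    have h1 := ih (by omega)
    have h2 : rp X m (k+1) = rp X m k + ent X m (k+1) := Finset.sum_range_succ _ _
    rw [h1] at h2
    have h3 := center_pm hX hs (k+1) (by omega)
    have h4 := rp01 hX m (k+1) (by omega) (by omega)
    rw [h2] at h4 ⊢
    by_cases he : Even k
    · have hne : ¬ Even (k+1) := by simp [Nat.even_add_one, he]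
      rw [if_pos he] at h4 ⊢
      rw [if_neg hne]
      rcases h3 with h | h <;> rcases h4 with h' | h' <;> rw [h] <;> linarith
    · have hne : Even (k+1) := by simp [Nat.even_add_one, he]
      rw [if_neg he] at h4 ⊢
      rw [if_pos hne]
      rcases h3 with h | h <;> rcases h4 with h' | h' <;> rw [h] <;> linarith

lemma forced_center_row (hX : IsASM (2*m+1) X) (hs : ∀ i j, X i j = X (Fin.rev i) j)
    (j : ℕ) (hj : j ≤ 2*m) : ent X m j = if Even j then 1 else -1 := by
  rcases Nat.eq_zero_or_pos j with rfl | hpos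
  · have h1 : rp X m 0 = ent X m 0 := by simp [rp]
    have := center_rp hX hs 0 (by omega)
    rw [h1] at this
    simpa using this
  · obtain ⟨k, rfl⟩ : ∃ k, j = k + 1 := ⟨j - 1, by omega⟩
    have h2 : rp X m (k+1) = rp X m k + ent X m (k+1) := Finset.sum_range_succ _ _
    have ha := center_rp hX hs k (by omega)
    have hb := center_rp hX hs (k+1) hj
    rw [ha, hb] at h2
    by_cases he : Even k
    · have hne : ¬ Even (k+1) := by simp [Nat.even_add_one, he]
      rw [if_pos he, if_neg hne] at h2
      rw [if_neg hne]
      linarith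
    · have hne : Even (k+1) := by simp [Nat.even_add_one, he]
      rw [if_neg he, if_pos hne] at h2
      rw [if_pos hne]
      linarith

lemma forced_center_col (hX : IsASM (2*m+1) X) (hs : ∀ i j, X i j = X i (Fin.rev j))
    (i : ℕ) (hi : i ≤ 2*m) : ent X i m = if Even i then 1 else -1 := by
  have h := forced_center_row (X := tr X) (isASM_tr hX) (fun a b => hs b a) i hi
  rwa [ent_tr] at h

end Sym


/-! ### The bounding subspace -/

def Wcond (m : ℕ) (D : Fin (2*m+1) → Fin (2*m+1) → ℝ) : Prop :=
  (∀ i j, D i j = D i (Fin.rev j)) ∧ (∀ i j, D i j = D (Fin.rev i) j) ∧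
  (∀ i, ∑ j, D i j = 0) ∧ (∀ j, ∑ i, D i j = 0) ∧
  (∀ j, ent D 0 j = 0) ∧ (∀ i, ent D i 0 = 0) ∧
  (∀ j, ent D m j = 0) ∧ (∀ i, ent D i m = 0)

def Wsub (m : ℕ) : Submodule ℝ (Fin (2*m+1) → Fin (2*m+1) → ℝ) where
  carrier := {D | Wcond m D}
  zero_mem' := by
    refine ⟨?_, ?_, ?_, ?_, ?_, ?_, ?_, ?_⟩ <;> intros <;> simp [ent_zero]
  add_mem' := by
    rintro a b ⟨a1,a2,a3,a4,a5,a6,a7,a8⟩ ⟨b1,b2,b3,b4,b5,b6,b7,b8⟩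
    refine ⟨fun i j => ?_, fun i j => ?_, fun i => ?_, fun j => ?_,
      fun j => ?_, fun i => ?_, fun j => ?_, fun i => ?_⟩
    · simp only [Pi.add_apply]; rw [a1 i j, b1 i j]
    · simp only [Pi.add_apply]; rw [a2 i j, b2 i j]
    · simp only [Pi.add_apply]; rw [Finset.sum_add_distrib, a3 i, b3 i, add_zero]
    · simp only [Pi.add_apply]; rw [Finset.sum_add_distrib, a4 j, b4 j, add_zero]
    · rw [ent_add, a5 j, b5 j, add_zero]
    · rw [ent_add, a6 i, b6 i, add_zero]
    · rw [ent_add, a7 j, b7 j, add_zero]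
    · rw [ent_add, a8 i, b8 i, add_zero]
  smul_mem' := by
    rintro c a ⟨a1,a2,a3,a4,a5,a6,a7,a8⟩
    refine ⟨fun i j => ?_, fun i j => ?_, fun i => ?_, fun j => ?_,
      fun j => ?_, fun i => ?_, fun j => ?_, fun i => ?_⟩
    · simp only [Pi.smul_apply, smul_eq_mul]; rw [a1 i j]
    · simp only [Pi.smul_apply, smul_eq_mul]; rw [a2 i j]
    · simp only [Pi.smul_apply, smul_eq_mul]; rw [← Finset.mul_sum, a3 i, mul_zero]
    · simp only [Pi.smul_apply, smul_eq_mul]; rw [← Finset.mul_sum, a4 j, mul_zero]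
    · rw [ent_smul, a5 j, mul_zero]
    · rw [ent_smul, a6 i, mul_zero]
    · rw [ent_smul, a7 j, mul_zero]
    · rw [ent_smul, a8 i, mul_zero]

lemma mem_Wsub {m : ℕ} {D : Fin (2*m+1) → Fin (2*m+1) → ℝ} :
    D ∈ Wsub m ↔ Wcond m D := Iff.rfl

/-- The set of vertically and horizontally symmetric ASMs. -/
def Sset (m : ℕ) : Set (Fin (2*m+1) → Fin (2*m+1) → ℝ) :=
  {X | IsASM (2*m+1) X ∧ (∀ i j, X i j = X i (Fin.rev j)) ∧ (∀ i j, X i j = X (Fin.rev i) j)}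

lemma sub_mem_Wsub {m : ℕ} {X Y : Fin (2*m+1) → Fin (2*m+1) → ℝ}
    (hX : X ∈ Sset m) (hY : Y ∈ Sset m) : X - Y ∈ Wsub m := by
  obtain ⟨hXa, hXv, hXh⟩ := hX
  obtain ⟨hYa, hYv, hYh⟩ := hY
  refine ⟨fun i j => ?_, fun i j => ?_, fun i => ?_, fun j => ?_,
    fun j => ?_, fun i => ?_, fun j => ?_, fun i => ?_⟩
  · simp only [Pi.sub_apply]; rw [hXv i j, hYv i j]
  · simp only [Pi.sub_apply]; rw [hXh i j, hYh i j]
  · simp only [Pi.sub_apply]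
    rw [Finset.sum_sub_distrib, hXa.2.2.2.1 i, hYa.2.2.2.1 i, sub_self]
  · simp only [Pi.sub_apply]
    rw [Finset.sum_sub_distrib, hXa.2.2.2.2 j, hYa.2.2.2.2 j, sub_self]
  · rw [ent_sub]
    by_cases hj : j ≤ 2*m
    · rw [forced_row0 hXa hXv j hj, forced_row0 hYa hYv j hj, sub_self]
    · rw [ent_oob X (by omega), ent_oob Y (by omega), sub_self]
  · rw [ent_sub]
    by_cases hi : i ≤ 2*m
    · rw [forced_col0 hXa hXh i hi, forced_col0 hYa hYh i hi, sub_self]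
    · rw [ent_oob X (by omega), ent_oob Y (by omega), sub_self]
  · rw [ent_sub]
    by_cases hj : j ≤ 2*m
    · rw [forced_center_row hXa hXh j hj, forced_center_row hYa hYh j hj, sub_self]
    · rw [ent_oob X (by omega), ent_oob Y (by omega), sub_self]
  · rw [ent_sub]
    by_cases hi : i ≤ 2*m
    · rw [forced_center_col hXa hXv i hi, forced_center_col hYa hYv i hi, sub_self]
    · rw [ent_oob X (by omega), ent_oob Y (by omega), sub_self]

lemma vectorSpan_le_Wsub (m : ℕ) : vectorSpan ℝ (Sset m) ≤ Wsub m := by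
  rw [vectorSpan_def]
  refine Submodule.span_le.2 ?_
  rintro d hd
  rw [Set.mem_vsub] at hd
  obtain ⟨x, hx, y, hy, rfl⟩ := hd
  exact sub_mem_Wsub hx hy

/-! ### Consequences of membership in `Wsub` -/

section Wfacts

variable {m : ℕ} {D : Fin (2*m+1) → Fin (2*m+1) → ℝ}

lemma Wcond_tr (hD : Wcond m D) : Wcond m (tr D) := by
  obtain ⟨h1, h2, h3, h4, h5, h6, h7, h8⟩ := hD
  exact ⟨fun i j => h2 j i, fun i j => h1 j i, h4, h3,
    fun j => by rw [ent_tr]; exact h6 j, fun i => by rw [ent_tr]; exact h5 i,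
    fun j => by rw [ent_tr]; exact h8 j, fun i => by rw [ent_tr]; exact h7 i⟩

lemma cp_eq_rp_tr (i j : ℕ) : cp D i j = rp (tr D) j i := by
  unfold cp rp
  exact Finset.sum_congr rfl fun k _ => (ent_tr D j k).symm

lemma W_rp_last (hD : Wcond m D) (i : ℕ) : rp D i (2*m) = 0 := by
  by_cases hi : i < 2*m+1
  · have h := hD.2.2.1 ⟨i, hi⟩
    rw [sum_univ_row] at h
    exact h
  · refine Finset.sum_eq_zero fun k _ => ent_oob D (by omega)

lemma W_cp_last (hD : Wcond m D) (j : ℕ) : cp D (2*m) j = 0 := by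
  rw [cp_eq_rp_tr]
  exact W_rp_last (Wcond_tr hD) j

lemma W_rp_reflect (hD : Wcond m D) (hm : 1 ≤ m) (i j : ℕ) (hj : j ≤ 2*m - 1) :
    rp D i j + rp D i (2*m-1-j) = 0 := by
  have h0 := W_rp_last hD i
  have hsplit : rp D i (2*m)
      = rp D i j + ∑ k ∈ Finset.Ico (j+1) (2*m+1), ent D i k := by
    unfold rp
    rw [Finset.range_eq_Ico, Finset.range_eq_Ico]
    exact (Finset.sum_Ico_consecutive (fun k => ent D i k) (by omega : 0 ≤ j+1) (by omega : j+1 ≤ 2*m+1)).symm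
  have htail : ∑ k ∈ Finset.Ico (j+1) (2*m+1), ent D i k = rp D i (2*m-1-j) := by
    rw [Finset.sum_Ico_eq_sum_range]
    have hmm : 2*m+1 - (j+1) = 2*m - j := by omega
    rw [hmm]
    have h1 : ∀ k ∈ Finset.range (2*m - j), ent D i (j+1+k) = ent D i (2*m-j-1-k) := by
      intro k hk
      simp only [Finset.mem_range] at hk
      rw [symv_ent hD.1 i (j+1+k) (by omega)]
      congr 1
      omega
    rw [Finset.sum_congr rfl h1]
    have h2 := Finset.sum_range_reflect (fun k => ent D i k) (2*m - j)
    have hmm2 : 2*m - j = (2*m-1-j) + 1 := by omega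
    unfold rp
    rw [← hmm2]
    calc ∑ k ∈ Finset.range (2*m-j), ent D i (2*m-j-1-k)
        = ∑ k ∈ Finset.range (2*m-j), ent D i (2*m-j-1-k) := rfl
      _ = ∑ k ∈ Finset.range (2*m-j), ent D i k := h2
  rw [hsplit, htail] at h0
  linarith

lemma W_cp_reflect (hD : Wcond m D) (hm : 1 ≤ m) (i j : ℕ) (hi : i ≤ 2*m - 1) :
    cp D i j + cp D (2*m-1-i) j = 0 := by
  rw [cp_eq_rp_tr, cp_eq_rp_tr]
  exact W_rp_reflect (Wcond_tr hD) hm j i hi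

lemma W_rp_m1 (hD : Wcond m D) (hm : 1 ≤ m) (i : ℕ) : rp D i (m-1) = 0 := by
  have href := W_rp_reflect hD hm i (m-1) (by omega)
  have hmm : 2*m-1-(m-1) = m := by omega
  rw [hmm] at href
  have hstep : rp D i m = rp D i (m-1) + ent D i m := by
    have e : m - 1 + 1 = m := by omega
    unfold rp
    rw [e, Finset.sum_range_succ]
  rw [hstep, hD.2.2.2.2.2.2.2 i] at href
  linarith

lemma W_cp_m1 (hD : Wcond m D) (hm : 1 ≤ m) (j : ℕ) : cp D (m-1) j = 0 := by
  rw [cp_eq_rp_tr]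
  exact W_rp_m1 (Wcond_tr hD) hm j

lemma W_rp_zero_row (hD : Wcond m D) (j : ℕ) : rp D 0 j = 0 :=
  Finset.sum_eq_zero fun k _ => hD.2.2.2.2.1 k

lemma W_pp_i0 (hD : Wcond m D) (j : ℕ) : pp D 0 j = 0 := by
  unfold pp
  rw [Finset.sum_range_one]
  exact W_rp_zero_row hD j

lemma W_pp_j0 (hD : Wcond m D) (i : ℕ) : pp D i 0 = 0 := by
  unfold pp
  refine Finset.sum_eq_zero fun k _ => ?_
  unfold rp
  rw [Finset.sum_range_one]
  exact hD.2.2.2.2.2.1 k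

lemma W_pp_last_j (hD : Wcond m D) (i : ℕ) : pp D i (2*m) = 0 :=
  Finset.sum_eq_zero fun k _ => W_rp_last hD k

lemma W_pp_last_i (hD : Wcond m D) (j : ℕ) : pp D (2*m) j = 0 := by
  rw [pp_eq_sum_cp]
  exact Finset.sum_eq_zero fun k _ => W_cp_last hD k

lemma W_pp_m1_j (hD : Wcond m D) (hm : 1 ≤ m) (i : ℕ) : pp D i (m-1) = 0 :=
  Finset.sum_eq_zero fun k _ => W_rp_m1 hD hm k

lemma W_pp_m1_i (hD : Wcond m D) (hm : 1 ≤ m) (j : ℕ) : pp D (m-1) j = 0 := by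
  rw [pp_eq_sum_cp]
  exact Finset.sum_eq_zero fun k _ => W_cp_m1 hD hm k

lemma W_pp_reflect_j (hD : Wcond m D) (hm : 1 ≤ m) (i j : ℕ) (hj : j ≤ 2*m-1) :
    pp D i j + pp D i (2*m-1-j) = 0 := by
  unfold pp
  rw [← Finset.sum_add_distrib]
  exact Finset.sum_eq_zero fun k _ => W_rp_reflect hD hm k j hj

lemma W_pp_reflect_i (hD : Wcond m D) (hm : 1 ≤ m) (i j : ℕ) (hi : i ≤ 2*m-1) :
    pp D i j + pp D (2*m-1-i) j = 0 := by
  rw [pp_eq_sum_cp, pp_eq_sum_cp, ← Finset.sum_add_distrib]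
  exact Finset.sum_eq_zero fun k _ => W_cp_reflect hD hm i k hi

lemma W_pp_all (hD : Wcond m D) (hm : 2 ≤ m)
    (hblock : ∀ a b, 1 ≤ a → a ≤ m-2 → 1 ≤ b → b ≤ m-2 → pp D a b = 0)
    (i j : ℕ) (hi : i ≤ 2*m) (hj : j ≤ 2*m) : pp D i j = 0 := by
  have Htop : ∀ a, a ≤ m-1 → ∀ b, b ≤ m-1 → pp D a b = 0 := by
    intro a ha b hb
    rcases Nat.eq_zero_or_pos b with rfl | hb1
    · exact W_pp_j0 hD a
    by_cases hbm : b = m-1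
    · rw [hbm]; exact W_pp_m1_j hD (by omega) a
    rcases Nat.eq_zero_or_pos a with rfl | ha1
    · exact W_pp_i0 hD b
    by_cases ham : a = m-1
    · rw [ham]; exact W_pp_m1_i hD (by omega) b
    exact hblock a b (by omega) (by omega) (by omega) (by omega)
  have Hq : ∀ i', i' ≤ 2*m → ∀ b, b ≤ m-1 → pp D i' b = 0 := by
    intro i' hi' b hb
    by_cases h1 : i' ≤ m-1
    · exact Htop i' h1 b hb
    by_cases h2 : i' = 2*m
    · rw [h2]; exact W_pp_last_i hD b
    have href := W_pp_reflect_i hD (by omega) i' b (by omega)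
    have hz := Htop (2*m-1-i') (by omega) b hb
    rw [hz] at href
    linarith
  by_cases h1 : j ≤ m-1
  · exact Hq i hi j h1
  by_cases h2 : j = 2*m
  · rw [h2]; exact W_pp_last_j hD i
  have href := W_pp_reflect_j hD (by omega) i j (by omega)
  have hz := Hq i hi (2*m-1-j) (by omega)
  rw [hz] at href
  linarith

lemma W_D_zero (hD : Wcond m D) (hm : 2 ≤ m)
    (hblock : ∀ a b, 1 ≤ a → a ≤ m-2 → 1 ≤ b → b ≤ m-2 → pp D a b = 0) :
    D = 0 := by
  have hpp := W_pp_all hD hm hblock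
  have hrp : ∀ i, i ≤ 2*m → ∀ j, j ≤ 2*m → rp D i j = 0 := by
    intro i hi j hj
    rcases Nat.eq_zero_or_pos i with rfl | hi1
    · exact W_rp_zero_row hD j
    obtain ⟨k, rfl⟩ : ∃ k, i = k + 1 := ⟨i - 1, by omega⟩
    have h1 : pp D (k+1) j = pp D k j + rp D (k+1) j := Finset.sum_range_succ _ _
    rw [hpp (k+1) j (by omega) hj, hpp k j (by omega) hj] at h1
    linarith
  have hent : ∀ i, i ≤ 2*m → ∀ j, j ≤ 2*m → ent D i j = 0 := by
    intro i hi j hj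
    rcases Nat.eq_zero_or_pos j with rfl | hj1
    · have h := hrp i hi 0 (by omega)
      unfold rp at h
      rwa [Finset.sum_range_one] at h
    obtain ⟨k, rfl⟩ : ∃ k, j = k + 1 := ⟨j - 1, by omega⟩
    have h1 : rp D i (k+1) = rp D i k + ent D i (k+1) := Finset.sum_range_succ _ _
    rw [hrp i hi (k+1) hj, hrp i hi k (by omega)] at h1
    linarith
  funext i j
  have h := hent i (by omega) j (by omega)
  rw [ent_apply] at h
  simpa using h

end Wfacts

/-! ### The block evaluation map and the upper bound -/

def Phi (m : ℕ) : (Fin (2*m+1) → Fin (2*m+1) → ℝ) →ₗ[ℝ] (Fin (m-2) → Fin (m-2) → ℝ) where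
  toFun D := fun a b => pp D ((a : ℕ)+1) ((b : ℕ)+1)
  map_add' x y := by
    funext a b
    simp [pp, rp, ent_add, Finset.sum_add_distrib]
  map_smul' c x := by
    funext a b
    simp [pp, rp, ent_smul, Finset.mul_sum]

lemma finrank_Wsub_le (m : ℕ) (hm : 2 ≤ m) :
    Module.finrank ℝ (Wsub m) ≤ (m-2) * (m-2) := by
  have hinj : Function.Injective ((Phi m).comp (Wsub m).subtype) := by
    rw [← LinearMap.ker_eq_bot, eq_bot_iff]
    rintro ⟨D, hD⟩ hker
    simp only [LinearMap.mem_ker, LinearMap.comp_apply, Submodule.subtype_apply] at hker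
    have hblock : ∀ a b, 1 ≤ a → a ≤ m-2 → 1 ≤ b → b ≤ m-2 → pp D a b = 0 := by
      intro a b ha1 ha2 hb1 hb2
      have h := congrFun (congrFun hker ⟨a-1, by omega⟩) ⟨b-1, by omega⟩
      simp only [Phi, LinearMap.coe_mk, AddHom.coe_mk, Pi.zero_apply] at h
      have hredl : a - 1 + 1 = a := by omega
      have hredr : b - 1 + 1 = b := by omega
      rw [hredl, hredr] at h
      exact h
    have hzero := W_D_zero (mem_Wsub.1 hD) hm hblock
    simpa [Submodule.mem_bot, Subtype.ext_iff] using hzero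
  have hle := LinearMap.finrank_le_finrank_of_injective hinj
  calc Module.finrank ℝ (Wsub m) ≤ Module.finrank ℝ (Fin (m-2) → Fin (m-2) → ℝ) := hle
    _ = (m-2) * (m-2) := by
        rw [Module.finrank_pi_fintype]
        simp [Module.finrank_pi]


/-! ### Construction of VHSASMs from feasible quadrant surfaces -/

/-- The corner-sum surface determined by a quadrant surface `B`.
`rh m B i j` represents the sum of the entries in the first `i` rows and
first `j` columns of the matrix. -/
def rh (m : ℕ) (B : ℕ → ℕ → ℕ) (i j : ℕ) : ℤ :=
  if i = 0 ∨ j = 0 then 0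
  else if i ≤ m then
    (if j ≤ m then (B (i-1) (j-1) : ℤ) else (i : ℤ) - B (i-1) (2*m - j))
  else
    (if j ≤ m then (j : ℤ) - B (2*m - i) (j-1)
     else (i : ℤ) + (j : ℤ) - 1 - 2*m + B (2*m - i) (2*m - j))

/-- Feasibility of a quadrant surface. -/
structure Feas (m : ℕ) (B : ℕ → ℕ → ℕ) : Prop where
  top : ∀ b, b ≤ m-1 → B 0 b = 0
  left : ∀ a, a ≤ m-1 → B a 0 = 0
  bot : ∀ b, b ≤ m-1 → B (m-1) b = (b+1)/2
  right : ∀ a, a ≤ m-1 → B a (m-1) = (a+1)/2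
  stepA : ∀ a b, a+1 ≤ m-1 → b ≤ m-1 → B a b ≤ B (a+1) b ∧ B (a+1) b ≤ B a b + 1
  stepB : ∀ a b, a ≤ m-1 → b+1 ≤ m-1 → B a b ≤ B a (b+1) ∧ B a (b+1) ≤ B a b + 1

lemma Feas.transpose {m : ℕ} {B : ℕ → ℕ → ℕ} (h : Feas m B) : Feas m (fun a b => B b a) :=
  ⟨h.left, h.top, h.right, h.bot,
    fun a b ha hb => h.stepB b a hb ha, fun a b ha hb => h.stepA b a hb ha⟩

lemma rh_tr (m : ℕ) (B : ℕ → ℕ → ℕ) (i j : ℕ) :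
    rh m (fun a b => B b a) i j = rh m B j i := by
  unfold rh
  by_cases h0 : i = 0 ∨ j = 0
  · rw [if_pos h0, if_pos (Or.symm h0)]
  · rw [if_neg h0, if_neg (fun hc => h0 (Or.symm hc))]
    by_cases hi : i ≤ m <;> by_cases hj : j ≤ m <;>
      simp only [hi, hj, if_true, if_false] <;> ring

section RhEval

variable {m : ℕ} {B : ℕ → ℕ → ℕ}

lemma rh_eval_0j (j : ℕ) : rh m B 0 j = 0 := by unfold rh; simp

lemma rh_eval_i0 (i : ℕ) : rh m B i 0 = 0 := by unfold rh; simp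

lemma rh_eval_tl {i j : ℕ} (hi1 : 1 ≤ i) (hi2 : i ≤ m) (hj1 : 1 ≤ j) (hj2 : j ≤ m) :
    rh m B i j = B (i-1) (j-1) := by
  unfold rh
  rw [if_neg (by omega), if_pos hi2, if_pos hj2]

lemma rh_eval_trr {i j : ℕ} (hi1 : 1 ≤ i) (hi2 : i ≤ m) (hj : m+1 ≤ j) :
    rh m B i j = (i : ℤ) - B (i-1) (2*m - j) := by
  unfold rh
  rw [if_neg (by omega), if_pos hi2, if_neg (by omega)]

lemma rh_eval_bl {i j : ℕ} (hi : m+1 ≤ i) (hj1 : 1 ≤ j) (hj2 : j ≤ m) :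
    rh m B i j = (j : ℤ) - B (2*m - i) (j-1) := by
  unfold rh
  rw [if_neg (by omega), if_neg (by omega), if_pos hj2]

lemma rh_eval_br {i j : ℕ} (hi : m+1 ≤ i) (hj : m+1 ≤ j) :
    rh m B i j = (i : ℤ) + (j : ℤ) - 1 - 2*m + B (2*m - i) (2*m - j) := by
  unfold rh
  rw [if_neg (by omega), if_neg (by omega), if_neg (by omega)]

lemma rh_quadrant {a b : ℕ} (ha : a ≤ m-1) (hb : b ≤ m-1) (hm : 1 ≤ m) :
    rh m B (a+1) (b+1) = B a b := by
  rw [rh_eval_tl (by omega) (by omega) (by omega) (by omega)]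
  simp

/-- Vertical steps of the extended surface are `0` or `1`. -/
lemma rh_vstep (hF : Feas m B) (hm : 2 ≤ m) {i j : ℕ} (hi : i ≤ 2*m) (hj : j ≤ 2*m+1) :
    0 ≤ rh m B (i+1) j - rh m B i j ∧ rh m B (i+1) j - rh m B i j ≤ 1 := by
  rcases Nat.eq_zero_or_pos j with rfl | hj1
  · rw [rh_eval_i0, rh_eval_i0]; omega
  rcases Nat.eq_zero_or_pos i with rfl | hi1
  · rw [rh_eval_0j]
    by_cases hjm : j ≤ m
    · rw [rh_eval_tl (by omega) (by omega) hj1 hjm, hF.top (j-1) (by omega)]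
      omega
    · rw [rh_eval_trr (by omega) (by omega) (by omega), hF.top (2*m-j) (by omega)]
      omega
  by_cases hi2 : i+1 ≤ m
  · by_cases hjm : j ≤ m
    · rw [rh_eval_tl (by omega) hi2 hj1 hjm, rh_eval_tl hi1 (by omega) hj1 hjm]
      have hs := hF.stepA (i-1) (j-1) (by omega) (by omega)
      have e : i - 1 + 1 = i := by omega
      rw [e] at hs
      have e2 : i + 1 - 1 = i := by omega
      rw [e2]
      omega
    · rw [rh_eval_trr (by omega) hi2 (by omega), rh_eval_trr hi1 (by omega) (by omega)]
      have hs := hF.stepA (i-1) (2*m-j) (by omega) (by omega)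
      have e : i - 1 + 1 = i := by omega
      rw [e] at hs
      have e2 : i + 1 - 1 = i := by omega
      rw [e2]
      omega
  by_cases hi3 : i ≤ m
  · -- i = m
    have him : i = m := by omega
    by_cases hjm : j ≤ m
    · rw [rh_eval_bl (by omega) hj1 hjm, rh_eval_tl hi1 hi3 hj1 hjm]
      have e1 : 2*m - (i+1) = m-1 := by omega
      have e2 : i - 1 = m-1 := by omega
      rw [e1, e2, hF.bot (j-1) (by omega)]
      omega
    · rw [rh_eval_br (by omega) (by omega), rh_eval_trr hi1 hi3 (by omega)]
      have e1 : 2*m - (i+1) = m-1 := by omega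
      have e2 : i - 1 = m-1 := by omega
      rw [e1, e2, hF.bot (2*m-j) (by omega)]
      omega
  · -- m+1 ≤ i ≤ 2m
    by_cases hil : i = 2*m
    · subst hil
      by_cases hjm : j ≤ m
      · rw [rh_eval_bl (by omega) hj1 hjm, rh_eval_bl (by omega) hj1 hjm]
        have e1 : 2*m - (2*m+1) = 0 := by omega
        have e2 : 2*m - 2*m = 0 := by omega
        rw [e1, e2, hF.top (j-1) (by omega)]
        omega
      · rw [rh_eval_br (by omega) (by omega), rh_eval_br (by omega) (by omega)]
        have e1 : 2*m - (2*m+1) = 0 := by omega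
        have e2 : 2*m - 2*m = 0 := by omega
        rw [e1, e2, hF.top (2*m-j) (by omega)]
        omega
    · by_cases hjm : j ≤ m
      · rw [rh_eval_bl (by omega) hj1 hjm, rh_eval_bl (by omega) hj1 hjm]
        have hs := hF.stepA (2*m-(i+1)) (j-1) (by omega) (by omega)
        have e : 2*m-(i+1)+1 = 2*m-i := by omega
        rw [e] at hs
        omega
      · rw [rh_eval_br (by omega) (by omega), rh_eval_br (by omega) (by omega)]
        have hs := hF.stepA (2*m-(i+1)) (2*m-j) (by omega) (by omega)
        have e : 2*m-(i+1)+1 = 2*m-i := by omega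
        rw [e] at hs
        omega

/-- Horizontal steps of the extended surface are `0` or `1`. -/
lemma rh_hstep (hF : Feas m B) (hm : 2 ≤ m) {i j : ℕ} (hi : i ≤ 2*m+1) (hj : j ≤ 2*m) :
    0 ≤ rh m B i (j+1) - rh m B i j ∧ rh m B i (j+1) - rh m B i j ≤ 1 := by
  have h := rh_vstep (B := fun a b => B b a) hF.transpose hm (i := j) (j := i) hj hi
  rw [rh_tr m B (j+1) i, rh_tr m B j i] at h
  exact h

lemma rh_last_col (hF : Feas m B) (hm : 2 ≤ m) {i : ℕ} (hi : i ≤ 2*m+1) :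
    rh m B i (2*m+1) = i := by
  rcases Nat.eq_zero_or_pos i with rfl | hi1
  · rw [rh_eval_0j]; simp
  by_cases hi2 : i ≤ m
  · rw [rh_eval_trr hi1 hi2 (by omega)]
    have e : 2*m - (2*m+1) = 0 := by omega
    rw [e, hF.left (i-1) (by omega)]
    omega
  · rw [rh_eval_br (by omega) (by omega)]
    have e : 2*m - (2*m+1) = 0 := by omega
    rw [e, hF.left (2*m-i) (by omega)]
    push_cast
    ring

lemma rh_last_row (hF : Feas m B) (hm : 2 ≤ m) {j : ℕ} (hj : j ≤ 2*m+1) :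
    rh m B (2*m+1) j = j := by
  have h := rh_last_col (B := fun a b => B b a) hF.transpose hm (i := j) hj
  rw [rh_tr m B j (2*m+1)] at h
  exact h

/-- Reflection symmetry of the extended surface in the vertical direction. -/
lemma rh_vsym (hF : Feas m B) (hm : 2 ≤ m) {i j : ℕ} (hi : i ≤ 2*m+1) (hj : j ≤ 2*m+1) :
    rh m B i j + rh m B i (2*m+1-j) = i := by
  rcases Nat.eq_zero_or_pos i with rfl | hi1
  · rw [rh_eval_0j, rh_eval_0j]; simp
  rcases Nat.eq_zero_or_pos j with rfl | hj1
  · rw [rh_eval_i0]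
    have e : 2*m+1-0 = 2*m+1 := by omega
    rw [e, rh_last_col hF hm hi]
    omega
  by_cases hjl : j = 2*m+1
  · subst hjl
    have e : 2*m+1-(2*m+1) = 0 := by omega
    rw [e, rh_eval_i0, rh_last_col hF hm hi]
    omega
  -- now 1 ≤ j ≤ 2m, and 1 ≤ 2m+1-j ≤ 2m
  by_cases hi2 : i ≤ m <;> by_cases hjm : j ≤ m
  · rw [rh_eval_tl hi1 hi2 hj1 hjm, rh_eval_trr hi1 hi2 (by omega)]
    have e : 2*m - (2*m+1-j) = j-1 := by omega
    rw [e]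
    omega
  · rw [rh_eval_trr hi1 hi2 (by omega), rh_eval_tl hi1 hi2 (by omega) (by omega)]
    have e : 2*m+1-j-1 = 2*m-j := by omega
    rw [e]
    omega
  · rw [rh_eval_bl (by omega) hj1 hjm, rh_eval_br (by omega) (by omega)]
    have e : 2*m - (2*m+1-j) = j-1 := by omega
    rw [e]
    push_cast
    omega
  · rw [rh_eval_br (by omega) (by omega), rh_eval_bl (by omega) (by omega) (by omega)]
    have e : 2*m+1-j-1 = 2*m-j := by omega
    rw [e]
    push_cast
    omega

lemma rh_hsym (hF : Feas m B) (hm : 2 ≤ m) {i j : ℕ} (hi : i ≤ 2*m+1) (hj : j ≤ 2*m+1) :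
    rh m B i j + rh m B (2*m+1-i) j = j := by
  have h := rh_vsym (B := fun a b => B b a) hF.transpose hm (i := j) (j := i) hj hi
  rw [rh_tr m B j i, rh_tr m B j (2*m+1-i)] at h
  exact h

end RhEval


/-! ### The ASM associated with a feasible surface -/

def XB (m : ℕ) (B : ℕ → ℕ → ℕ) : Fin (2*m+1) → Fin (2*m+1) → ℝ :=
  fun i j => ((rh m B ((i:ℕ)+1) ((j:ℕ)+1) - rh m B i ((j:ℕ)+1)
    - rh m B ((i:ℕ)+1) (j:ℕ) + rh m B i j : ℤ) : ℝ)

section XBsec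

variable {m : ℕ} {B : ℕ → ℕ → ℕ}

lemma ent_XB {i j : ℕ} (hi : i < 2*m+1) (hj : j < 2*m+1) :
    ent (XB m B) i j
      = ((rh m B (i+1) (j+1) - rh m B i (j+1) - rh m B (i+1) j + rh m B i j : ℤ) : ℝ) := by
  rw [ent_eq _ hi hj]
  rfl

lemma rp_XB {i j : ℕ} (hi : i ≤ 2*m) (hj : j ≤ 2*m) :
    rp (XB m B) i j = ((rh m B (i+1) (j+1) - rh m B i (j+1) : ℤ) : ℝ) := by
  unfold rp
  have h1 : ∀ k ∈ Finset.range (j+1), ent (XB m B) i k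
      = ((rh m B (i+1) (k+1) - rh m B i (k+1) : ℤ) : ℝ)
        - ((rh m B (i+1) k - rh m B i k : ℤ) : ℝ) := by
    intro k hk
    simp only [Finset.mem_range] at hk
    rw [ent_XB (by omega) (by omega)]
    push_cast
    ring
  rw [Finset.sum_congr rfl h1,
    Finset.sum_range_sub (fun k => ((rh m B (i+1) k - rh m B i k : ℤ) : ℝ)) (j+1)]
  rw [rh_eval_i0, rh_eval_i0]
  push_cast
  ring

lemma cp_XB {i j : ℕ} (hi : i ≤ 2*m) (hj : j ≤ 2*m) :
    cp (XB m B) i j = ((rh m B (i+1) (j+1) - rh m B (i+1) j : ℤ) : ℝ) := by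
  unfold cp
  have h1 : ∀ k ∈ Finset.range (i+1), ent (XB m B) k j
      = ((rh m B (k+1) (j+1) - rh m B (k+1) j : ℤ) : ℝ)
        - ((rh m B k (j+1) - rh m B k j : ℤ) : ℝ) := by
    intro k hk
    simp only [Finset.mem_range] at hk
    rw [ent_XB (by omega) (by omega)]
    push_cast
    ring
  rw [Finset.sum_congr rfl h1,
    Finset.sum_range_sub (fun k => ((rh m B k (j+1) - rh m B k j : ℤ) : ℝ)) (i+1)]
  rw [rh_eval_0j, rh_eval_0j]
  push_cast
  ring

lemma pp_XB (hm : 2 ≤ m) {i j : ℕ} (hi : i ≤ 2*m) (hj : j ≤ 2*m) :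
    pp (XB m B) i j = ((rh m B (i+1) (j+1) : ℤ) : ℝ) := by
  unfold pp
  have h1 : ∀ k ∈ Finset.range (i+1), rp (XB m B) k j
      = ((rh m B (k+1) (j+1) : ℤ) : ℝ) - ((rh m B k (j+1) : ℤ) : ℝ) := by
    intro k hk
    simp only [Finset.mem_range] at hk
    rw [rp_XB (by omega) hj]
    push_cast
    ring
  rw [Finset.sum_congr rfl h1,
    Finset.sum_range_sub (fun k => ((rh m B k (j+1) : ℤ) : ℝ)) (i+1)]
  rw [rh_eval_0j]
  push_cast
  ring

lemma XB_symv (hF : Feas m B) (hm : 2 ≤ m) (i j : Fin (2*m+1)) :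
    XB m B i j = XB m B i (Fin.rev j) := by
  have hrev : ((Fin.rev j : Fin (2*m+1)) : ℕ) = 2*m - (j : ℕ) := by
    rw [Fin.val_rev]
    omega
  unfold XB
  rw [hrev]
  have hj : (j : ℕ) ≤ 2*m := by omega
  have e1 : 2*m - (j:ℕ) + 1 = 2*m+1 - (j:ℕ) := by omega
  have v1 := rh_vsym hF hm (i := (i:ℕ)+1) (j := (j:ℕ)) (by omega) (by omega)
  have v2 := rh_vsym hF hm (i := (i:ℕ)) (j := (j:ℕ)) (by omega) (by omega)
  have v3 := rh_vsym hF hm (i := (i:ℕ)+1) (j := (j:ℕ)+1) (by omega) (by omega)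
  have v4 := rh_vsym hF hm (i := (i:ℕ)) (j := (j:ℕ)+1) (by omega) (by omega)
  have e3 : 2*m+1 - ((j:ℕ)+1) = 2*m - (j:ℕ) := by omega
  rw [e3] at v3 v4
  rw [e1]
  have key : (rh m B ((i:ℕ)+1) ((j:ℕ)+1) - rh m B (i:ℕ) ((j:ℕ)+1)
      - rh m B ((i:ℕ)+1) (j:ℕ) + rh m B (i:ℕ) (j:ℕ) : ℤ)
      = rh m B ((i:ℕ)+1) (2*m+1-(j:ℕ)) - rh m B (i:ℕ) (2*m+1-(j:ℕ))
      - rh m B ((i:ℕ)+1) (2*m-(j:ℕ)) + rh m B (i:ℕ) (2*m-(j:ℕ)) := by linarith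
  exact congrArg (fun z : ℤ => (z : ℝ)) key

lemma XB_tr : tr (XB m B) = XB m (fun a b => B b a) := by
  funext i j
  unfold tr XB
  rw [rh_tr m B ((i:ℕ)+1) ((j:ℕ)+1), rh_tr m B (i:ℕ) ((j:ℕ)+1),
    rh_tr m B ((i:ℕ)+1) (j:ℕ), rh_tr m B (i:ℕ) (j:ℕ)]
  push_cast
  ring

lemma XB_symh (hF : Feas m B) (hm : 2 ≤ m) (i j : Fin (2*m+1)) :
    XB m B i j = XB m B (Fin.rev i) j := by
  have h := XB_symv (B := fun a b => B b a) hF.transpose hm j i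
  have e1 : XB m B i j = XB m (fun a b => B b a) j i := congrFun (congrFun XB_tr j) i
  have e2 : XB m B (Fin.rev i) j = XB m (fun a b => B b a) j (Fin.rev i) :=
    congrFun (congrFun XB_tr j) (Fin.rev i)
  rw [e1, e2]
  exact h

lemma XB_isASM (hF : Feas m B) (hm : 2 ≤ m) : IsASM (2*m+1) (XB m B) := by
  have hrp01 : ∀ i j : Fin (2*m+1), rp (XB m B) i j = 0 ∨ rp (XB m B) i j = 1 := by
    intro i j
    rw [rp_XB (by omega) (by omega)]
    have h := rh_vstep hF hm (i := (i:ℕ)) (j := (j:ℕ)+1) (by omega) (by omega)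
    have h2 : rh m B ((i:ℕ)+1) ((j:ℕ)+1) - rh m B (i:ℕ) ((j:ℕ)+1) = 0
        ∨ rh m B ((i:ℕ)+1) ((j:ℕ)+1) - rh m B (i:ℕ) ((j:ℕ)+1) = 1 := by omega
    rcases h2 with h2 | h2 <;> rw [h2] <;> norm_num
  have hcp01 : ∀ i j : Fin (2*m+1), cp (XB m B) i j = 0 ∨ cp (XB m B) i j = 1 := by
    intro i j
    rw [cp_XB (by omega) (by omega)]
    have h := rh_hstep hF hm (i := (i:ℕ)+1) (j := (j:ℕ)) (by omega) (by omega)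
    have h2 : rh m B ((i:ℕ)+1) ((j:ℕ)+1) - rh m B ((i:ℕ)+1) (j:ℕ) = 0
        ∨ rh m B ((i:ℕ)+1) ((j:ℕ)+1) - rh m B ((i:ℕ)+1) (j:ℕ) = 1 := by omega
    rcases h2 with h2 | h2 <;> rw [h2] <;> norm_num
  refine ⟨?_, ?_, ?_, ?_, ?_⟩
  · intro i j
    have hv1 := rh_vstep hF hm (i := (i:ℕ)) (j := (j:ℕ)+1) (by omega) (by omega)
    have hv2 := rh_vstep hF hm (i := (i:ℕ)) (j := (j:ℕ)) (by omega) (by omega)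
    have h2 : (rh m B ((i:ℕ)+1) ((j:ℕ)+1) - rh m B (i:ℕ) ((j:ℕ)+1)
        - rh m B ((i:ℕ)+1) (j:ℕ) + rh m B (i:ℕ) (j:ℕ) : ℤ) = -1
        ∨ (rh m B ((i:ℕ)+1) ((j:ℕ)+1) - rh m B (i:ℕ) ((j:ℕ)+1)
        - rh m B ((i:ℕ)+1) (j:ℕ) + rh m B (i:ℕ) (j:ℕ) : ℤ) = 0
        ∨ (rh m B ((i:ℕ)+1) ((j:ℕ)+1) - rh m B (i:ℕ) ((j:ℕ)+1)
        - rh m B ((i:ℕ)+1) (j:ℕ) + rh m B (i:ℕ) (j:ℕ) : ℤ) = 1 := by omega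
    unfold XB
    rcases h2 with h2 | h2 | h2 <;> rw [h2] <;> norm_num
  · intro i j
    rw [sum_Iic_row]
    exact hrp01 i j
  · intro i j
    rw [sum_Iic_col]
    exact hcp01 i j
  · intro i
    rw [sum_univ_row]
    have hr : ∑ k ∈ Finset.range (2*m+1), ent (XB m B) (i:ℕ) k = rp (XB m B) (i:ℕ) (2*m) := rfl
    rw [hr, rp_XB (by omega) (by omega), rh_last_col hF hm (by omega),
      rh_last_col hF hm (by omega)]
    push_cast
    ring
  · intro j
    rw [sum_univ_col]
    have hc : ∑ k ∈ Finset.range (2*m+1), ent (XB m B) k (j:ℕ) = cp (XB m B) (2*m) (j:ℕ) := rfl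
    rw [hc, cp_XB (by omega) (by omega), rh_last_row hF hm (by omega),
      rh_last_row hF hm (by omega)]
    push_cast
    ring

lemma XB_mem_Sset (hF : Feas m B) (hm : 2 ≤ m) : XB m B ∈ Sset m :=
  ⟨XB_isASM hF hm, XB_symv hF hm, XB_symh hF hm⟩

end XBsec


/-! ### The toggle surfaces -/

def gg (b : ℕ) : ℕ := (b+1)/2
def Bmin (m a b : ℕ) : ℕ := max (gg b - (m-1-a)) (gg a - (m-1-b))
def Vs (m s t a b : ℕ) : ℕ := max (Bmin m a b) (Bmin m s t + 1 - max (s-a) (t-b))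
def Ws (m s t a b : ℕ) : ℕ := if a = s ∧ b = t then Bmin m s t else Vs m s t a b

section Surfaces

variable {m s t : ℕ}

lemma Bmin_row0 (hm : 3 ≤ m) {b : ℕ} (hb : b ≤ m-1) : Bmin m 0 b = 0 := by
  unfold Bmin gg; omega

lemma Bmin_col0 (hm : 3 ≤ m) {a : ℕ} (ha : a ≤ m-1) : Bmin m a 0 = 0 := by
  unfold Bmin gg; omega

lemma Bmin_bot (hm : 3 ≤ m) {b : ℕ} (hb : b ≤ m-1) : Bmin m (m-1) b = (b+1)/2 := by
  unfold Bmin gg; omega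

lemma Bmin_right (hm : 3 ≤ m) {a : ℕ} (ha : a ≤ m-1) : Bmin m a (m-1) = (a+1)/2 := by
  unfold Bmin gg; omega

lemma Bmin_stepA (hm : 3 ≤ m) {a b : ℕ} (ha : a+1 ≤ m-1) (hb : b ≤ m-1) :
    Bmin m a b ≤ Bmin m (a+1) b ∧ Bmin m (a+1) b ≤ Bmin m a b + 1 := by
  unfold Bmin gg; omega

lemma Bmin_stepB (hm : 3 ≤ m) {a b : ℕ} (ha : a ≤ m-1) (hb : b+1 ≤ m-1) :
    Bmin m a b ≤ Bmin m a (b+1) ∧ Bmin m a (b+1) ≤ Bmin m a b + 1 := by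
  unfold Bmin gg; omega

lemma Bmin_lt_s (hm : 3 ≤ m) (hs1 : 1 ≤ s) (hs2 : s ≤ m-2) (ht1 : 1 ≤ t) (ht2 : t ≤ m-2) :
    Bmin m s t + 1 ≤ s := by
  unfold Bmin gg; omega

lemma Bmin_lt_t (hm : 3 ≤ m) (hs1 : 1 ≤ s) (hs2 : s ≤ m-2) (ht1 : 1 ≤ t) (ht2 : t ≤ m-2) :
    Bmin m s t + 1 ≤ t := by
  unfold Bmin gg; omega

lemma Bmin_lt_ggs (hm : 3 ≤ m) (hs1 : 1 ≤ s) (hs2 : s ≤ m-2) (ht1 : 1 ≤ t) (ht2 : t ≤ m-2) :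
    Bmin m s t + 1 ≤ (s+1)/2 := by
  unfold Bmin gg; omega

lemma Bmin_lt_ggt (hm : 3 ≤ m) (hs1 : 1 ≤ s) (hs2 : s ≤ m-2) (ht1 : 1 ≤ t) (ht2 : t ≤ m-2) :
    Bmin m s t + 1 ≤ (t+1)/2 := by
  unfold Bmin gg; omega

lemma feas_Vs (hm : 3 ≤ m) (hs1 : 1 ≤ s) (hs2 : s ≤ m-2) (ht1 : 1 ≤ t) (ht2 : t ≤ m-2) :
    Feas m (Vs m s t) := by
  constructor
  · intro b hb
    have e1 := Bmin_row0 (b := b) hm hb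
    have e2 := Bmin_lt_s hm hs1 hs2 ht1 ht2
    unfold Vs; omega
  · intro a ha
    have e1 := Bmin_col0 (a := a) hm ha
    have e2 := Bmin_lt_t hm hs1 hs2 ht1 ht2
    unfold Vs; omega
  · intro b hb
    have e1 := Bmin_bot (b := b) hm hb
    have e2 := Bmin_lt_ggt hm hs1 hs2 ht1 ht2
    have e3 : (t+1)/2 ≤ (b+1)/2 + (t-b) := by omega
    unfold Vs; omega
  · intro a ha
    have e1 := Bmin_right (a := a) hm ha
    have e2 := Bmin_lt_ggs hm hs1 hs2 ht1 ht2
    have e3 : (s+1)/2 ≤ (a+1)/2 + (s-a) := by omega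
    unfold Vs; omega
  · intro a b ha hb
    have c1 := Bmin_stepA (a := a) (b := b) hm ha hb
    unfold Vs; omega
  · intro a b ha hb
    have c1 := Bmin_stepB (a := a) (b := b) hm ha hb
    unfold Vs; omega

lemma feas_Ws (hm : 3 ≤ m) (hs1 : 1 ≤ s) (hs2 : s ≤ m-2) (ht1 : 1 ≤ t) (ht2 : t ≤ m-2) :
    Feas m (Ws m s t) := by
  have hV := feas_Vs hm hs1 hs2 ht1 ht2
  constructor
  · intro b hb
    have h := hV.top b hb
    unfold Ws
    rw [if_neg (by omega)]
    exact h
  · intro a ha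
    have h := hV.left a ha
    unfold Ws
    rw [if_neg (by omega)]
    exact h
  · intro b hb
    have h := hV.bot b hb
    unfold Ws
    rw [if_neg (by omega)]
    exact h
  · intro a ha
    have h := hV.right a ha
    unfold Ws
    rw [if_neg (by omega)]
    exact h
  · intro a b ha hb
    by_cases h1 : a = s ∧ b = t
    · obtain ⟨rfl, rfl⟩ := h1
      have c1 := Bmin_stepA (a := a) (b := b) hm ha hb
      unfold Ws Vs
      rw [if_pos ⟨rfl, rfl⟩, if_neg (by omega)]
      omega
    by_cases h2 : a+1 = s ∧ b = t
    · obtain ⟨h2a, rfl⟩ := h2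
      subst h2a
      have c1 := Bmin_stepA (a := a) (b := b) hm ha hb
      unfold Ws Vs
      rw [if_neg (by omega), if_pos ⟨rfl, rfl⟩]
      omega
    · have c1 := Bmin_stepA (a := a) (b := b) hm ha hb
      have h := hV.stepA a b ha hb
      unfold Ws
      rw [if_neg h1, if_neg h2]
      exact h
  · intro a b ha hb
    by_cases h1 : a = s ∧ b = t
    · obtain ⟨rfl, rfl⟩ := h1
      have c1 := Bmin_stepB (a := a) (b := b) hm ha hb
      unfold Ws Vs
      rw [if_pos ⟨rfl, rfl⟩, if_neg (by omega)]
      omega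
    by_cases h2 : a = s ∧ b+1 = t
    · obtain ⟨rfl, h2b⟩ := h2
      subst h2b
      have c1 := Bmin_stepB (a := a) (b := b) hm ha hb
      unfold Ws Vs
      rw [if_neg (by omega), if_pos ⟨rfl, rfl⟩]
      omega
    · have c1 := Bmin_stepB (a := a) (b := b) hm ha hb
      have h := hV.stepB a b ha hb
      unfold Ws
      rw [if_neg h1, if_neg h2]
      exact h

lemma VW_diff (hm : 3 ≤ m) (hs1 : 1 ≤ s) (hs2 : s ≤ m-2) (ht1 : 1 ≤ t) (ht2 : t ≤ m-2)
    (a b : ℕ) :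
    (Vs m s t a b : ℤ) - (Ws m s t a b : ℤ) = if a = s ∧ b = t then 1 else 0 := by
  by_cases h : a = s ∧ b = t
  · obtain ⟨rfl, rfl⟩ := h
    rw [if_pos ⟨rfl, rfl⟩]
    have hv : Vs m a b a b = Bmin m a b + 1 := by unfold Vs; omega
    have hw : Ws m a b a b = Bmin m a b := by unfold Ws; rw [if_pos ⟨rfl, rfl⟩]
    rw [hv, hw]
    push_cast
    ring
  · rw [if_neg h]
    have hw : Ws m s t a b = Vs m s t a b := by unfold Ws; rw [if_neg h]
    rw [hw]
    ring

end Surfaces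

/-! ### Linearity of `pp` -/

lemma ent_finsum {n : ℕ} {ι : Type*} (sf : Finset ι) (F : ι → (Fin n → Fin n → ℝ)) (i j : ℕ) :
    ent (∑ q ∈ sf, F q) i j = ∑ q ∈ sf, ent (F q) i j := by
  unfold ent
  split
  · simp [Finset.sum_apply]
  · simp

lemma pp_sub {n : ℕ} (X Y : Fin n → Fin n → ℝ) (i j : ℕ) :
    pp (X - Y) i j = pp X i j - pp Y i j := by
  simp [pp, rp, ent_sub, Finset.sum_sub_distrib]

lemma pp_smul {n : ℕ} (c : ℝ) (X : Fin n → Fin n → ℝ) (i j : ℕ) :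
    pp (c • X) i j = c * pp X i j := by
  simp [pp, rp, ent_smul, Finset.mul_sum]

lemma pp_zero {n : ℕ} (i j : ℕ) : pp (0 : Fin n → Fin n → ℝ) i j = 0 := by
  simp [pp, rp, ent_zero]

lemma pp_add {n : ℕ} (X Y : Fin n → Fin n → ℝ) (i j : ℕ) :
    pp (X + Y) i j = pp X i j + pp Y i j := by
  simp [pp, rp, ent_add, Finset.sum_add_distrib]

lemma pp_finsum {n : ℕ} {ι : Type*} (sf : Finset ι) (F : ι → (Fin n → Fin n → ℝ)) (i j : ℕ) :
    pp (∑ q ∈ sf, F q) i j = ∑ q ∈ sf, pp (F q) i j := by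
  classical
  induction sf using Finset.induction with
  | empty => simp [pp_zero]
  | @insert a s' ha ih =>
    rw [Finset.sum_insert ha, Finset.sum_insert ha, pp_add, ih]

/-! ### The lower bound -/

lemma lower_bound (m : ℕ) (hm : 2 ≤ m) :
    (m-2)*(m-2) ≤ Module.finrank ℝ (vectorSpan ℝ (Sset m)) := by
  rcases Nat.lt_or_ge m 3 with h3 | h3
  · have h : m - 2 = 0 := by omega
    rw [h]
    simp
  set fam : Fin (m-2) × Fin (m-2) → (Fin (2*m+1) → Fin (2*m+1) → ℝ) :=
    fun p => XB m (Vs m ((p.1:ℕ)+1) ((p.2:ℕ)+1)) - XB m (Ws m ((p.1:ℕ)+1) ((p.2:ℕ)+1))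
    with hfam
  have hcon : ∀ p : Fin (m-2) × Fin (m-2),
      1 ≤ (p.1:ℕ)+1 ∧ (p.1:ℕ)+1 ≤ m-2 ∧ 1 ≤ (p.2:ℕ)+1 ∧ (p.2:ℕ)+1 ≤ m-2 := by
    intro p
    have h1 := p.1.isLt
    have h2 := p.2.isLt
    omega
  have hmem : ∀ p, fam p ∈ vectorSpan ℝ (Sset m) := by
    intro p
    obtain ⟨c1, c2, c3, c4⟩ := hcon p
    have h1 := XB_mem_Sset (feas_Vs h3 c1 c2 c3 c4) hm
    have h2 := XB_mem_Sset (feas_Ws h3 c1 c2 c3 c4) hm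
    simpa [hfam] using vsub_mem_vectorSpan ℝ h1 h2
  have heval : ∀ p q : Fin (m-2) × Fin (m-2),
      pp (fam q) ((p.1:ℕ)+1) ((p.2:ℕ)+1) = if q = p then 1 else 0 := by
    intro p q
    obtain ⟨c1, c2, c3, c4⟩ := hcon q
    obtain ⟨d1, d2, d3, d4⟩ := hcon p
    rw [hfam]
    simp only []
    rw [pp_sub, pp_XB hm (by omega) (by omega), pp_XB hm (by omega) (by omega),
      rh_quadrant (by omega) (by omega) (by omega),
      rh_quadrant (by omega) (by omega) (by omega)]
    have hd := VW_diff h3 c1 c2 c3 c4 ((p.1:ℕ)+1) ((p.2:ℕ)+1)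
    have hcast : (((Vs m ((q.1:ℕ)+1) ((q.2:ℕ)+1) ((p.1:ℕ)+1) ((p.2:ℕ)+1) : ℤ)) : ℝ)
        - (((Ws m ((q.1:ℕ)+1) ((q.2:ℕ)+1) ((p.1:ℕ)+1) ((p.2:ℕ)+1) : ℤ)) : ℝ)
        = (((Vs m ((q.1:ℕ)+1) ((q.2:ℕ)+1) ((p.1:ℕ)+1) ((p.2:ℕ)+1) : ℤ)
          - (Ws m ((q.1:ℕ)+1) ((q.2:ℕ)+1) ((p.1:ℕ)+1) ((p.2:ℕ)+1) : ℤ) : ℤ) : ℝ) := by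
      push_cast
      ring
    rw [hcast, hd]
    by_cases hqp : q = p
    · subst hqp
      rw [if_pos ⟨rfl, rfl⟩, if_pos rfl]
      norm_num
    · have hne : ¬ ((p.1:ℕ)+1 = (q.1:ℕ)+1 ∧ (p.2:ℕ)+1 = (q.2:ℕ)+1) := by
        intro hc
        apply hqp
        have e1 : q.1 = p.1 := Fin.ext (by omega)
        have e2 : q.2 = p.2 := Fin.ext (by omega)
        exact Prod.ext e1 e2
      rw [if_neg hne, if_neg hqp]
      norm_num
  have hli : LinearIndependent ℝ fam := by
    rw [Fintype.linearIndependent_iff]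
    intro g hg p
    have h0 : pp (∑ q, g q • fam q) ((p.1:ℕ)+1) ((p.2:ℕ)+1) = 0 := by
      rw [hg]
      exact pp_zero _ _
    rw [pp_finsum] at h0
    have h1 : ∀ q ∈ (Finset.univ : Finset (Fin (m-2) × Fin (m-2))),
        pp (g q • fam q) ((p.1:ℕ)+1) ((p.2:ℕ)+1) = if q = p then g q else 0 := by
      intro q _
      rw [pp_smul, heval p q]
      by_cases hqp : q = p <;> simp [hqp]
    rw [Finset.sum_congr rfl h1, Finset.sum_ite_eq'] at h0
    simpa using h0
  have hli' : LinearIndependent ℝ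
      (fun p => (⟨fam p, hmem p⟩ : vectorSpan ℝ (Sset m))) := by
    apply LinearIndependent.of_comp (Submodule.subtype _)
    exact hli
  have hcard := hli'.fintype_card_le_finrank
  simpa using hcard

end VHSaux

/-- For odd `n ≥ 5`, the dimension of the polytope of `n × n` vertically and
horizontally symmetric ASMs is `(n-5)²/4`. -/
theorem VHSASM_polytope_dim (n : ℕ) (hodd : Odd n) (hn : 5 ≤ n) :
    Module.finrank ℝ
        ↥(vectorSpan ℝ
          (convexHull ℝ
            {X : Fin n → Fin n → ℝ |
              IsASM n X ∧ (∀ i j, X i j = X i j.rev) ∧ (∀ i j, X i j = X i.rev j)}))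
      = (n - 5) ^ 2 / 4 := by
  obtain ⟨m, rfl⟩ := hodd
  have hm : 2 ≤ m := by omega
  have hset : {X : Fin (2*m+1) → Fin (2*m+1) → ℝ |
      IsASM (2*m+1) X ∧ (∀ i j, X i j = X i j.rev) ∧ (∀ i j, X i j = X i.rev j)}
      = VHSaux.Sset m := rfl
  rw [hset]
  have hspan : vectorSpan ℝ (convexHull ℝ (VHSaux.Sset m)) = vectorSpan ℝ (VHSaux.Sset m) := by
    rw [← direction_affineSpan, affineSpan_convexHull, direction_affineSpan]
  rw [hspan]
  have harith : (2*m+1 - 5)^2/4 = (m-2)*(m-2) := by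
    have e : 2*m+1-5 = 2*(m-2) := by omega
    rw [e]
    have e2 : (2*(m-2))^2 = 4*((m-2)*(m-2)) := by ring
    rw [e2, Nat.mul_div_cancel_left _ (by norm_num : 0 < 4)]
  rw [harith]
  refine le_antisymm ?_ ?_
  · exact le_trans (Submodule.finrank_mono (VHSaux.vectorSpan_le_Wsub m))
      (VHSaux.finrank_Wsub_le m hm)
  · exact VHSaux.lower_bound m hm
end

section
/- For every n ≥ 1, the convex hull of the n×n half-turn symmetric ASMs in ℝ^{n×n} equals P_ASM ∩ P_HTS, i.e., conv(HTSASM(n)) = conv(ASM(n)) ∩ {X ∈ ℝ^{n×n} : x_{i,j} = x_{n+1−i,n+1−j} for all i,j}. -/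
open Finset MeasureTheory


set_option linter.dupNamespace false

namespace HTSAux

noncomputable def rnd (θ s : ℝ) : ℝ := ((⌈s - θ⌉ : ℤ) : ℝ)

lemma rnd_add_int (θ s : ℝ) (k : ℤ) : rnd θ (s + k) = rnd θ s + k := by
  unfold rnd
  rw [show s + (k : ℝ) - θ = (s - θ) + k by ring, Int.ceil_add_intCast]
  push_cast; ring

lemma rnd_mono (θ : ℝ) {s t : ℝ} (h : s ≤ t) : rnd θ s ≤ rnd θ t := by
  unfold rnd
  exact_mod_cast Int.ceil_mono (by linarith : s - θ ≤ t - θ)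

lemma rnd_antitone (s : ℝ) : Antitone (fun θ => rnd θ s) := by
  intro a b hab
  show ((⌈s - b⌉ : ℤ) : ℝ) ≤ ((⌈s - a⌉ : ℤ) : ℝ)
  exact_mod_cast Int.ceil_mono (by linarith : s - b ≤ s - a)

lemma rnd_diff_mem (θ : ℝ) {s t : ℝ} (h0 : 0 ≤ s - t) (h1 : s - t ≤ 1) :
    rnd θ s - rnd θ t = 0 ∨ rnd θ s - rnd θ t = 1 := by
  have hle : ⌈t - θ⌉ ≤ ⌈s - θ⌉ := Int.ceil_mono (by linarith)
  have hub : ⌈s - θ⌉ ≤ ⌈t - θ⌉ + 1 := by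
    have h := Int.ceil_mono (show s - θ ≤ (t - θ) + 1 by linarith)
    rwa [Int.ceil_add_one] at h
  unfold rnd
  rcases (show ⌈s - θ⌉ - ⌈t - θ⌉ = 0 ∨ ⌈s - θ⌉ - ⌈t - θ⌉ = 1 by omega) with h | h
  · left
    have h' := congrArg (fun z : ℤ => (z:ℝ)) h
    push_cast at h'; linarith
  · right
    have h' := congrArg (fun z : ℤ => (z:ℝ)) h
    push_cast at h'; linarith

lemma rnd_eq_step (s : ℝ) {θ : ℝ} (hθ : θ ∈ Set.Ioo (0:ℝ) 1) :
    rnd θ s = (⌊s⌋ : ℝ) + Set.indicator (Set.Iio (Int.fract s)) (fun _ => (1:ℝ)) θ := by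
  obtain ⟨h0, h1⟩ := hθ
  have hf0 := Int.fract_nonneg s
  have hf1 := Int.fract_lt_one s
  unfold rnd
  rw [show s - θ = (Int.fract s - θ) + ⌊s⌋ by rw [Int.fract]; ring, Int.ceil_add_intCast]
  by_cases hc : θ < Int.fract s
  · have h2 : ⌈Int.fract s - θ⌉ = 1 := by
      rw [Int.ceil_eq_iff]
      constructor <;> push_cast <;> linarith
    rw [h2, Set.indicator_of_mem (by simpa [Set.mem_Iio] using hc)]
    push_cast; ring
  · have h2 : ⌈Int.fract s - θ⌉ = 0 := by
      rw [Int.ceil_eq_iff]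
      constructor <;> push_cast <;> [linarith; linarith [not_lt.1 hc]]
    rw [h2, Set.indicator_of_notMem (by simpa [Set.mem_Iio] using hc)]
    push_cast; ring

lemma measurable_rnd (s : ℝ) : Measurable (fun θ => rnd θ s) :=
  (rnd_antitone s).measurable

lemma rnd_abs_le {θ : ℝ} (hθ : θ ∈ Set.Ioo (0:ℝ) 1) (s : ℝ) : |rnd θ s| ≤ |s| + 2 := by
  obtain ⟨h0, h1⟩ := hθ
  have hl := Int.le_ceil (s - θ)
  have hu := Int.ceil_lt_add_one (s - θ)
  unfold rnd
  rw [abs_le]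
  constructor <;> [nlinarith [abs_nonneg s, le_abs_self s, neg_abs_le s];
    nlinarith [abs_nonneg s, le_abs_self s, neg_abs_le s]]

lemma rnd_integrable (s : ℝ) : IntegrableOn (fun θ => rnd θ s) (Set.Ioo (0:ℝ) 1) := by
  refine ⟨((measurable_rnd s).aestronglyMeasurable), ?_⟩
  apply HasFiniteIntegral.of_bounded (C := |s| + 2)
  filter_upwards [ae_restrict_mem measurableSet_Ioo] with θ hθ
  simpa [Real.norm_eq_abs] using rnd_abs_le hθ s

lemma rnd_integral (s : ℝ) : ∫ θ in Set.Ioo (0:ℝ) 1, rnd θ s = s := by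
  have hf0 := Int.fract_nonneg s
  have hf1 := Int.fract_lt_one s
  rw [setIntegral_congr_fun measurableSet_Ioo (fun θ hθ => rnd_eq_step s hθ)]
  rw [integral_add (integrable_const _)
    ((integrable_const (1:ℝ)).indicator measurableSet_Iio)]
  rw [integral_indicator measurableSet_Iio]
  rw [Measure.restrict_restrict measurableSet_Iio]
  have hset : Set.Iio (Int.fract s) ∩ Set.Ioo (0:ℝ) 1 = Set.Ioo 0 (Int.fract s) := by
    ext x
    simp only [Set.mem_inter_iff, Set.mem_Iio, Set.mem_Ioo]
    constructor
    · rintro ⟨hx, h0, _⟩; exact ⟨h0, hx⟩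
    · rintro ⟨h0, hx⟩; exact ⟨hx, h0, by linarith⟩
  rw [hset]
  simp [Real.volume_Ioo, ENNReal.toReal_ofReal hf0, Int.self_sub_fract]



variable {n : ℕ} (X : Fin n → Fin n → ℝ)

/-- partial row sum: entries of row `i` in columns `< b`. -/
def rpre (i : Fin n) (b : ℕ) : ℝ := ∑ j ∈ univ.filter (fun j : Fin n => j.val < b), X i j

/-- partial column sum. -/
def cpre (j : Fin n) (a : ℕ) : ℝ := ∑ i ∈ univ.filter (fun i : Fin n => i.val < a), X i j

/-- corner sums -/
def pc (a b : ℕ) : ℝ :=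
  ∑ i ∈ univ.filter (fun i : Fin n => i.val < a), ∑ j ∈ univ.filter (fun j : Fin n => j.val < b), X i j

lemma filter_lt_succ {a : ℕ} (ha : a < n) :
    univ.filter (fun i : Fin n => i.val < a + 1)
      = insert ⟨a, ha⟩ (univ.filter (fun i : Fin n => i.val < a)) := by
  ext i
  simp only [mem_filter, mem_univ, true_and, mem_insert, Fin.ext_iff]
  omega

lemma filter_lt_self_eq_univ : univ.filter (fun i : Fin n => i.val < n) = univ := by
  ext i; simp [i.isLt]

lemma filter_lt_zero : univ.filter (fun i : Fin n => i.val < 0) = (∅ : Finset (Fin n)) := by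
  ext i; simp

lemma pc_zero_left (b : ℕ) : pc X 0 b = 0 := by
  simp [pc, filter_lt_zero]

lemma pc_zero_right (a : ℕ) : pc X a 0 = 0 := by
  simp [pc, filter_lt_zero]

lemma pc_succ_left {a : ℕ} (ha : a < n) (b : ℕ) :
    pc X (a + 1) b = pc X a b + rpre X ⟨a, ha⟩ b := by
  unfold pc rpre
  rw [filter_lt_succ ha, Finset.sum_insert (by simp)]
  ring

lemma pc_succ_right (a : ℕ) {b : ℕ} (hb : b < n) :
    pc X a (b + 1) = pc X a b + cpre X ⟨b, hb⟩ a := by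
  unfold pc cpre
  rw [Finset.sum_comm, Finset.sum_comm (s := univ.filter (fun i : Fin n => i.val < a))]
  rw [filter_lt_succ hb, Finset.sum_insert (by simp)]
  ring

lemma rpre_succ (i : Fin n) {b : ℕ} (hb : b < n) :
    rpre X i (b + 1) = rpre X i b + X i ⟨b, hb⟩ := by
  unfold rpre
  rw [filter_lt_succ hb, Finset.sum_insert (by simp)]
  ring

/-- `Iic`-sums are `rpre`s. -/
lemma sum_Iic_eq_rpre (i : Fin n) (j : Fin n) :
    ∑ j' ∈ Finset.Iic j, X i j' = rpre X i (j.val + 1) := by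
  unfold rpre
  apply Finset.sum_congr _ (fun _ _ => rfl)
  ext j'
  simp only [Finset.mem_Iic, Finset.mem_filter, Finset.mem_univ, true_and, Fin.le_def]
  omega

lemma sum_Iic_eq_cpre (j : Fin n) (i : Fin n) :
    ∑ i' ∈ Finset.Iic i, X i' j = cpre X j (i.val + 1) := by
  unfold cpre
  apply Finset.sum_congr _ (fun _ _ => rfl)
  ext i'
  simp only [Finset.mem_Iic, Finset.mem_filter, Finset.mem_univ, true_and, Fin.le_def]
  omega

lemma rpre_full (i : Fin n) (hrow : ∑ j, X i j = 1) : rpre X i n = 1 := by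
  unfold rpre; rw [filter_lt_self_eq_univ]; exact hrow

/-- full corner sums -/
lemma pc_left_full (hrow : ∀ i, ∑ j, X i j = 1) :
    ∀ a, a ≤ n → pc X a n = a := by
  intro a
  induction a with
  | zero => simp [pc_zero_left]
  | succ a ih =>
    intro ha
    rw [pc_succ_left X (by omega), ih (by omega), rpre_full X _ (hrow _)]
    push_cast; ring

lemma pc_right_full (hcol : ∀ j, ∑ i, X i j = 1) :
    ∀ b, b ≤ n → pc X n b = b := by
  intro b
  induction b with
  | zero => simp [pc_zero_right]
  | succ b ih =>
    intro hb
    rw [pc_succ_right X _ (by omega), ih (by omega)]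
    have : cpre X ⟨b, by omega⟩ n = 1 := by
      unfold cpre; rw [filter_lt_self_eq_univ]; exact hcol _
    rw [this]; push_cast; ring

/-- Telescoping a row of second differences. -/
lemma sum_Iic_telescope (g : ℕ → ℝ) (j : Fin n) :
    ∑ j' ∈ Finset.Iic j, (g (j'.val + 1) - g j'.val) = g (j.val + 1) - g 0 := by
  have : ∑ j' ∈ Finset.Iic j, (g (j'.val + 1) - g j'.val)
      = ∑ k ∈ Finset.range (j.val + 1), (g (k + 1) - g k) := by
    apply Finset.sum_bij' (i := fun (j' : Fin n) _ => j'.val)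
      (j := fun k hk => (⟨k, by have := Finset.mem_range.1 hk; omega⟩ : Fin n))
    case hi =>
      intro a ha
      have := Finset.mem_Iic.1 ha
      simp only [Finset.mem_range]
      have : a.val ≤ j.val := this
      omega
    case hj =>
      intro a ha
      have := Finset.mem_range.1 ha
      simp only [Finset.mem_Iic, Fin.le_def]
      omega
    case left_neg => intro a ha; rfl
    case right_neg => intro a ha; rfl
    case h => intro a ha; rfl
  rw [this, Finset.sum_range_sub]


lemma sum_rev_filter (p : Fin n → Prop) [DecidablePred p] (f : Fin n → ℝ) :
    ∑ i ∈ univ.filter p, f i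
      = ∑ i ∈ univ.filter (fun i => p (Fin.rev i)), f (Fin.rev i) := by
  apply Finset.sum_nbij' (i := fun i => Fin.rev i) (j := fun i => Fin.rev i)
  case hi => intro a ha; simp only [mem_filter, mem_univ, true_and, Fin.rev_rev]
             exact (Finset.mem_filter.1 ha).2
  case hj => intro a ha
             simp only [mem_filter, mem_univ, true_and]
             exact (Finset.mem_filter.1 ha).2
  case left_neg => intro a _; exact Fin.rev_rev a
  case right_neg => intro a _; exact Fin.rev_rev a
  case h => intro a _; rw [Fin.rev_rev]

lemma pc_rev (hsym : ∀ i j, X i j = X i.rev j.rev) {a b : ℕ} (ha : a ≤ n) (hb : b ≤ n) :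
    pc X (n - a) (n - b)
      = ∑ i ∈ univ.filter (fun i : Fin n => ¬ i.val < a),
          ∑ j ∈ univ.filter (fun j : Fin n => ¬ j.val < b), X i j := by
  unfold pc
  rw [sum_rev_filter (fun i : Fin n => i.val < n - a)]
  have houter : univ.filter (fun i : Fin n => (Fin.rev i).val < n - a)
      = univ.filter (fun i : Fin n => ¬ i.val < a) := by
    ext i
    simp only [mem_filter, mem_univ, true_and, Fin.val_rev]
    have := i.isLt
    omega
  rw [houter]
  apply Finset.sum_congr rfl
  intro i _
  rw [sum_rev_filter (fun j : Fin n => j.val < n - b)]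
  have hinner : univ.filter (fun j : Fin n => (Fin.rev j).val < n - b)
      = univ.filter (fun j : Fin n => ¬ j.val < b) := by
    ext j
    simp only [mem_filter, mem_univ, true_and, Fin.val_rev]
    have := j.isLt
    omega
  rw [hinner]
  apply Finset.sum_congr rfl
  intro j _
  exact (hsym i j).symm

lemma pc_symm (hsym : ∀ i j, X i j = X i.rev j.rev)
    (hrow : ∀ i, ∑ j, X i j = 1) (hcol : ∀ j, ∑ i, X i j = 1)
    {a b : ℕ} (ha : a ≤ n) (hb : b ≤ n) :
    pc X a b = pc X (n - a) (n - b) + (((a : ℤ) + (b : ℤ) - (n : ℤ) : ℤ) : ℝ) := by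
  have hQ := pc_rev X hsym ha hb
  -- split `pc X n n - pc X a n` by columns
  have F1 : pc X n n = pc X a n
      + ∑ i ∈ univ.filter (fun i : Fin n => ¬ i.val < a), ∑ j : Fin n, X i j := by
    simp only [pc, filter_lt_self_eq_univ]
    exact (Finset.sum_filter_add_sum_filter_not univ (fun i : Fin n => i.val < a)
      (fun i => ∑ j : Fin n, X i j)).symm
  have F2 : ∑ i ∈ univ.filter (fun i : Fin n => ¬ i.val < a), ∑ j : Fin n, X i j
      = ∑ i ∈ univ.filter (fun i : Fin n => ¬ i.val < a),
          ∑ j ∈ univ.filter (fun j : Fin n => j.val < b), X i j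
        + ∑ i ∈ univ.filter (fun i : Fin n => ¬ i.val < a),
            ∑ j ∈ univ.filter (fun j : Fin n => ¬ j.val < b), X i j := by
    rw [← Finset.sum_add_distrib]
    apply Finset.sum_congr rfl
    intro i _
    rw [Finset.sum_filter_add_sum_filter_not univ (fun j : Fin n => j.val < b)]
  have F3 : pc X n b = pc X a b
      + ∑ i ∈ univ.filter (fun i : Fin n => ¬ i.val < a),
          ∑ j ∈ univ.filter (fun j : Fin n => j.val < b), X i j := by
    simp only [pc, filter_lt_self_eq_univ]
    exact (Finset.sum_filter_add_sum_filter_not univ (fun i : Fin n => i.val < a)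
      (fun i => ∑ j ∈ univ.filter (fun j : Fin n => j.val < b), X i j)).symm
  have h1 : pc X n n = (n : ℝ) := pc_left_full X hrow n le_rfl
  have h2 : pc X a n = (a : ℝ) := pc_left_full X hrow a ha
  have h3 : pc X n b = (b : ℝ) := pc_right_full X hcol b hb
  have hcast : (((a : ℤ) + (b : ℤ) - (n : ℤ) : ℤ) : ℝ) = (a : ℝ) + (b : ℝ) - (n : ℝ) := by
    push_cast; ring
  rw [hcast, hQ]
  linarith [F1, F2, F3]




section Main

variable {n : ℕ} (X : Fin n → Fin n → ℝ)

/-- The rounded matrix at offset `θ`. -/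
noncomputable def Y (θ : ℝ) : Fin n → Fin n → ℝ := fun i j =>
  rnd θ (pc X (i.val + 1) (j.val + 1)) - rnd θ (pc X i.val (j.val + 1))
    - rnd θ (pc X (i.val + 1) j.val) + rnd θ (pc X i.val j.val)

variable
  (hrp : ∀ (i : Fin n) (b : ℕ), b ≤ n → 0 ≤ rpre X i b ∧ rpre X i b ≤ 1)
  (hcp : ∀ (j : Fin n) (a : ℕ), a ≤ n → 0 ≤ cpre X j a ∧ cpre X j a ≤ 1)
  (hrow : ∀ i, ∑ j, X i j = 1) (hcol : ∀ j, ∑ i, X i j = 1)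

/-- horizontal difference of rounded corner sums -/
noncomputable def Gr (θ : ℝ) (i : Fin n) (b : ℕ) : ℝ :=
  rnd θ (pc X (i.val + 1) b) - rnd θ (pc X i.val b)

noncomputable def Gc (θ : ℝ) (j : Fin n) (a : ℕ) : ℝ :=
  rnd θ (pc X a (j.val + 1)) - rnd θ (pc X a j.val)

lemma Y_eq_Gr (θ : ℝ) (i j : Fin n) :
    Y X θ i j = Gr X θ i (j.val + 1) - Gr X θ i j.val := by
  unfold Y Gr; ring

lemma Y_eq_Gc (θ : ℝ) (i j : Fin n) :
    Y X θ i j = Gc X θ j (i.val + 1) - Gc X θ j i.val := by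
  unfold Y Gc; ring

include hrp in
lemma Gr_mem (θ : ℝ) (i : Fin n) {b : ℕ} (hb : b ≤ n) :
    Gr X θ i b = 0 ∨ Gr X θ i b = 1 := by
  have hd : pc X (i.val + 1) b - pc X i.val b = rpre X i b := by
    rw [pc_succ_left X i.isLt b]; ring_nf
  obtain ⟨h0, h1⟩ := hrp i b hb
  exact rnd_diff_mem θ (by rw [hd]; exact h0) (by rw [hd]; exact h1)

include hcp in
lemma Gc_mem (θ : ℝ) (j : Fin n) {a : ℕ} (ha : a ≤ n) :
    Gc X θ j a = 0 ∨ Gc X θ j a = 1 := by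
  have hd : pc X a (j.val + 1) - pc X a j.val = cpre X j a := by
    rw [pc_succ_right X a j.isLt]; ring
  obtain ⟨h0, h1⟩ := hcp j a ha
  exact rnd_diff_mem θ (by rw [hd]; exact h0) (by rw [hd]; exact h1)

lemma Gr_zero (θ : ℝ) (i : Fin n) : Gr X θ i 0 = 0 := by
  unfold Gr; rw [pc_zero_right, pc_zero_right]; ring

lemma Gc_zero (θ : ℝ) (j : Fin n) : Gc X θ j 0 = 0 := by
  unfold Gc; rw [pc_zero_left, pc_zero_left]; ring

include hrp in
lemma Y_row_prefix (θ : ℝ) (i j : Fin n) :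
    (∑ j' ∈ Finset.Iic j, Y X θ i j') = 0 ∨ (∑ j' ∈ Finset.Iic j, Y X θ i j') = 1 := by
  have ht : ∑ j' ∈ Finset.Iic j, Y X θ i j'
      = Gr X θ i (j.val + 1) - Gr X θ i 0 := by
    rw [← sum_Iic_telescope (fun b => Gr X θ i b) j]
    exact Finset.sum_congr rfl fun j' _ => Y_eq_Gr X θ i j'
  rw [ht, Gr_zero, sub_zero]
  exact Gr_mem X hrp θ i j.isLt

include hcp in
lemma Y_col_prefix (θ : ℝ) (i j : Fin n) :
    (∑ i' ∈ Finset.Iic i, Y X θ i' j) = 0 ∨ (∑ i' ∈ Finset.Iic i, Y X θ i' j) = 1 := by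
  have ht : ∑ i' ∈ Finset.Iic i, Y X θ i' j
      = Gc X θ j (i.val + 1) - Gc X θ j 0 := by
    rw [← sum_Iic_telescope (fun a => Gc X θ j a) i]
    exact Finset.sum_congr rfl fun i' _ => Y_eq_Gc X θ i' j
  rw [ht, Gc_zero, sub_zero]
  exact Gc_mem X hcp θ j i.isLt

include hrp in
lemma Y_entries (θ : ℝ) (i j : Fin n) :
    Y X θ i j = -1 ∨ Y X θ i j = 0 ∨ Y X θ i j = 1 := by
  rw [Y_eq_Gr]
  rcases Gr_mem X hrp θ i (j.isLt : j.val + 1 ≤ n) with h1 | h1 <;>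
    rcases Gr_mem X hrp θ i (le_of_lt j.isLt : j.val ≤ n) with h2 | h2 <;>
      rw [h1, h2] <;> norm_num

include hrow in
lemma Y_row_sum (θ : ℝ) (i : Fin n) : ∑ j, Y X θ i j = 1 := by
  have hn : 1 ≤ n := i.pos
  set top : Fin n := ⟨n - 1, by omega⟩ with htop
  have huniv : (Finset.univ : Finset (Fin n)) = Finset.Iic top := by
    ext j; simp [Fin.le_def, htop]; omega
  have ht : ∑ j, Y X θ i j = Gr X θ i (top.val + 1) - Gr X θ i 0 := by
    rw [huniv, ← sum_Iic_telescope (fun b => Gr X θ i b) top]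
    exact Finset.sum_congr rfl fun j' _ => Y_eq_Gr X θ i j'
  rw [ht, Gr_zero, sub_zero]
  have htv : top.val + 1 = n := by simp [htop]; omega
  rw [htv]
  unfold Gr
  rw [pc_left_full X hrow _ (by omega : i.val + 1 ≤ n),
    pc_left_full X hrow _ (le_of_lt i.isLt)]
  have := rnd_add_int θ (i.val : ℝ) 1
  push_cast at this ⊢
  linarith

include hcol in
lemma Y_col_sum (θ : ℝ) (j : Fin n) : ∑ i, Y X θ i j = 1 := by
  have hn : 1 ≤ n := j.pos
  set top : Fin n := ⟨n - 1, by omega⟩ with htop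
  have huniv : (Finset.univ : Finset (Fin n)) = Finset.Iic top := by
    ext i; simp [Fin.le_def, htop]; omega
  have ht : ∑ i, Y X θ i j = Gc X θ j (top.val + 1) - Gc X θ j 0 := by
    rw [huniv, ← sum_Iic_telescope (fun a => Gc X θ j a) top]
    exact Finset.sum_congr rfl fun i' _ => Y_eq_Gc X θ i' j
  rw [ht, Gc_zero, sub_zero]
  have htv : top.val + 1 = n := by simp [htop]; omega
  rw [htv]
  unfold Gc
  rw [pc_right_full X hcol _ (by omega : j.val + 1 ≤ n),
    pc_right_full X hcol _ (le_of_lt j.isLt)]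
  have := rnd_add_int θ (j.val : ℝ) 1
  push_cast at this ⊢
  linarith

include hrow hcol in
lemma Y_symm (hsym : ∀ i j, X i j = X i.rev j.rev) (θ : ℝ) (i j : Fin n) :
    Y X θ i j = Y X θ i.rev j.rev := by
  have e : ∀ a b : ℕ, a ≤ n → b ≤ n →
      rnd θ (pc X a b) = rnd θ (pc X (n - a) (n - b)) + (((a : ℤ) + (b : ℤ) - (n : ℤ) : ℤ) : ℝ) := by
    intro a b ha hb
    rw [pc_symm X hsym hrow hcol ha hb]
    exact rnd_add_int θ _ _
  have hi1 : n - (i.val + 1) = i.rev.val := by rw [Fin.val_rev]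
  have hi2 : n - i.val = i.rev.val + 1 := by rw [Fin.val_rev]; omega
  have hj1 : n - (j.val + 1) = j.rev.val := by rw [Fin.val_rev]
  have hj2 : n - j.val = j.rev.val + 1 := by rw [Fin.val_rev]; omega
  show rnd θ (pc X (i.val + 1) (j.val + 1)) - rnd θ (pc X i.val (j.val + 1))
      - rnd θ (pc X (i.val + 1) j.val) + rnd θ (pc X i.val j.val) = _
  rw [e (i.val + 1) (j.val + 1) i.isLt j.isLt,
    e i.val (j.val + 1) (le_of_lt i.isLt) j.isLt,
    e (i.val + 1) j.val i.isLt (le_of_lt j.isLt),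
    e i.val j.val (le_of_lt i.isLt) (le_of_lt j.isLt),
    hi1, hi2, hj1, hj2]
  show _ = rnd θ (pc X (i.rev.val + 1) (j.rev.val + 1)) - rnd θ (pc X i.rev.val (j.rev.val + 1))
      - rnd θ (pc X (i.rev.val + 1) j.rev.val) + rnd θ (pc X i.rev.val j.rev.val)
  push_cast
  ring

end Main

section Glue

variable {n : ℕ}

lemma Y_component_eq (X : Fin n → Fin n → ℝ) (i j : Fin n) :
    ∫ θ in Set.Ioo (0:ℝ) 1, Y X θ i j = X i j := by
  have e1 : ∀ θ : ℝ, Y X θ i j =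
      rnd θ (pc X (i.val + 1) (j.val + 1)) - rnd θ (pc X i.val (j.val + 1))
        - rnd θ (pc X (i.val + 1) j.val) + rnd θ (pc X i.val j.val) := fun θ => rfl
  calc ∫ θ in Set.Ioo (0:ℝ) 1, Y X θ i j
      = ∫ θ in Set.Ioo (0:ℝ) 1,
          (rnd θ (pc X (i.val + 1) (j.val + 1)) - rnd θ (pc X i.val (j.val + 1))
            - rnd θ (pc X (i.val + 1) j.val) + rnd θ (pc X i.val j.val)) := by
        exact integral_congr_ae (Filter.Eventually.of_forall fun θ => e1 θ)
    _ = X i j := by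
        have I1 : IntegrableOn (fun θ : ℝ => rnd θ (pc X (i.val + 1) (j.val + 1))
            - rnd θ (pc X i.val (j.val + 1))) (Set.Ioo (0:ℝ) 1) :=
          (rnd_integrable _).sub (rnd_integrable _)
        have I2 : IntegrableOn (fun θ : ℝ => rnd θ (pc X (i.val + 1) (j.val + 1))
            - rnd θ (pc X i.val (j.val + 1)) - rnd θ (pc X (i.val + 1) j.val))
            (Set.Ioo (0:ℝ) 1) := I1.sub (rnd_integrable _)
        rw [integral_add I2 (rnd_integrable _), integral_sub I1 (rnd_integrable _),
          integral_sub (rnd_integrable _) (rnd_integrable _),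
          rnd_integral, rnd_integral, rnd_integral, rnd_integral]
        rw [pc_succ_left X i.isLt (j.val + 1), pc_succ_left X i.isLt j.val,
          rpre_succ X _ j.isLt]
        simp only [Fin.eta]
        ring

end Glue

section Final

variable {n : ℕ}

/-- The relaxed (polytope) conditions. -/
def Pset (n : ℕ) : Set (Fin n → Fin n → ℝ) :=
  {X | (∀ i j, 0 ≤ ∑ j' ∈ Finset.Iic j, X i j' ∧ ∑ j' ∈ Finset.Iic j, X i j' ≤ 1) ∧
       (∀ i j, 0 ≤ ∑ i' ∈ Finset.Iic i, X i' j ∧ ∑ i' ∈ Finset.Iic i, X i' j ≤ 1) ∧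
       (∀ i, ∑ j, X i j = 1) ∧ (∀ j, ∑ i, X i j = 1)}

lemma convex_Pset : Convex ℝ (Pset n) := by
  rintro x ⟨hx1, hx2, hx3, hx4⟩ y ⟨hy1, hy2, hy3, hy4⟩ a b ha hb hab
  have key : ∀ i j : Fin n, (a • x + b • y) i j = a * x i j + b * y i j := fun i j => rfl
  have hsumr : ∀ (i : Fin n) (s : Finset (Fin n)), ∑ j' ∈ s, (a • x + b • y) i j'
      = a * ∑ j' ∈ s, x i j' + b * ∑ j' ∈ s, y i j' := by
    intro i s
    rw [Finset.mul_sum, Finset.mul_sum, ← Finset.sum_add_distrib]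
    exact Finset.sum_congr rfl fun j' _ => rfl
  have hsumc : ∀ (j : Fin n) (s : Finset (Fin n)), ∑ i' ∈ s, (a • x + b • y) i' j
      = a * ∑ i' ∈ s, x i' j + b * ∑ i' ∈ s, y i' j := by
    intro j s
    rw [Finset.mul_sum, Finset.mul_sum, ← Finset.sum_add_distrib]
    exact Finset.sum_congr rfl fun i' _ => rfl
  refine ⟨fun i j => ?_, fun i j => ?_, fun i => ?_, fun j => ?_⟩
  · rw [hsumr i]
    obtain ⟨u1, u2⟩ := hx1 i j
    obtain ⟨v1, v2⟩ := hy1 i j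
    constructor
    · nlinarith
    · nlinarith
  · rw [hsumc j]
    obtain ⟨u1, u2⟩ := hx2 i j
    obtain ⟨v1, v2⟩ := hy2 i j
    constructor
    · nlinarith
    · nlinarith
  · rw [hsumr i, hx3 i, hy3 i]; linarith
  · rw [hsumc j, hx4 j, hy4 j]; linarith

lemma ASM_subset_Pset : {X : Fin n → Fin n → ℝ | IsASM n X} ⊆ Pset n := by
  rintro X ⟨h1, h2, h3, h4, h5⟩
  refine ⟨fun i j => ?_, fun i j => ?_, h4, h5⟩
  · rcases h2 i j with h | h <;> rw [h] <;> norm_num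
  · rcases h3 i j with h | h <;> rw [h] <;> norm_num

lemma symm_convex : Convex ℝ {Z : Fin n → Fin n → ℝ | ∀ i j, Z i j = Z i.rev j.rev} := by
  intro x hx y hy a b _ _ _
  intro i j
  show a * x i j + b * y i j = a * x i.rev j.rev + b * y i.rev j.rev
  rw [hx i j, hy i j]

lemma HTS_finite :
    {Z : Fin n → Fin n → ℝ | IsASM n Z ∧ ∀ i j, Z i j = Z i.rev j.rev}.Finite := by
  have h3fin : ({-1, 0, 1} : Set ℝ).Finite := (Set.finite_singleton 1).insert 0 |>.insert (-1)
  have hbig : (Set.pi Set.univ fun _ : Fin n =>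
      Set.pi Set.univ fun _ : Fin n => ({-1, 0, 1} : Set ℝ)).Finite :=
    Set.Finite.pi fun _ => Set.Finite.pi fun _ => h3fin
  apply hbig.subset
  rintro Z ⟨⟨h1, _⟩, _⟩ i _
  intro j _
  rcases h1 i j with h | h | h <;> simp [h]

instance : IsProbabilityMeasure (volume.restrict (Set.Ioo (0:ℝ) 1)) :=
  ⟨by rw [Measure.restrict_apply_univ]; simp [Real.volume_Ioo]⟩

end Final

end HTSAux

open HTSAux MeasureTheory in
/-- The polytope of half-turn symmetric ASMs is the intersection of the ASM
polytope with the half-turn symmetric subspace. -/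
theorem HTSASM_polytope_description (n : ℕ) (hn : 1 ≤ n) :
    convexHull ℝ {X : Fin n → Fin n → ℝ | IsASM n X ∧ ∀ i j, X i j = X i.rev j.rev}
      = convexHull ℝ {X : Fin n → Fin n → ℝ | IsASM n X}
        ∩ {X : Fin n → Fin n → ℝ | ∀ i j, X i j = X i.rev j.rev} := by
  apply Set.Subset.antisymm
  · apply convexHull_min
    · rintro X ⟨hA, hS⟩
      exact ⟨subset_convexHull ℝ _ hA, hS⟩
    · exact (convex_convexHull ℝ _).inter symm_convex
  · rintro X ⟨hX, hsym⟩
    obtain ⟨hP1, hP2, hP3, hP4⟩ : X ∈ Pset n :=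
      convexHull_min ASM_subset_Pset convex_Pset hX
    have hrp : ∀ (i : Fin n) (b : ℕ), b ≤ n → 0 ≤ rpre X i b ∧ rpre X i b ≤ 1 := by
      intro i b hb
      cases b with
      | zero => simp [rpre, filter_lt_zero]
      | succ b =>
        have hb' : b < n := by omega
        rw [show b + 1 = ((⟨b, hb'⟩ : Fin n) : ℕ) + 1 from rfl, ← sum_Iic_eq_rpre X i ⟨b, hb'⟩]
        exact hP1 i ⟨b, hb'⟩
    have hcp : ∀ (j : Fin n) (a : ℕ), a ≤ n → 0 ≤ cpre X j a ∧ cpre X j a ≤ 1 := by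
      intro j a ha
      cases a with
      | zero => simp [cpre, filter_lt_zero]
      | succ a =>
        have ha' : a < n := by omega
        rw [show a + 1 = ((⟨a, ha'⟩ : Fin n) : ℕ) + 1 from rfl, ← sum_Iic_eq_cpre X j ⟨a, ha'⟩]
        exact hP2 ⟨a, ha'⟩ j
    set S := {Z : Fin n → Fin n → ℝ | IsASM n Z ∧ ∀ i j, Z i j = Z i.rev j.rev} with hS
    have hYmem : ∀ θ : ℝ, Y X θ ∈ S := fun θ =>
      ⟨⟨Y_entries X hrp θ, Y_row_prefix X hrp θ, Y_col_prefix X hcp θ,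
        Y_row_sum X hP3 θ, Y_col_sum X hP4 θ⟩, Y_symm X hP3 hP4 hsym θ⟩
    have hclosed : IsClosed (convexHull ℝ S) := HTS_finite.isClosed_convexHull ℝ
    have hconv : Convex ℝ (convexHull ℝ S) := convex_convexHull ℝ S
    have hYmeas : Measurable (fun θ => Y X θ) := by
      apply measurable_pi_iff.mpr; intro i
      apply measurable_pi_iff.mpr; intro j
      exact (((measurable_rnd _).sub (measurable_rnd _)).sub (measurable_rnd _)).add
        (measurable_rnd _)
    have hYbdd : ∀ θ : ℝ, ‖Y X θ‖ ≤ 1 := by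
      intro θ
      rw [pi_norm_le_iff_of_nonneg zero_le_one]
      intro i
      rw [pi_norm_le_iff_of_nonneg zero_le_one]
      intro j
      rcases Y_entries X hrp θ i j with h | h | h <;> rw [Real.norm_eq_abs, h] <;> norm_num
    have hYint : Integrable (fun θ => Y X θ) (volume.restrict (Set.Ioo (0:ℝ) 1)) :=
      ⟨hYmeas.aestronglyMeasurable,
        HasFiniteIntegral.of_bounded (C := 1) (ae_of_all _ hYbdd)⟩
    have hXeq : X = ∫ θ in Set.Ioo (0:ℝ) 1, Y X θ := by
      funext i j
      have h1 : (∫ θ in Set.Ioo (0:ℝ) 1, Y X θ) i = ∫ θ in Set.Ioo (0:ℝ) 1, Y X θ i :=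
        ((ContinuousLinearMap.proj (R := ℝ) (φ := fun _ : Fin n => Fin n → ℝ) i
          ).integral_comp_comm hYint).symm
      have hYiint : Integrable (fun θ => Y X θ i) (volume.restrict (Set.Ioo (0:ℝ) 1)) :=
        (ContinuousLinearMap.proj (R := ℝ) (φ := fun _ : Fin n => Fin n → ℝ) i
          ).integrable_comp hYint
      have h2 : (∫ θ in Set.Ioo (0:ℝ) 1, Y X θ i) j = ∫ θ in Set.Ioo (0:ℝ) 1, Y X θ i j :=
        ((ContinuousLinearMap.proj (R := ℝ) (φ := fun _ : Fin n => ℝ) j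
          ).integral_comp_comm hYiint).symm
      rw [h1, h2, Y_component_eq X i j]
    rw [hXeq]
    exact hconv.integral_mem hclosed
      (ae_of_all _ fun θ => subset_convexHull ℝ S (hYmem θ)) hYint
end

section
/- If n ≡ 2 (mod 4), then there exists no n×n quarter-turn symmetric alternating sign matrix, i.e., no n×n ASM X satisfying x_{i,j} = x_{j,n+1−i} for all i,j ∈ {1,…,n}. -/
/-- There is no quarter-turn symmetric alternating sign matrix of order
`n ≡ 2 (mod 4)`. -/
theorem no_QTSASM_two_mod_four (n : ℕ) (hn : n % 4 = 2) :
    ¬ ∃ X : Fin n → Fin n → ℝ, IsASM n X ∧ ∀ i j, X i j = X j i.rev := by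
  rintro ⟨X, ⟨hval, -, -, hrow, -⟩, hsym⟩
  set m := n / 2 with hm
  have hnm : n = 2 * m := by omega
  have hrev : ∀ i : Fin n, (Fin.rev i).val = n - 1 - i.val := fun i => by rw [Fin.val_rev]; omega
  have hsym2 : ∀ i j : Fin n, X i j = X i.rev j.rev := by
    intro i j; rw [hsym i j, hsym j i.rev]
  have hsym3 : ∀ i j : Fin n, X i j = X j.rev i := by
    intro i j; rw [hsym2 i j, hsym i.rev j.rev, Fin.rev_rev]
  have htot : ∑ p : Fin n × Fin n, X p.1 p.2 = (n : ℝ) := by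
    rw [Fintype.sum_prod_type]
    simp [hrow]
  classical
  set SA : ℝ := ∑ p ∈ Finset.univ.filter
      (fun p : Fin n × Fin n => p.1.val < m ∧ p.2.val < m), X p.1 p.2 with hSA
  -- B → A via (a,b) ↦ (b.rev, a)
  have hBA : (∑ p ∈ Finset.univ.filter
      (fun p : Fin n × Fin n => p.1.val < m ∧ ¬ p.2.val < m), X p.1 p.2) = SA := by
    rw [hSA]
    apply Finset.sum_nbij' (i := fun p : Fin n × Fin n => (p.2.rev, p.1))
      (j := fun p : Fin n × Fin n => (p.2, p.1.rev))
    · intro p hp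
      simp only [Finset.mem_filter, Finset.mem_univ, true_and] at hp ⊢
      have h1 := p.1.isLt; have h2 := p.2.isLt
      simp only [hrev]; omega
    · intro p hp
      simp only [Finset.mem_filter, Finset.mem_univ, true_and] at hp ⊢
      have h1 := p.1.isLt; have h2 := p.2.isLt
      simp only [hrev]; omega
    · intro p hp; simp [Fin.rev_rev]
    · intro p hp; simp [Fin.rev_rev]
    · intro p hp; exact hsym3 p.1 p.2
  -- C → A via (a,b) ↦ (b, a.rev)
  have hCA : (∑ p ∈ Finset.univ.filter
      (fun p : Fin n × Fin n => ¬ p.1.val < m ∧ p.2.val < m), X p.1 p.2) = SA := by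
    rw [hSA]
    apply Finset.sum_nbij' (i := fun p : Fin n × Fin n => (p.2, p.1.rev))
      (j := fun p : Fin n × Fin n => (p.2.rev, p.1))
    · intro p hp
      simp only [Finset.mem_filter, Finset.mem_univ, true_and] at hp ⊢
      have h1 := p.1.isLt; have h2 := p.2.isLt
      simp only [hrev]; omega
    · intro p hp
      simp only [Finset.mem_filter, Finset.mem_univ, true_and] at hp ⊢
      have h1 := p.1.isLt; have h2 := p.2.isLt
      simp only [hrev]; omega
    · intro p hp; simp [Fin.rev_rev]
    · intro p hp; simp [Fin.rev_rev]
    · intro p hp; exact hsym p.1 p.2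
  -- D → A via (a,b) ↦ (a.rev, b.rev)
  have hDA : (∑ p ∈ Finset.univ.filter
      (fun p : Fin n × Fin n => ¬ p.1.val < m ∧ ¬ p.2.val < m), X p.1 p.2) = SA := by
    rw [hSA]
    apply Finset.sum_nbij' (i := fun p : Fin n × Fin n => (p.1.rev, p.2.rev))
      (j := fun p : Fin n × Fin n => (p.1.rev, p.2.rev))
    · intro p hp
      simp only [Finset.mem_filter, Finset.mem_univ, true_and] at hp ⊢
      have h1 := p.1.isLt; have h2 := p.2.isLt
      simp only [hrev]; omega
    · intro p hp
      simp only [Finset.mem_filter, Finset.mem_univ, true_and] at hp ⊢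
      have h1 := p.1.isLt; have h2 := p.2.isLt
      simp only [hrev]; omega
    · intro p hp; simp [Fin.rev_rev]
    · intro p hp; simp [Fin.rev_rev]
    · intro p hp; exact hsym2 p.1 p.2
  -- split the total sum into the four quadrants
  have hsplit : (n : ℝ) = 4 * SA := by
    have h1 := Finset.sum_filter_add_sum_filter_not Finset.univ
      (fun p : Fin n × Fin n => p.1.val < m) (fun p => X p.1 p.2)
    have h2 := Finset.sum_filter_add_sum_filter_not
      (Finset.univ.filter (fun p : Fin n × Fin n => p.1.val < m))
      (fun p : Fin n × Fin n => p.2.val < m) (fun p => X p.1 p.2)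
    have h3 := Finset.sum_filter_add_sum_filter_not
      (Finset.univ.filter (fun p : Fin n × Fin n => ¬ p.1.val < m))
      (fun p : Fin n × Fin n => p.2.val < m) (fun p => X p.1 p.2)
    rw [Finset.filter_filter, Finset.filter_filter] at h2 h3
    rw [← htot, ← h1, ← h2, ← h3]
    have hcA : (Finset.univ.filter (fun p : Fin n × Fin n => p.1.val < m ∧ p.2.val < m))
        = Finset.univ.filter (fun p : Fin n × Fin n => p.1.val < m ∧ p.2.val < m) := rfl
    rw [hSA] at hBA hCA hDA ⊢
    rw [hBA, hCA, hDA]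
    ring
  -- the quadrant sum is an integer
  obtain ⟨k, hk⟩ : ∃ k : ℤ, SA = (k : ℝ) := by
    rw [hSA]
    refine Finset.sum_induction _ (fun r => ∃ k : ℤ, r = (k : ℝ)) ?_ ⟨0, by simp⟩ ?_
    · rintro a b ⟨ka, hka⟩ ⟨kb, hkb⟩
      exact ⟨ka + kb, by push_cast [hka, hkb]; ring⟩
    · intro p _
      rcases hval p.1 p.2 with h | h | h
      · exact ⟨-1, by rw [h]; norm_num⟩
      · exact ⟨0, by rw [h]; norm_num⟩
      · exact ⟨1, by rw [h]; norm_num⟩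
  rw [hk] at hsplit
  have : (n : ℤ) = 4 * k := by exact_mod_cast hsplit
  omega
end

section
/- Let n ≥ 1 be odd and set k = ⌊n/2⌋. For every n×n quarter-turn symmetric alternating sign matrix X (an ASM with x_{i,j} = x_{j,n+1−i} for all i,j), the central entry satisfies x_{k+1,k+1} = (−1)^k. -/
lemma split_sum {n k : ℕ} (hn : n = 2*k+1) (f : Fin n → ℝ) :
    ∑ i, f i = (∑ i ∈ Finset.univ.filter (fun i : Fin n => i.val < k), f i)
      + f ⟨k, by omega⟩
      + ∑ i ∈ Finset.univ.filter (fun i : Fin n => k < i.val), f i := by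
  have h1 := Finset.sum_filter_add_sum_filter_not Finset.univ
    (fun i : Fin n => i.val < k) f
  have h2 := Finset.sum_filter_add_sum_filter_not
    (Finset.univ.filter (fun i : Fin n => ¬ i.val < k)) (fun i : Fin n => i.val = k) f
  have h3 : (Finset.univ.filter (fun i : Fin n => ¬ i.val < k)).filter
      (fun i : Fin n => i.val = k) = {(⟨k, by omega⟩ : Fin n)} := by
    ext i
    simp [Finset.mem_filter, Fin.ext_iff]
    omega
  have h4 : (Finset.univ.filter (fun i : Fin n => ¬ i.val < k)).filter
      (fun i : Fin n => ¬ i.val = k) = Finset.univ.filter (fun i : Fin n => k < i.val) := by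
    ext i
    simp [Finset.mem_filter]
    omega
  rw [h3, h4, Finset.sum_singleton] at h2
  linarith

lemma rev_sum {n k : ℕ} (hn : n = 2*k+1) (f : Fin n → ℝ) :
    ∑ i ∈ Finset.univ.filter (fun i : Fin n => i.val < k), f i.rev
      = ∑ i ∈ Finset.univ.filter (fun i : Fin n => k < i.val), f i := by
  apply Finset.sum_nbij' (fun i => i.rev) (fun i => i.rev)
  · intro a ha
    simp only [Finset.mem_filter, Finset.mem_univ, true_and] at ha ⊢
    simp [Fin.val_rev]
    omega
  · intro a ha
    simp only [Finset.mem_filter, Finset.mem_univ, true_and] at ha ⊢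
    simp [Fin.val_rev]
    omega
  · intro a _; exact Fin.rev_rev a
  · intro a _; exact Fin.rev_rev a
  · intro a _; rfl

lemma rev_sum' {n k : ℕ} (hn : n = 2*k+1) (f : Fin n → ℝ) :
    ∑ i ∈ Finset.univ.filter (fun i : Fin n => k < i.val), f i.rev
      = ∑ i ∈ Finset.univ.filter (fun i : Fin n => i.val < k), f i := by
  have := rev_sum hn (fun i => f i.rev)
  simpa [Fin.rev_rev] using this.symm

lemma sum_int {α : Type*} {s : Finset α} {f : α → ℝ} (h : ∀ a ∈ s, ∃ m : ℤ, f a = m) :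
    ∃ m : ℤ, ∑ a ∈ s, f a = m := by
  classical
  induction s using Finset.induction with
  | empty => exact ⟨0, by simp⟩
  | @insert a s hx ih =>
    obtain ⟨m, hm⟩ := h a (Finset.mem_insert_self a s)
    obtain ⟨M, hM⟩ := ih (fun b hb => h b (Finset.mem_insert_of_mem hb))
    exact ⟨m + M, by rw [Finset.sum_insert hx, hm, hM]; push_cast; ring⟩

/-- The central entry of a quarter-turn symmetric ASM of odd order `n` is
`(-1)^⌊n/2⌋`. -/
theorem QTSASM_center (n : ℕ) (hn : 1 ≤ n) (hodd : Odd n)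
    (X : Fin n → Fin n → ℝ) (hX : IsASM n X)
    (hsym : ∀ i j, X i j = X j i.rev) :
    X ⟨n / 2, Nat.div_lt_self (by omega) (by omega)⟩
        ⟨n / 2, Nat.div_lt_self (by omega) (by omega)⟩ = (-1) ^ (n / 2) := by
  obtain ⟨hent, -, -, hrowsum, hcolsum⟩ := hX
  have hk : n = 2 * (n / 2) + 1 := by
    rcases hodd with ⟨m, hm⟩; omega
  set k := n / 2 with hkdef
  have hklt : k < n := by omega
  set c : Fin n := ⟨k, hklt⟩ with hc
  set Alow := Finset.univ.filter (fun i : Fin n => i.val < k) with hAlow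
  set Ahigh := Finset.univ.filter (fun i : Fin n => k < i.val) with hAhigh
  -- the middle row equals the middle column entrywise
  have hcrev : c.rev = c := by
    apply Fin.ext
    simp [Fin.val_rev, hc]
    omega
  -- row k sum
  have hrowk : (∑ j ∈ Alow, X c j) + X c c + ∑ j ∈ Ahigh, X c j = 1 := by
    have := hrowsum c
    rwa [split_sum hk (fun j => X c j)] at this
  -- column k sum
  have hcolk : (∑ i ∈ Alow, X i c) + X c c + ∑ i ∈ Ahigh, X i c = 1 := by
    have := hcolsum c
    rwa [split_sum hk (fun i => X i c)] at this
  -- total sum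
  have htot : ∑ i, ∑ j, X i j = (n : ℝ) := by
    rw [Finset.sum_congr rfl (fun i _ => hrowsum i)]
    simp
  -- quadrant equalities
  have hsym2 : ∀ (s t : Finset (Fin n)),
      ∑ i ∈ s, ∑ j ∈ t, X i j = ∑ j ∈ t, ∑ i ∈ s, X j i.rev := by
    intro s t
    calc ∑ i ∈ s, ∑ j ∈ t, X i j
        = ∑ i ∈ s, ∑ j ∈ t, X j i.rev :=
          Finset.sum_congr rfl (fun i _ => Finset.sum_congr rfl (fun j _ => hsym i j))
      _ = ∑ j ∈ t, ∑ i ∈ s, X j i.rev := Finset.sum_comm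
  have hTLTR : ∑ i ∈ Alow, ∑ j ∈ Alow, X i j = ∑ i ∈ Alow, ∑ j ∈ Ahigh, X i j := by
    rw [hsym2]
    exact Finset.sum_congr rfl (fun j _ => rev_sum hk _)
  have hTRBR : ∑ i ∈ Alow, ∑ j ∈ Ahigh, X i j = ∑ i ∈ Ahigh, ∑ j ∈ Ahigh, X i j := by
    rw [hsym2]
    exact Finset.sum_congr rfl (fun j _ => rev_sum hk _)
  have hBRBL : ∑ i ∈ Ahigh, ∑ j ∈ Ahigh, X i j = ∑ i ∈ Ahigh, ∑ j ∈ Alow, X i j := by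
    rw [hsym2]
    exact Finset.sum_congr rfl (fun j _ => rev_sum' hk _)
  -- decompose the total sum
  have hdecomp : (n : ℝ) =
      (∑ i ∈ Alow, ∑ j ∈ Alow, X i j) + (∑ i ∈ Alow, X i c) + (∑ i ∈ Alow, ∑ j ∈ Ahigh, X i j)
      + ((∑ j ∈ Alow, X c j) + X c c + ∑ j ∈ Ahigh, X c j)
      + ((∑ i ∈ Ahigh, ∑ j ∈ Alow, X i j) + (∑ i ∈ Ahigh, X i c)
          + ∑ i ∈ Ahigh, ∑ j ∈ Ahigh, X i j) := by
    rw [← htot, split_sum hk (fun i => ∑ j, X i j)]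
    rw [Finset.sum_congr rfl (fun i (_ : i ∈ Alow) => split_sum hk (fun j => X i j)),
        Finset.sum_congr rfl (fun i (_ : i ∈ Ahigh) => split_sum hk (fun j => X i j)),
        split_sum hk (fun j => X c j)]
    simp only [Finset.sum_add_distrib]
    rfl
  -- integrality of the quadrant sum
  obtain ⟨m, hm⟩ : ∃ m : ℤ, ∑ i ∈ Alow, ∑ j ∈ Alow, X i j = m := by
    apply sum_int
    intro i _
    apply sum_int
    intro j _
    rcases hent i j with h | h | h
    · exact ⟨-1, by rw [h]; push_cast; ring⟩
    · exact ⟨0, by rw [h]; simp⟩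
    · exact ⟨1, by rw [h]; simp⟩
  -- derive 4 * m = n - 2 + X c c
  have hkey : (4 : ℝ) * m = (n : ℝ) - 2 + X c c := by
    linarith [hdecomp, hrowk, hcolk, hTLTR, hTRBR, hBRBL, hm]
  show X c c = _
  rcases hent c c with h | h | h
  · rw [h] at hkey
    have hz : (4 : ℤ) * m = (n : ℤ) - 3 := by
      have h4 : (4 : ℝ) * m = (n : ℝ) - 3 := by linarith
      exact_mod_cast h4
    have hkodd : Odd k := by
      rw [Nat.odd_iff]; omega
    rw [h, Odd.neg_one_pow hkodd]
  · rw [h] at hkey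
    have hz : (4 : ℤ) * m = (n : ℤ) - 2 := by
      have h4 : (4 : ℝ) * m = (n : ℝ) - 2 := by linarith
      exact_mod_cast h4
    omega
  · rw [h] at hkey
    have hz : (4 : ℤ) * m = (n : ℤ) - 1 := by
      have h4 : (4 : ℝ) * m = (n : ℝ) - 1 := by linarith
      exact_mod_cast h4
    have hkeven : Even k := by
      rw [Nat.even_iff]; omega
    rw [h, Even.neg_one_pow hkeven]
end

section
/- For every n ≥ 1, the convex hull of the n×n diagonally symmetric ASMs in ℝ^{n×n} equals P_ASM ∩ P_DS, i.e., conv(DSASM(n)) = conv(ASM(n)) ∩ {X ∈ ℝ^{n×n} : x_{i,j} = x_{j,i} for all i,j}. -/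
open Finset
namespace DSASMaux
variable {n : ℕ}

noncomputable def rpre (X : Fin n → Fin n → ℝ) (i : Fin n) (b : ℕ) : ℝ :=
  ∑ j, if j.val < b then X i j else 0
noncomputable def corner (X : Fin n → Fin n → ℝ) (a b : ℕ) : ℝ :=
  ∑ i, if i.val < a then rpre X i b else 0

lemma sum_if_succ (f : Fin n → ℝ) (a : ℕ) (ha : a < n) :
    (∑ i, if i.val < a + 1 then f i else 0)
      = (∑ i, if i.val < a then f i else 0) + f ⟨a, ha⟩ := by
  have h : ∀ i : Fin n, (if i.val < a + 1 then f i else 0)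
      = (if i.val < a then f i else 0) + (if i = ⟨a, ha⟩ then f i else 0) := by
    intro i
    rcases lt_trichotomy i.val a with h1 | h1 | h1
    · rw [if_pos (Nat.lt_succ_of_lt h1), if_pos h1, if_neg, add_zero]
      intro hc; rw [hc] at h1; simp at h1
    · rw [if_pos (by omega), if_neg (by omega), if_pos (by apply Fin.ext; exact h1), zero_add]
    · rw [if_neg (by omega), if_neg (by omega), if_neg, add_zero]
      intro hc; rw [hc] at h1; simp at h1
  rw [Finset.sum_congr rfl (fun i _ => h i), Finset.sum_add_distrib]
  congr 1
  rw [Finset.sum_ite_eq' Finset.univ (⟨a, ha⟩ : Fin n) f]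
  simp

lemma sum_if_of_le (f : Fin n → ℝ) (a : ℕ) (ha : n ≤ a) :
    (∑ i, if i.val < a then f i else 0) = ∑ i, f i := by
  apply Finset.sum_congr rfl
  intro i _
  rw [if_pos (lt_of_lt_of_le i.isLt ha)]

lemma sum_if_range (h : ℕ → ℝ) (b : ℕ) (hb : b ≤ n) :
    (∑ j : Fin n, if j.val < b then h j.val else 0) = ∑ m ∈ Finset.range b, h m := by
  induction b with
  | zero => simp
  | succ b ih =>
      rw [sum_if_succ (fun j : Fin n => h j.val) b (by omega), ih (by omega),
        Finset.sum_range_succ]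


lemma rpre_zero (X : Fin n → Fin n → ℝ) (i : Fin n) : rpre X i 0 = 0 := by simp [rpre]

lemma rpre_succ (X : Fin n → Fin n → ℝ) (i : Fin n) (b : ℕ) (hb : b < n) :
    rpre X i (b + 1) = rpre X i b + X i ⟨b, hb⟩ :=
  sum_if_succ (fun j => X i j) b hb

lemma rpre_Iic (X : Fin n → Fin n → ℝ) (i j : Fin n) :
    rpre X i (j.val + 1) = ∑ j' ∈ Finset.Iic j, X i j' := by
  rw [rpre, ← Finset.sum_filter]
  congr 1
  ext j'
  simp only [Finset.mem_filter, Finset.mem_univ, true_and, Finset.mem_Iic,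
    Nat.lt_succ_iff, Fin.le_def]

lemma rpre_full (X : Fin n → Fin n → ℝ) (i : Fin n) (b : ℕ) (hb : n ≤ b) :
    rpre X i b = ∑ j, X i j :=
  sum_if_of_le (fun j => X i j) b hb

lemma corner_zero_left (X : Fin n → Fin n → ℝ) (b : ℕ) : corner X 0 b = 0 := by
  simp [corner]

lemma corner_zero_right (X : Fin n → Fin n → ℝ) (a : ℕ) : corner X a 0 = 0 := by
  simp [corner, rpre_zero]

lemma corner_succ (X : Fin n → Fin n → ℝ) (a b : ℕ) (ha : a < n) :
    corner X (a + 1) b = corner X a b + rpre X ⟨a, ha⟩ b :=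
  sum_if_succ (fun i => rpre X i b) a ha

lemma corner_eq_double (X : Fin n → Fin n → ℝ) (a b : ℕ) :
    corner X a b = ∑ i, ∑ j, if i.val < a ∧ j.val < b then X i j else 0 := by
  rw [corner]
  apply Finset.sum_congr rfl
  intro i _
  by_cases h : i.val < a
  · rw [if_pos h, rpre]
    apply Finset.sum_congr rfl
    intro j _
    by_cases h2 : j.val < b <;> simp [h, h2]
  · rw [if_neg h]
    symm
    apply Finset.sum_eq_zero
    intro j _
    simp [h]

lemma corner_symm (X : Fin n → Fin n → ℝ) (hsym : ∀ i j, X i j = X j i) (a b : ℕ) :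
    corner X a b = corner X b a := by
  rw [corner_eq_double, corner_eq_double, Finset.sum_comm]
  apply Finset.sum_congr rfl; intro j _
  apply Finset.sum_congr rfl; intro i _
  by_cases h1 : i.val < a <;> by_cases h2 : j.val < b <;>
    simp [h1, h2, and_comm, hsym i j]


/-- the relaxation polytope: prefix sums in `[0,1]`, full sums `1`. -/
def Pset (n : ℕ) : Set (Fin n → Fin n → ℝ) :=
  {X | (∀ i j, 0 ≤ (∑ j' ∈ Finset.Iic j, X i j') ∧ (∑ j' ∈ Finset.Iic j, X i j') ≤ 1) ∧
       (∀ i j, 0 ≤ (∑ i' ∈ Finset.Iic i, X i' j) ∧ (∑ i' ∈ Finset.Iic i, X i' j) ≤ 1) ∧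
       (∀ i, (∑ j, X i j) = 1) ∧ (∀ j, (∑ i, X i j) = 1)}

lemma rpre_mem (X : Fin n → Fin n → ℝ) (hX : X ∈ Pset n) (i : Fin n) (b : ℕ) :
    0 ≤ rpre X i b ∧ rpre X i b ≤ 1 := by
  rcases b with _ | b
  · rw [rpre_zero]; norm_num
  · by_cases hb : b < n
    · have := rpre_Iic X i ⟨b, hb⟩
      simp only at this
      rw [this]
      exact hX.1 i ⟨b, hb⟩
    · rw [rpre_full X i (b+1) (by omega), hX.2.2.1 i]
      norm_num

lemma corner_diff (X : Fin n → Fin n → ℝ) (hX : X ∈ Pset n) (a b : ℕ) (ha : a < n) :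
    0 ≤ corner X (a+1) b - corner X a b ∧ corner X (a+1) b - corner X a b ≤ 1 := by
  rw [corner_succ X a b ha]
  have := rpre_mem X hX ⟨a, ha⟩ b
  constructor <;> linarith [this.1, this.2]

lemma corner_full (X : Fin n → Fin n → ℝ) (hX : X ∈ Pset n) (a : ℕ) (ha : a ≤ n) :
    corner X a n = a := by
  induction a with
  | zero => simp [corner_zero_left]
  | succ a ih =>
      rw [corner_succ X a n (by omega), ih (by omega),
        rpre_full X _ n le_rfl, hX.2.2.1]
      push_cast; ring

lemma corner_mixed (X : Fin n → Fin n → ℝ) (i j : Fin n) :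
    X i j = corner X (i.val+1) (j.val+1) - corner X i.val (j.val+1)
      - corner X (i.val+1) j.val + corner X i.val j.val := by
  rw [corner_succ X i.val (j.val+1) i.isLt, corner_succ X i.val j.val i.isLt,
    rpre_succ X _ j.val j.isLt]
  simp
  ring_nf


lemma ceil_diff_01 {a b : ℝ} (h0 : 0 ≤ a - b) (h1 : a - b ≤ 1) :
    (⌈a⌉ : ℤ) - ⌈b⌉ = 0 ∨ (⌈a⌉ : ℤ) - ⌈b⌉ = 1 := by
  have hle : ⌈b⌉ ≤ ⌈a⌉ := Int.ceil_le_ceil (by linarith)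
  have hle2 : ⌈a⌉ ≤ ⌈b⌉ + 1 := by
    rw [show (⌈b⌉ + 1 : ℤ) = ⌈b + 1⌉ by rw [Int.ceil_add_one]]
    exact Int.ceil_le_ceil (by linarith)
  omega

lemma ceil_int_sub (m : ℤ) {s : ℝ} (h0 : 0 ≤ s) (h1 : s < 1) :
    ⌈(m : ℝ) - s⌉ = m := by
  rw [Int.ceil_eq_iff]
  constructor
  · push_cast; linarith
  · push_cast; linarith

/-- The key inequality for the rounding decomposition. -/
lemma key {θ a b : ℝ} (hθ0 : 0 < θ) (hθ1 : θ < 1)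
    (ha : (⌈a⌉ : ℝ) - a = 0 ∨ (⌈a⌉ : ℝ) - a ≤ 1 - θ)
    (hb : (⌈b⌉ : ℝ) - b = 0 ∨ (⌈b⌉ : ℝ) - b ≤ 1 - θ)
    (h0 : 0 ≤ a - b) (h1 : a - b ≤ 1) :
    0 ≤ (a - b) - θ * ((⌈a⌉ : ℝ) - ⌈b⌉) ∧
      (a - b) - θ * ((⌈a⌉ : ℝ) - ⌈b⌉) ≤ 1 - θ := by
  have hua : 0 ≤ (⌈a⌉ : ℝ) - a := by linarith [Int.le_ceil a]
  have hub : 0 ≤ (⌈b⌉ : ℝ) - b := by linarith [Int.le_ceil b]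
  have hua1 : (⌈a⌉ : ℝ) - a < 1 := by linarith [Int.ceil_lt_add_one a]
  have hub1 : (⌈b⌉ : ℝ) - b < 1 := by linarith [Int.ceil_lt_add_one b]
  rcases ceil_diff_01 h0 h1 with hk | hk
  · -- ⌈a⌉ = ⌈b⌉, so a - b = v - u where u,v are co-fracs
    have hk' : ((⌈a⌉ : ℝ) - ⌈b⌉) = 0 := by exact_mod_cast hk
    have hab : a - b = ((⌈b⌉ : ℝ) - b) - ((⌈a⌉ : ℝ) - a) := by linarith
    rcases eq_or_lt_of_le h0 with hd | hd
    · constructor <;> nlinarith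
    · have hvne : (⌈b⌉ : ℝ) - b ≠ 0 := by intro h; rw [h] at hab; linarith
      have hv : (⌈b⌉ : ℝ) - b ≤ 1 - θ := hb.resolve_left hvne
      constructor <;> nlinarith
  · have hk' : ((⌈a⌉ : ℝ) - ⌈b⌉) = 1 := by exact_mod_cast hk
    have hab : a - b = 1 + ((⌈b⌉ : ℝ) - b) - ((⌈a⌉ : ℝ) - a) := by linarith
    have hd : θ ≤ a - b := by
      rcases ha with h | h
      · linarith
      · linarith
    constructor <;> nlinarith


noncomputable def cc (X : Fin n → Fin n → ℝ) (a b : ℕ) : ℝ := (⌈corner X a b⌉ : ℝ)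

noncomputable def Ymat (X : Fin n → Fin n → ℝ) : Fin n → Fin n → ℝ :=
  fun i j => cc X (i.val+1) (j.val+1) - cc X i.val (j.val+1)
    - cc X (i.val+1) j.val + cc X i.val j.val

lemma cc_zero_left (X : Fin n → Fin n → ℝ) (b : ℕ) : cc X 0 b = 0 := by
  simp [cc, corner_zero_left]

lemma cc_zero_right (X : Fin n → Fin n → ℝ) (a : ℕ) : cc X a 0 = 0 := by
  simp [cc, corner_zero_right]

lemma Y_rpre (X : Fin n → Fin n → ℝ) (i : Fin n) (b : ℕ) (hb : b ≤ n) :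
    rpre (Ymat X) i b = cc X (i.val+1) b - cc X i.val b := by
  have h : rpre (Ymat X) i b
      = ∑ m ∈ Finset.range b,
          ((fun m => cc X (i.val+1) m - cc X i.val m) (m+1)
            - (fun m => cc X (i.val+1) m - cc X i.val m) m) := by
    rw [rpre, ← sum_if_range (fun m => ((fun m => cc X (i.val+1) m - cc X i.val m) (m+1)
            - (fun m => cc X (i.val+1) m - cc X i.val m) m)) b hb]
    apply Finset.sum_congr rfl
    intro j _
    by_cases hj : j.val < b
    · rw [if_pos hj, if_pos hj]; simp only [Ymat]; ring
    · rw [if_neg hj, if_neg hj]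
  rw [h]
  have tele := Finset.sum_range_sub (fun m => cc X (i.val+1) m - cc X i.val m) b
  simp only [cc_zero_right, sub_zero] at tele
  exact tele

lemma corner_Y (X : Fin n → Fin n → ℝ) (a b : ℕ) (ha : a ≤ n) (hb : b ≤ n) :
    corner (Ymat X) a b = cc X a b := by
  have h : corner (Ymat X) a b
      = ∑ m ∈ Finset.range a, ((fun m => cc X m b) (m+1) - (fun m => cc X m b) m) := by
    rw [corner, ← sum_if_range (fun m => ((fun m => cc X m b) (m+1) - (fun m => cc X m b) m)) a ha]
    apply Finset.sum_congr rfl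
    intro i _
    by_cases hi : i.val < a
    · rw [if_pos hi, if_pos hi, Y_rpre X i b hb]
    · rw [if_neg hi, if_neg hi]
  rw [h]
  have tele := Finset.sum_range_sub (fun m => cc X m b) a
  simp only [cc_zero_left, sub_zero] at tele
  exact tele

lemma Y_symm (X : Fin n → Fin n → ℝ) (hsym : ∀ i j, X i j = X j i) (i j : Fin n) :
    Ymat X i j = Ymat X j i := by
  simp only [Ymat, cc, corner_symm X hsym]
  ring

lemma Y_rpre_01 (X : Fin n → Fin n → ℝ) (hX : X ∈ Pset n) (i : Fin n) (b : ℕ) (hb : b ≤ n) :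
    rpre (Ymat X) i b = 0 ∨ rpre (Ymat X) i b = 1 := by
  rw [Y_rpre X i b hb]
  rcases ceil_diff_01 (corner_diff X hX i.val b i.isLt).1 (corner_diff X hX i.val b i.isLt).2
    with h | h
  · left; simp only [cc]
    have h' : ⌈corner X (i.val+1) b⌉ = ⌈corner X i.val b⌉ := by omega
    rw [h']; ring
  · right; simp only [cc]
    have h' : ⌈corner X (i.val+1) b⌉ = ⌈corner X i.val b⌉ + 1 := by omega
    rw [h']; push_cast; ring

lemma Y_isASM (X : Fin n → Fin n → ℝ) (hX : X ∈ Pset n) (hsym : ∀ i j, X i j = X j i) :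
    IsASM n (Ymat X) := by
  have hrow : ∀ i : Fin n, ∀ b : ℕ, b ≤ n →
      rpre (Ymat X) i b = 0 ∨ rpre (Ymat X) i b = 1 := fun i b hb => Y_rpre_01 X hX i b hb
  refine ⟨?_, ?_, ?_, ?_, ?_⟩
  · intro i j
    have h1 := Y_rpre_01 X hX i (j.val+1) j.isLt
    have h2 := Y_rpre_01 X hX i j.val (le_of_lt j.isLt)
    have hstep : Ymat X i j = rpre (Ymat X) i (j.val+1) - rpre (Ymat X) i j.val := by
      rw [Y_rpre X i (j.val+1) j.isLt, Y_rpre X i j.val (le_of_lt j.isLt)]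
      simp only [Ymat]; ring
    rcases h1 with h1 | h1 <;> rcases h2 with h2 | h2 <;>
      rw [hstep, h1, h2] <;> norm_num
  · intro i j
    rw [← rpre_Iic]
    exact Y_rpre_01 X hX i (j.val+1) j.isLt
  · intro i j
    have heq : (∑ i' ∈ Finset.Iic i, Ymat X i' j) = ∑ i' ∈ Finset.Iic i, Ymat X j i' := by
      exact Finset.sum_congr rfl fun i' _ => Y_symm X hsym i' j
    rw [heq, ← rpre_Iic]
    exact Y_rpre_01 X hX j (i.val+1) i.isLt
  · intro i
    rw [← rpre_full (Ymat X) i n le_rfl, Y_rpre X i n le_rfl]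
    simp only [cc, corner_full X hX (i.val+1) i.isLt,
      corner_full X hX i.val (le_of_lt i.isLt)]
    rw [show ((i.val+1 : ℕ):ℝ) = (((i.val+1 : ℕ) : ℤ) : ℝ) by push_cast; ring,
      show ((i.val : ℕ):ℝ) = (((i.val : ℕ) : ℤ) : ℝ) by push_cast; ring,
      Int.ceil_intCast, Int.ceil_intCast]
    push_cast
    ring
  · intro j
    have heq : (∑ i, Ymat X i j) = ∑ i, Ymat X j i :=
      Finset.sum_congr rfl fun i _ => Y_symm X hsym i j
    rw [heq, ← rpre_full (Ymat X) j n le_rfl, Y_rpre X j n le_rfl]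
    simp only [cc, corner_full X hX (j.val+1) j.isLt,
      corner_full X hX j.val (le_of_lt j.isLt)]
    rw [show ((j.val+1 : ℕ):ℝ) = (((j.val+1 : ℕ) : ℤ) : ℝ) by push_cast; ring,
      show ((j.val : ℕ):ℝ) = (((j.val : ℕ) : ℤ) : ℝ) by push_cast; ring,
      Int.ceil_intCast, Int.ceil_intCast]
    push_cast
    ring


/-- co-fractional part of the corner sum. -/
noncomputable def ufun (X : Fin n → Fin n → ℝ) (a b : ℕ) : ℝ :=
  (⌈corner X a b⌉ : ℝ) - corner X a b

/-- set of nonzero co-fractional parts of corner sums. -/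
noncomputable def fr (X : Fin n → Fin n → ℝ) : Finset ℝ :=
  ((Finset.univ : Finset (Fin n × Fin n)).image
    (fun p => ufun X (p.1.val + 1) (p.2.val + 1))).erase 0

lemma ufun_nonneg (X : Fin n → Fin n → ℝ) (a b : ℕ) : 0 ≤ ufun X a b := by
  simp only [ufun]; linarith [Int.le_ceil (corner X a b)]

lemma ufun_lt_one (X : Fin n → Fin n → ℝ) (a b : ℕ) : ufun X a b < 1 := by
  simp only [ufun]; linarith [Int.ceil_lt_add_one (corner X a b)]

lemma ufun_cases (X : Fin n → Fin n → ℝ) (a b : ℕ) (ha : a ≤ n) (hb : b ≤ n) :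
    ufun X a b = 0 ∨ ufun X a b ∈ fr X := by
  rcases Nat.eq_zero_or_pos a with h | h
  · left; subst h; simp [ufun, corner_zero_left]
  rcases Nat.eq_zero_or_pos b with h' | h'
  · left; subst h'; simp [ufun, corner_zero_right]
  obtain ⟨a', rfl⟩ : ∃ a', a = a' + 1 := ⟨a - 1, by omega⟩
  obtain ⟨b', rfl⟩ : ∃ b', b = b' + 1 := ⟨b - 1, by omega⟩
  by_cases hz : ufun X (a' + 1) (b' + 1) = 0
  · left; exact hz
  · right
    refine Finset.mem_erase.2 ⟨hz, Finset.mem_image.2 ⟨(⟨a', by omega⟩, ⟨b', by omega⟩),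
      Finset.mem_univ _, rfl⟩⟩

lemma base_case (X : Fin n → Fin n → ℝ) (hfr : fr X = ∅) : X = Ymat X := by
  have hint : ∀ a b : ℕ, a ≤ n → b ≤ n → cc X a b = corner X a b := by
    intro a b ha hb
    rcases ufun_cases X a b ha hb with h | h
    · simp only [ufun] at h; simp only [cc]; linarith
    · rw [hfr] at h; exact absurd h (Finset.notMem_empty _)
  funext i j
  rw [corner_mixed X i j]
  simp only [Ymat,
    hint (i.val+1) (j.val+1) i.isLt j.isLt,
    hint i.val (j.val+1) (le_of_lt i.isLt) j.isLt,
    hint (i.val+1) j.val i.isLt (le_of_lt j.isLt),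
    hint i.val j.val (le_of_lt i.isLt) (le_of_lt j.isLt)]

noncomputable def Zmat (X : Fin n → Fin n → ℝ) (θ : ℝ) : Fin n → Fin n → ℝ :=
  fun i j => (X i j - θ * Ymat X i j) / (1 - θ)

lemma rpre_Z (X : Fin n → Fin n → ℝ) (θ : ℝ) (i : Fin n) (b : ℕ) :
    rpre (Zmat X θ) i b = (rpre X i b - θ * rpre (Ymat X) i b) / (1 - θ) := by
  have hpt : ∀ j : Fin n, (if j.val < b then Zmat X θ i j else 0)
      = ((if j.val < b then X i j else 0) - θ * (if j.val < b then Ymat X i j else 0))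
          / (1 - θ) := by
    intro j; by_cases h : j.val < b <;> simp [Zmat, h]
  rw [rpre, Finset.sum_congr rfl (fun j _ => hpt j), ← Finset.sum_div]
  congr 1
  rw [Finset.sum_sub_distrib, ← Finset.mul_sum]
  simp only [rpre]

lemma corner_Z (X : Fin n → Fin n → ℝ) (θ : ℝ) (a b : ℕ) :
    corner (Zmat X θ) a b = (corner X a b - θ * corner (Ymat X) a b) / (1 - θ) := by
  have hpt : ∀ i : Fin n, (if i.val < a then rpre (Zmat X θ) i b else 0)
      = ((if i.val < a then rpre X i b else 0)
          - θ * (if i.val < a then rpre (Ymat X) i b else 0)) / (1 - θ) := by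
    intro i; by_cases h : i.val < a <;> simp [rpre_Z, h]
  rw [corner, Finset.sum_congr rfl (fun i _ => hpt i), ← Finset.sum_div]
  congr 1
  rw [Finset.sum_sub_distrib, ← Finset.mul_sum]
  simp only [corner]

lemma Z_symm (X : Fin n → Fin n → ℝ) (θ : ℝ) (hsym : ∀ i j, X i j = X j i) (i j : Fin n) :
    Zmat X θ i j = Zmat X θ j i := by
  simp only [Zmat, hsym i j, Y_symm X hsym i j]


lemma Z_rpre_mem (X : Fin n → Fin n → ℝ) (hX : X ∈ Pset n)
    {θ : ℝ} (hθ0 : 0 < θ) (hθ1 : θ < 1)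
    (hu : ∀ a b : ℕ, a ≤ n → b ≤ n → ufun X a b = 0 ∨ ufun X a b ≤ 1 - θ)
    (i : Fin n) (b : ℕ) (hb : b ≤ n) :
    0 ≤ rpre (Zmat X θ) i b ∧ rpre (Zmat X θ) i b ≤ 1 := by
  have hXr : rpre X i b = corner X (i.val+1) b - corner X i.val b := by
    rw [corner_succ X i.val b i.isLt]; simp
  have hYr : rpre (Ymat X) i b
      = (⌈corner X (i.val+1) b⌉ : ℝ) - (⌈corner X i.val b⌉ : ℝ) := by
    rw [Y_rpre X i b hb]; rfl
  have hk := key hθ0 hθ1 (hu (i.val+1) b i.isLt hb) (hu i.val b (le_of_lt i.isLt) hb)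
    (corner_diff X hX i.val b i.isLt).1 (corner_diff X hX i.val b i.isLt).2
  rw [rpre_Z, hXr, hYr]
  constructor
  · apply div_nonneg _ (by linarith)
    linarith [hk.1]
  · rw [div_le_one (by linarith)]
    linarith [hk.2]

lemma Z_mem_Pset (X : Fin n → Fin n → ℝ) (hX : X ∈ Pset n)
    (hsym : ∀ i j, X i j = X j i)
    {θ : ℝ} (hθ0 : 0 < θ) (hθ1 : θ < 1)
    (hu : ∀ a b : ℕ, a ≤ n → b ≤ n → ufun X a b = 0 ∨ ufun X a b ≤ 1 - θ) :
    Zmat X θ ∈ Pset n := by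
  have hsum : ∀ i : Fin n, (∑ j, Zmat X θ i j) = 1 := by
    intro i
    rw [← rpre_full (Zmat X θ) i n le_rfl, rpre_Z,
      rpre_full X i n le_rfl, rpre_full (Ymat X) i n le_rfl,
      hX.2.2.1 i, (Y_isASM X hX hsym).2.2.2.1 i]
    have hne : (1:ℝ) - θ ≠ 0 := by linarith
    rw [mul_one, div_self hne]
  refine ⟨?_, ?_, hsum, ?_⟩
  · intro i j
    rw [← rpre_Iic]
    exact Z_rpre_mem X hX hθ0 hθ1 hu i (j.val+1) j.isLt
  · intro i j
    have heq : (∑ i' ∈ Finset.Iic i, Zmat X θ i' j) = ∑ i' ∈ Finset.Iic i, Zmat X θ j i' :=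
      Finset.sum_congr rfl fun i' _ => Z_symm X θ hsym i' j
    rw [heq, ← rpre_Iic]
    exact Z_rpre_mem X hX hθ0 hθ1 hu j (i.val+1) i.isLt
  · intro j
    have heq : (∑ i, Zmat X θ i j) = ∑ i, Zmat X θ j i :=
      Finset.sum_congr rfl fun i _ => Z_symm X θ hsym i j
    rw [heq]
    exact hsum j

lemma fr_Z_subset (X : Fin n → Fin n → ℝ) {M : ℝ} (hM0 : 0 < M) (hM1 : M < 1)
    (hmax : ∀ u ∈ fr X, u ≤ M) :
    fr (Zmat X (1 - M)) ⊆ ((fr X).erase M).image (fun u => u / M) := by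
  intro x hx
  obtain ⟨hx0, hxim⟩ := Finset.mem_erase.1 hx
  obtain ⟨p, -, hp⟩ := Finset.mem_image.1 hxim
  set a := p.1.val + 1 with ha
  set b := p.2.val + 1 with hb
  have haA : a ≤ n := p.1.isLt
  have hbB : b ≤ n := p.2.isLt
  have hcz : corner (Zmat X (1 - M)) a b
      = (corner X a b - (1 - M) * (⌈corner X a b⌉ : ℝ)) / M := by
    rw [corner_Z, corner_Y X a b haA hbB]
    have : (1 : ℝ) - (1 - M) = M := by ring
    rw [this]; rfl
  rcases ufun_cases X a b haA hbB with hcase | hcase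
  · -- integral point: contradiction with x ≠ 0
    exfalso
    have hcc : (⌈corner X a b⌉ : ℝ) = corner X a b := by
      simp only [ufun] at hcase; linarith
    have hz : corner (Zmat X (1 - M)) a b = corner X a b := by
      rw [hcz, ← hcc]
      have hMne : M ≠ 0 := ne_of_gt hM0
      field_simp
      rw [Int.ceil_intCast]; ring
    apply hx0
    rw [← hp]
    show (⌈corner (Zmat X (1 - M)) a b⌉ : ℝ) - corner (Zmat X (1 - M)) a b = 0
    rw [hz, hcc]
    ring
  · -- fractional point
    have hu0 : 0 < ufun X a b :=
      lt_of_le_of_ne (ufun_nonneg X a b) (Ne.symm (Finset.mem_erase.1 hcase).1)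
    have huM : ufun X a b ≤ M := hmax _ hcase
    have hzval : corner (Zmat X (1 - M)) a b
        = (⌈corner X a b⌉ : ℝ) - ufun X a b / M := by
      rw [hcz]
      simp only [ufun]
      have hMne : M ≠ 0 := ne_of_gt hM0
      field_simp
      ring
    rcases eq_or_lt_of_le huM with heq | hlt
    · -- ufun = M : Z-corner is an integer, contradiction
      exfalso
      apply hx0
      rw [← hp]
      have hzint : corner (Zmat X (1 - M)) a b = ((⌈corner X a b⌉ - 1 : ℤ) : ℝ) := by
        rw [hzval, heq, div_self (ne_of_gt hM0)]; push_cast; ring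
      show (⌈corner (Zmat X (1 - M)) a b⌉ : ℝ) - corner (Zmat X (1 - M)) a b = 0
      rw [hzint, Int.ceil_intCast]
      ring
    · -- 0 < ufun < M : new co-frac is ufun / M
      have hs0 : 0 ≤ ufun X a b / M := div_nonneg (le_of_lt hu0) (le_of_lt hM0)
      have hs1 : ufun X a b / M < 1 := (div_lt_one hM0).2 hlt
      have hceil : ⌈corner (Zmat X (1 - M)) a b⌉ = ⌈corner X a b⌉ := by
        rw [hzval]; exact ceil_int_sub _ hs0 hs1
      have hval : x = ufun X a b / M := by
        rw [← hp]
        show (⌈corner (Zmat X (1 - M)) a b⌉ : ℝ) - corner (Zmat X (1 - M)) a b = ufun X a b / M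
        rw [hceil, hzval]
        ring
      exact Finset.mem_image.2 ⟨ufun X a b, Finset.mem_erase.2 ⟨ne_of_lt hlt, hcase⟩,
        hval.symm⟩


lemma main_aux (N : ℕ) : ∀ (X : Fin n → Fin n → ℝ), X ∈ Pset n →
    (∀ i j, X i j = X j i) → (fr X).card ≤ N →
    X ∈ convexHull ℝ {W : Fin n → Fin n → ℝ | IsASM n W ∧ ∀ i j, W i j = W j i} := by
  induction N with
  | zero =>
      intro X hX hsym hcard
      have hfr : fr X = ∅ := Finset.card_eq_zero.1 (Nat.le_zero.1 hcard)
      have hXY := base_case X hfr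
      exact subset_convexHull ℝ _ ⟨by rw [hXY]; exact Y_isASM X hX hsym, hsym⟩
  | succ N ih =>
      intro X hX hsym hcard
      by_cases hfr : fr X = ∅
      · have hXY := base_case X hfr
        exact subset_convexHull ℝ _ ⟨by rw [hXY]; exact Y_isASM X hX hsym, hsym⟩
      · have hne : (fr X).Nonempty := Finset.nonempty_iff_ne_empty.2 hfr
        set M := (fr X).max' hne with hMdef
        have hMmem : M ∈ fr X := Finset.max'_mem _ hne
        obtain ⟨hM0', hMim⟩ := Finset.mem_erase.1 hMmem
        obtain ⟨p, -, hp⟩ := Finset.mem_image.1 hMim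
        have hM0 : 0 < M :=
          lt_of_le_of_ne (hp ▸ ufun_nonneg X _ _) (Ne.symm hM0')
        have hM1 : M < 1 := hp ▸ ufun_lt_one X _ _
        set θ : ℝ := 1 - M with hθdef
        have hθ0 : 0 < θ := by simp only [hθdef]; linarith
        have hθ1 : θ < 1 := by simp only [hθdef]; linarith
        have hu : ∀ a b : ℕ, a ≤ n → b ≤ n → ufun X a b = 0 ∨ ufun X a b ≤ 1 - θ := by
          intro a b ha hb
          rcases ufun_cases X a b ha hb with h | h
          · exact Or.inl h
          · right
            have : ufun X a b ≤ M := Finset.le_max' _ _ h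
            simp only [hθdef]; linarith
        have hZP : Zmat X θ ∈ Pset n := Z_mem_Pset X hX hsym hθ0 hθ1 hu
        have hZsym : ∀ i j, Zmat X θ i j = Zmat X θ j i := Z_symm X θ hsym
        have hsub : fr (Zmat X θ) ⊆ ((fr X).erase M).image (fun u => u / M) := by
          have := fr_Z_subset X hM0 hM1 (fun u hu' => Finset.le_max' _ _ hu')
          simpa [hθdef] using this
        have hcardZ : (fr (Zmat X θ)).card ≤ N := by
          have h1 : (fr (Zmat X θ)).card ≤ (((fr X).erase M).image (fun u => u / M)).card :=
            Finset.card_le_card hsub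
          have h2 : (((fr X).erase M).image (fun u => u / M)).card ≤ ((fr X).erase M).card :=
            Finset.card_image_le
          have h3 : ((fr X).erase M).card = (fr X).card - 1 :=
            Finset.card_erase_of_mem hMmem
          have h4 : 1 ≤ (fr X).card := Finset.card_pos.2 hne
          omega
        have hZconv := ih (Zmat X θ) hZP hZsym hcardZ
        have hYconv := subset_convexHull ℝ
          {W : Fin n → Fin n → ℝ | IsASM n W ∧ ∀ i j, W i j = W j i}
          (Set.mem_setOf.2 ⟨Y_isASM X hX hsym, Y_symm X hsym⟩)
        have hXeq : X = θ • Ymat X + (1 - θ) • Zmat X θ := by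
          funext i j
          have hne' : (1:ℝ) - θ ≠ 0 := by linarith
          simp only [Pi.add_apply, Pi.smul_apply, smul_eq_mul, Zmat]
          field_simp
          ring
        rw [hXeq]
        exact (convex_convexHull ℝ _) hYconv hZconv (le_of_lt hθ0) (by linarith) (by ring)


lemma comb_apply (x y : Fin n → Fin n → ℝ) (c d : ℝ) (i j : Fin n) :
    (c • x + d • y) i j = c * x i j + d * y i j := by
  simp [Pi.add_apply, Pi.smul_apply, smul_eq_mul]

lemma Pset_convex : Convex ℝ (Pset n) := by
  intro x hx y hy c d hc hd hcd
  have hsumIic : ∀ (f : Fin n → ℝ) (g : Fin n → ℝ) (s : Finset (Fin n)),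
      (∑ k ∈ s, (c * f k + d * g k)) = c * (∑ k ∈ s, f k) + d * (∑ k ∈ s, g k) := by
    intro f g s
    rw [Finset.sum_add_distrib, Finset.mul_sum, Finset.mul_sum]
  refine ⟨?_, ?_, ?_, ?_⟩
  · intro i j
    have h1 := hx.1 i j
    have h2 := hy.1 i j
    have heq : (∑ j' ∈ Finset.Iic j, (c • x + d • y) i j')
        = c * (∑ j' ∈ Finset.Iic j, x i j') + d * (∑ j' ∈ Finset.Iic j, y i j') := by
      rw [← hsumIic]
      exact Finset.sum_congr rfl fun j' _ => comb_apply x y c d i j'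
    rw [heq]
    constructor
    · nlinarith [h1.1, h2.1]
    · nlinarith [h1.2, h2.2]
  · intro i j
    have h1 := hx.2.1 i j
    have h2 := hy.2.1 i j
    have heq : (∑ i' ∈ Finset.Iic i, (c • x + d • y) i' j)
        = c * (∑ i' ∈ Finset.Iic i, x i' j) + d * (∑ i' ∈ Finset.Iic i, y i' j) := by
      rw [← hsumIic]
      exact Finset.sum_congr rfl fun i' _ => comb_apply x y c d i' j
    rw [heq]
    constructor
    · nlinarith [h1.1, h2.1]
    · nlinarith [h1.2, h2.2]
  · intro i
    have heq : (∑ j, (c • x + d • y) i j)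
        = c * (∑ j, x i j) + d * (∑ j, y i j) := by
      rw [← hsumIic]
      exact Finset.sum_congr rfl fun j _ => comb_apply x y c d i j
    rw [heq, hx.2.2.1 i, hy.2.2.1 i]
    linarith
  · intro j
    have heq : (∑ i, (c • x + d • y) i j)
        = c * (∑ i, x i j) + d * (∑ i, y i j) := by
      rw [← hsumIic]
      exact Finset.sum_congr rfl fun i _ => comb_apply x y c d i j
    rw [heq, hx.2.2.2 j, hy.2.2.2 j]
    linarith

lemma ASM_subset_Pset : {X : Fin n → Fin n → ℝ | IsASM n X} ⊆ Pset n := by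
  intro X hX
  refine ⟨?_, ?_, hX.2.2.2.1, hX.2.2.2.2⟩
  · intro i j
    rcases hX.2.1 i j with h | h <;> rw [h] <;> norm_num
  · intro i j
    rcases hX.2.2.1 i j with h | h <;> rw [h] <;> norm_num

lemma symm_convex : Convex ℝ {X : Fin n → Fin n → ℝ | ∀ i j, X i j = X j i} := by
  intro x hx y hy c d _ _ _
  intro i j
  rw [comb_apply, comb_apply, hx i j, hy i j]

end DSASMaux

/-- The polytope of diagonally symmetric ASMs is the intersection of the ASM
polytope with the subspace of symmetric matrices. -/
theorem DSASM_polytope_description (n : ℕ) (hn : 1 ≤ n) :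
    convexHull ℝ {X : Fin n → Fin n → ℝ | IsASM n X ∧ ∀ i j, X i j = X j i}
      = convexHull ℝ {X : Fin n → Fin n → ℝ | IsASM n X}
        ∩ {X : Fin n → Fin n → ℝ | ∀ i j, X i j = X j i} := by
  apply Set.Subset.antisymm
  · apply Set.subset_inter
    · exact convexHull_mono (fun X hX => hX.1)
    · exact convexHull_min (fun X hX => hX.2) DSASMaux.symm_convex
  · rintro X ⟨hconv, hsym⟩
    have hP : X ∈ DSASMaux.Pset n :=
      convexHull_min DSASMaux.ASM_subset_Pset DSASMaux.Pset_convex hconv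
    exact DSASMaux.main_aux (DSASMaux.fr X).card X hP hsym le_rfl
end

section
/- Let n ≥ 1 and let C = {(i,j) : 1 ≤ i ≤ j ≤ n}. The convex hull in ℝ^C of the set { (x_{i,j})_{(i,j)∈C} : X is an n×n DSASM } (the upper-triangular parts of DSASMs including the diagonal) equals the set of Y ∈ ℝ^C satisfying: (i) 0 ≤ ∑_{i'=1}^{min{i,j}} y_{i',i} + ∑_{j'=i+1}^{j} y_{i,j'} ≤ 1 for all i ∈ {1,…,n} and j ∈ {1,…,n−1}; and (ii) ∑_{i'=1}^{i} y_{i',i} + ∑_{j'=i+1}^{n} y_{i,j'} = 1 for all i ∈ {1,…,n}. -/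
namespace DSASMAux
open Finset

variable {n : ℕ}

/-- symmetric completion of an upper-triangular vector -/
noncomputable def sym (n : ℕ) (Y : {p : Fin n × Fin n // p.1 ≤ p.2} → ℝ) :
    Fin n → Fin n → ℝ :=
  fun i j => if h : i ≤ j then Y ⟨(i, j), h⟩ else Y ⟨(j, i), le_of_not_ge h⟩

lemma sym_symm (Y : {p : Fin n × Fin n // p.1 ≤ p.2} → ℝ) (i j : Fin n) :
    sym n Y i j = sym n Y j i := by
  unfold sym
  rcases lt_trichotomy i j with h | rfl | h
  · rw [dif_pos h.le, dif_neg (not_le.2 h)]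
  · rfl
  · rw [dif_neg (not_le.2 h), dif_pos h.le]

/-- extension of a matrix to ℕ × ℕ by zero -/
noncomputable def zext (Z : Fin n → Fin n → ℝ) (a b : ℕ) : ℝ :=
  if h : a < n ∧ b < n then Z ⟨a, h.1⟩ ⟨b, h.2⟩ else 0

noncomputable def rowP (Z : Fin n → Fin n → ℝ) (a b : ℕ) : ℝ :=
  ∑ l ∈ range b, zext Z a l

noncomputable def corner (Z : Fin n → Fin n → ℝ) (a b : ℕ) : ℝ :=
  ∑ m ∈ range a, rowP Z m b

lemma corner_zero_left (Z : Fin n → Fin n → ℝ) (b : ℕ) : corner Z 0 b = 0 := by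
  simp [corner]

lemma corner_zero_right (Z : Fin n → Fin n → ℝ) (a : ℕ) : corner Z a 0 = 0 := by
  simp [corner, rowP]

lemma corner_succ_left (Z : Fin n → Fin n → ℝ) (a b : ℕ) :
    corner Z (a + 1) b = corner Z a b + rowP Z a b := by
  simp [corner, Finset.sum_range_succ]

lemma corner_comm (Z : Fin n → Fin n → ℝ) (hs : ∀ i j, Z i j = Z j i) (a b : ℕ) :
    corner Z a b = corner Z b a := by
  unfold corner rowP
  rw [Finset.sum_comm]
  refine Finset.sum_congr rfl fun m _ => Finset.sum_congr rfl fun l _ => ?_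
  unfold zext
  rcases Nat.lt_or_ge l n with hl | hl
  · rcases Nat.lt_or_ge m n with hm | hm
    · rw [dif_pos ⟨hl, hm⟩, dif_pos ⟨hm, hl⟩]; exact hs _ _
    · rw [dif_neg (by omega), dif_neg (by omega)]
  · rw [dif_neg (by omega), dif_neg (by omega)]

lemma entry_eq_corner (Z : Fin n → Fin n → ℝ) (i j : Fin n) :
    Z i j = corner Z (i + 1) (j + 1) - corner Z i (j + 1) - corner Z (i + 1) j
      + corner Z i j := by
  have h1 : rowP Z i (j + 1) = rowP Z i j + zext Z i j := by
    simp [rowP, Finset.sum_range_succ]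
  have h2 := corner_succ_left Z i (j + 1)
  have h3 := corner_succ_left Z i j
  have h4 : zext Z i.1 j.1 = Z i j := by
    unfold zext; rw [dif_pos ⟨i.2, j.2⟩]
  rw [h2, h3]
  rw [h1] at *
  rw [h4]; ring


lemma image_Iic (j : Fin n) : (Iic j).image Fin.val = range (j.1 + 1) := by
  ext m
  simp only [mem_image, mem_Iic, mem_range, Nat.lt_succ_iff]
  constructor
  · rintro ⟨x, hx, rfl⟩; exact hx
  · intro hm; exact ⟨⟨m, lt_of_le_of_lt hm j.2⟩, hm, rfl⟩

lemma sum_Iic_eq (j : Fin n) (g : ℕ → ℝ) :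
    ∑ x ∈ Iic j, g x.1 = ∑ m ∈ range (j.1 + 1), g m := by
  rw [← image_Iic j, Finset.sum_image (fun a _ b _ h => Fin.val_injective h)]

lemma image_Ioc (i j : Fin n) : (Ioc i j).image Fin.val = Ioc i.1 j.1 := by
  ext m
  simp only [mem_image, mem_Ioc]
  constructor
  · rintro ⟨x, hx, rfl⟩; exact hx
  · intro hm; exact ⟨⟨m, lt_of_le_of_lt hm.2 j.2⟩, hm, rfl⟩

lemma sum_Ioc_eq (i j : Fin n) (g : ℕ → ℝ) :
    ∑ x ∈ Ioc i j, g x.1 = ∑ m ∈ Ioc i.1 j.1, g m := by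
  rw [← image_Ioc i j, Finset.sum_image (fun a _ b _ h => Fin.val_injective h)]

lemma nat_Ioc_eq (a b : ℕ) : Ioc a b = Ico (a+1) (b+1) := by
  ext m; simp only [mem_Ioc, mem_Ico]; omega

lemma sum_range_add_Ioc (g : ℕ → ℝ) {a b : ℕ} (h : a ≤ b) :
    ∑ m ∈ range (a+1), g m + ∑ m ∈ Ioc a b, g m = ∑ m ∈ range (b+1), g m := by
  rw [nat_Ioc_eq, Finset.range_eq_Ico, Finset.sum_Ico_consecutive _ (by omega) (by omega), Finset.range_eq_Ico]

lemma sum_univ_eq (g : ℕ → ℝ) :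
    ∑ x : Fin n, g x.1 = ∑ m ∈ range n, g m := Fin.sum_univ_eq_sum_range g n

/-- The main translation: for a symmetric `Z`, the constraint sum equals a row-prefix sum. -/
lemma constraint_sum (Z : Fin n → Fin n → ℝ) (hs : ∀ i j, Z i j = Z j i) (i j : Fin n) :
    (∑ x ∈ Iic (min i j), Z x i) + ∑ x ∈ Ioc i j, Z i x = ∑ x ∈ Iic j, Z i x := by
  rcases le_or_gt i j with h | h
  · have hmin : min i j = i := min_eq_left h
    rw [hmin]
    have h1 : ∑ x ∈ Iic i, Z x i = ∑ x ∈ Iic i, Z i x :=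
      Finset.sum_congr rfl fun x _ => hs x i
    have hu : Iic i ∪ Ioc i j = Iic j := by
      ext x
      simp only [mem_union, mem_Iic, mem_Ioc, Fin.le_def, Fin.lt_def]
      omega
    have hd : Disjoint (Iic i) (Ioc i j) := by
      rw [Finset.disjoint_left]
      intro x hx hx'
      simp only [mem_Iic, mem_Ioc] at hx hx'
      exact absurd (lt_of_le_of_lt hx hx'.1) (lt_irrefl x)
    rw [h1, ← hu, Finset.sum_union hd]
  · have hmin : min i j = j := min_eq_right h.le
    rw [hmin, Finset.Ioc_eq_empty (by exact not_lt.2 h.le), Finset.sum_empty, add_zero]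
    exact Finset.sum_congr rfl fun x _ => hs x i

lemma constraint_sum_full (Z : Fin n → Fin n → ℝ) (hs : ∀ i j, Z i j = Z j i) (i : Fin n) :
    (∑ x ∈ Iic i, Z x i) + ∑ x ∈ Ioi i, Z i x = ∑ x, Z i x := by
  have h1 : ∑ x ∈ Iic i, Z x i = ∑ x ∈ Iic i, Z i x :=
    Finset.sum_congr rfl fun x _ => hs x i
  have hu : Iic i ∪ Ioi i = Finset.univ := by
    ext x
    simp only [mem_union, mem_Iic, mem_Ioi, mem_univ, iff_true]
    exact le_or_gt x i
  have hd : Disjoint (Iic i) (Ioi i) := by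
    rw [Finset.disjoint_left]
    intro x hx hx'
    simp only [mem_Iic, mem_Ioi] at hx hx'
    exact absurd (lt_of_le_of_lt hx hx') (lt_irrefl x)
  rw [h1, ← hu, Finset.sum_union hd]


lemma ceil_pair (x y t : ℝ) (h0 : 0 ≤ x - y) (h1 : x - y ≤ 1) :
    ⌈x - t⌉ - ⌈y - t⌉ = 0 ∨ ⌈x - t⌉ - ⌈y - t⌉ = 1 := by
  have hle : ⌈y - t⌉ ≤ ⌈x - t⌉ := Int.ceil_le_ceil (by linarith)
  have hle2 : ⌈x - t⌉ ≤ ⌈y - t⌉ + 1 := by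
    rw [Int.ceil_le]
    push_cast
    have := Int.le_ceil (y - t)
    linarith
  omega

noncomputable def G (Z : Fin n → Fin n → ℝ) (t : ℝ) (a b : ℕ) : ℤ :=
  ⌈corner Z a b - t⌉

noncomputable def ceilM (Z : Fin n → Fin n → ℝ) (t : ℝ) : Fin n → Fin n → ℝ :=
  fun i j =>
    ((G Z t (i + 1) (j + 1) - G Z t i (j + 1) - G Z t (i + 1) j + G Z t i j : ℤ) : ℝ)

section Bounds

variable {Z : Fin n → Fin n → ℝ} (hs : ∀ i j, Z i j = Z j i)
  (hb : ∀ a < n, ∀ b ≤ n, 0 ≤ rowP Z a b ∧ rowP Z a b ≤ 1)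
  (hf : ∀ a < n, rowP Z a n = 1)

include hf in
lemma corner_last : ∀ a, a ≤ n → corner Z a n = a := by
  intro a
  induction a with
  | zero => intro _; simp [corner_zero_left]
  | succ a ih =>
    intro ha
    rw [corner_succ_left, ih (by omega), hf a (by omega)]
    push_cast; ring

include hb in
lemma Gd1 {t : ℝ} {a b : ℕ} (ha : a < n) (hbn : b ≤ n) :
    G Z t (a + 1) b - G Z t a b = 0 ∨ G Z t (a + 1) b - G Z t a b = 1 := by
  have h := corner_succ_left Z a b
  have h2 := hb a ha b hbn
  exact ceil_pair _ _ _ (by rw [h]; linarith) (by rw [h]; linarith)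

include hs hb in
lemma Gd2 {t : ℝ} {a b : ℕ} (hbn : b < n) (ha : a ≤ n) :
    G Z t a (b + 1) - G Z t a b = 0 ∨ G Z t a (b + 1) - G Z t a b = 1 := by
  have e1 : G Z t a (b + 1) = G Z t (b + 1) a := by
    unfold G; rw [corner_comm Z hs]
  have e2 : G Z t a b = G Z t b a := by
    unfold G; rw [corner_comm Z hs]
  rw [e1, e2]
  exact Gd1 hb hbn ha

include hf in
lemma G_last {t : ℝ} (ht0 : 0 ≤ t) (ht1 : t < 1) {a : ℕ} (ha : a ≤ n) :
    G Z t a n = a := by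
  unfold G
  rw [corner_last hf a ha]
  rw [Int.ceil_eq_iff]
  constructor <;> [push_cast; push_cast] <;> linarith

lemma G_zero_right (t : ℝ) (a : ℕ) : G Z t a 0 = ⌈-t⌉ := by
  unfold G; rw [corner_zero_right]; ring_nf

include hs in
lemma ceilM_symm (t : ℝ) (i j : Fin n) : ceilM Z t i j = ceilM Z t j i := by
  unfold ceilM G
  rw [corner_comm Z hs (i + 1) (j + 1), corner_comm Z hs i.1 (j + 1),
    corner_comm Z hs (i + 1) j.1, corner_comm Z hs i.1 j.1]
  push_cast
  ring

lemma rowsum_ceilM (t : ℝ) (i j : Fin n) :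
    ∑ x ∈ Iic j, ceilM Z t i x
      = ((G Z t (i + 1) (j.1 + 1) - G Z t i (j.1 + 1) : ℤ) : ℝ) := by
  set F : ℕ → ℤ := fun b => G Z t (i + 1) b - G Z t i b with hF
  have hsummand : ∀ x : Fin n, ceilM Z t i x = ((F (x.1 + 1) - F x.1 : ℤ) : ℝ) := by
    intro x
    simp only [hF, ceilM]
    push_cast
    ring
  calc ∑ x ∈ Iic j, ceilM Z t i x
      = ∑ x ∈ Iic j, ((F (x.1 + 1) - F x.1 : ℤ) : ℝ) :=
        Finset.sum_congr rfl fun x _ => hsummand x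
    _ = ∑ m ∈ range (j.1 + 1), ((F (m + 1) - F m : ℤ) : ℝ) :=
        sum_Iic_eq j (fun m => ((F (m + 1) - F m : ℤ) : ℝ))
    _ = ((∑ m ∈ range (j.1 + 1), (F (m + 1) - F m) : ℤ) : ℝ) := by push_cast; rfl
    _ = ((F (j.1 + 1) - F 0 : ℤ) : ℝ) := by rw [Finset.sum_range_sub F]
    _ = ((G Z t (i + 1) (j.1 + 1) - G Z t i (j.1 + 1) : ℤ) : ℝ) := by
        simp only [hF, G_zero_right]
        push_cast
        ring

lemma fullsum_ceilM (t : ℝ) (i : Fin n) :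
    ∑ x, ceilM Z t i x = ((G Z t (i + 1) n - G Z t i n : ℤ) : ℝ) := by
  set F : ℕ → ℤ := fun b => G Z t (i + 1) b - G Z t i b with hF
  have hsummand : ∀ x : Fin n, ceilM Z t i x = ((F (x.1 + 1) - F x.1 : ℤ) : ℝ) := by
    intro x
    simp only [hF, ceilM]
    push_cast
    ring
  calc ∑ x, ceilM Z t i x
      = ∑ x : Fin n, ((F (x.1 + 1) - F x.1 : ℤ) : ℝ) :=
        Finset.sum_congr rfl fun x _ => hsummand x
    _ = ∑ m ∈ range n, ((F (m + 1) - F m : ℤ) : ℝ) :=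
        sum_univ_eq (fun m => ((F (m + 1) - F m : ℤ) : ℝ))
    _ = ((∑ m ∈ range n, (F (m + 1) - F m) : ℤ) : ℝ) := by push_cast; rfl
    _ = ((F n - F 0 : ℤ) : ℝ) := by rw [Finset.sum_range_sub F]
    _ = ((G Z t (i + 1) n - G Z t i n : ℤ) : ℝ) := by
        simp only [hF, G_zero_right]
        push_cast
        ring

include hs hb hf in
lemma ceilM_isASM {t : ℝ} (ht0 : 0 ≤ t) (ht1 : t < 1) : IsASM n (ceilM Z t) := by
  refine ⟨?_, ?_, ?_, ?_, ?_⟩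
  · intro i j
    have hd1 := Gd1 hb (t := t) i.2 (b := j.1 + 1) j.2
    have hd2 := Gd1 hb (t := t) i.2 (b := j.1) (le_of_lt j.2)
    have he : ceilM Z t i j
        = (((G Z t (i + 1) (j.1 + 1) - G Z t i (j.1 + 1))
            - (G Z t (i + 1) j.1 - G Z t i j.1) : ℤ) : ℝ) := by
      unfold ceilM; push_cast; ring
    rw [he]
    rcases hd1 with h1 | h1 <;> rcases hd2 with h2 | h2 <;>
      [skip; skip; skip; skip] <;> rw [h1, h2] <;> norm_num
  · intro i j
    rw [rowsum_ceilM]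
    rcases Gd1 hb (t := t) i.2 (b := j.1 + 1) j.2 with h | h <;> rw [h] <;> norm_num
  · intro i j
    have hcongr : ∑ x ∈ Iic i, ceilM Z t x j = ∑ x ∈ Iic i, ceilM Z t j x :=
      Finset.sum_congr rfl fun x _ => ceilM_symm hs t x j
    rw [hcongr, rowsum_ceilM]
    rcases Gd1 hb (t := t) j.2 (b := i.1 + 1) i.2 with h | h <;> rw [h] <;> norm_num
  · intro i
    rw [fullsum_ceilM, G_last hf ht0 ht1 i.2.le,
      G_last hf ht0 ht1 (Nat.succ_le_of_lt i.2)]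
    push_cast; ring
  · intro j
    have hcongr : ∑ x, ceilM Z t x j = ∑ x, ceilM Z t j x :=
      Finset.sum_congr rfl fun x _ => ceilM_symm hs t x j
    rw [hcongr, fullsum_ceilM, G_last hf ht0 ht1 j.2.le,
      G_last hf ht0 ht1 (Nat.succ_le_of_lt j.2)]
    push_cast; ring

end Bounds


lemma ceil_split (t : ℝ) (ht0 : 0 ≤ t) (ht1 : t < 1) (x : ℝ) :
    ((⌈x - t⌉ : ℤ) : ℝ) = (⌊x⌋ : ℝ) + (if t < Int.fract x then 1 else 0) := by
  have hx : x = (⌊x⌋ : ℝ) + Int.fract x := (Int.floor_add_fract x).symm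
  have hf0 : 0 ≤ Int.fract x := Int.fract_nonneg x
  have hf1 : Int.fract x < 1 := Int.fract_lt_one x
  split_ifs with h
  · have : ⌈x - t⌉ = ⌊x⌋ + 1 := by
      rw [Int.ceil_eq_iff]
      push_cast
      constructor <;> linarith
    rw [this]; push_cast; ring
  · push_neg at h
    have : ⌈x - t⌉ = ⌊x⌋ := by
      rw [Int.ceil_eq_iff]
      constructor <;> linarith
    rw [this]; ring

section Decomp
variable (T : Finset ℝ)

noncomputable def fenum : ℕ → ℝ := fun m =>
  if h : m < T.card then (T.orderIsoOfFin rfl ⟨m, h⟩ : ℝ) else 1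

variable (hT : ∀ s ∈ T, 0 ≤ s ∧ s < 1) (h0T : (0 : ℝ) ∈ T)

include hT in
lemma fenum_lt_one {m : ℕ} (hm : m < T.card) : fenum T m < 1 := by
  rw [fenum, dif_pos hm]
  exact (hT _ (T.orderIsoOfFin rfl ⟨m, hm⟩).2).2

include hT in
lemma fenum_nonneg (m : ℕ) : 0 ≤ fenum T m := by
  rw [fenum]
  split_ifs with h
  · exact (hT _ (T.orderIsoOfFin rfl ⟨m, h⟩).2).1
  · norm_num

include hT h0T in
lemma fenum_zero : fenum T 0 = 0 := by
  have hpos : 0 < T.card := Finset.card_pos.2 ⟨0, h0T⟩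
  have hle : fenum T 0 ≤ 0 := by
    rw [fenum, dif_pos hpos]
    have h1 : (T.orderIsoOfFin rfl) ⟨0, hpos⟩ ≤ (T.orderIsoOfFin rfl)
        ((T.orderIsoOfFin rfl).symm ⟨0, h0T⟩) :=
      (T.orderIsoOfFin rfl).monotone (Fin.mk_le_mk.2 (Nat.zero_le _))
    have h2 := (T.orderIsoOfFin rfl).apply_symm_apply ⟨0, h0T⟩
    rw [h2] at h1
    exact_mod_cast h1
  exact le_antisymm hle (fenum_nonneg T hT 0)

lemma fenum_of_ge {m : ℕ} (hm : T.card ≤ m) : fenum T m = 1 := by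
  rw [fenum, dif_neg (by omega)]

include hT in
lemma fenum_succ_ge (m : ℕ) : fenum T m ≤ fenum T (m + 1) := by
  rcases Nat.lt_or_ge (m + 1) T.card with h | h
  · rw [fenum, fenum, dif_pos h, dif_pos (by omega)]
    exact_mod_cast ((T.orderIsoOfFin rfl).monotone (by simp [Fin.mk_le_mk]))
  · rw [fenum_of_ge T h]
    rcases Nat.lt_or_ge m T.card with h' | h'
    · exact (fenum_lt_one T hT h').le
    · rw [fenum_of_ge T h']

include hT h0T in
lemma fenum_sum_one :
    ∑ m ∈ range T.card, (fenum T (m + 1) - fenum T m) = 1 := by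
  rw [Finset.sum_range_sub (fenum T), fenum_of_ge T le_rfl, fenum_zero T hT h0T]
  ring

include hT h0T in
lemma fenum_key {x : ℝ} (hx : Int.fract x ∈ T) :
    ∑ m ∈ range T.card, (fenum T (m + 1) - fenum T m) * ((⌈x - fenum T m⌉ : ℤ) : ℝ)
      = x := by
  set e := T.orderIsoOfFin rfl with he
  set p : Fin T.card := e.symm ⟨Int.fract x, hx⟩ with hp
  have hep : (e p : ℝ) = Int.fract x := by rw [hp, e.apply_symm_apply]
  have hiff : ∀ m (hm : m < T.card), (fenum T m < Int.fract x ↔ m < p.1) := by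
    intro m hm
    rw [fenum, dif_pos hm, ← hep]
    rw [show ((e ⟨m, hm⟩ : ℝ) < (e p : ℝ) ↔ e ⟨m, hm⟩ < e p) from Subtype.coe_lt_coe,
      e.lt_iff_lt, Fin.lt_def]
  have hstep : ∀ m ∈ range T.card,
      (fenum T (m + 1) - fenum T m) * ((⌈x - fenum T m⌉ : ℤ) : ℝ)
        = (fenum T (m + 1) - fenum T m) * (⌊x⌋ : ℝ)
          + (if m ∈ range p.1 then fenum T (m + 1) - fenum T m else 0) := by
    intro m hm
    rw [mem_range] at hm
    rw [ceil_split _ (fenum_nonneg T hT m) (fenum_lt_one T hT hm)]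
    rw [mul_add]
    congr 1
    by_cases hc : fenum T m < Int.fract x
    · rw [if_pos hc, if_pos (mem_range.2 ((hiff m hm).1 hc)), mul_one]
    · rw [if_neg hc, if_neg (fun hmem => hc ((hiff m hm).2 (mem_range.1 hmem))), mul_zero]
  rw [Finset.sum_congr rfl hstep, Finset.sum_add_distrib, ← Finset.sum_mul,
    fenum_sum_one T hT h0T, one_mul, Finset.sum_ite_mem,
    Finset.inter_eq_right.2 (Finset.range_subset_range.2 p.2.le),
    Finset.sum_range_sub (fenum T), fenum_zero T hT h0T]
  have : fenum T p.1 = Int.fract x := by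
    rw [fenum, dif_pos p.2, ← hep]
  rw [this, sub_zero]
  exact Int.floor_add_fract x

end Decomp

lemma Iic_rowP (Z : Fin n → Fin n → ℝ) (i j : Fin n) :
    ∑ x ∈ Iic j, Z i x = rowP Z i (j.1 + 1) := by
  rw [rowP, ← sum_Iic_eq j (fun m => zext Z i.1 m)]
  refine Finset.sum_congr rfl fun x _ => ?_
  unfold zext
  rw [dif_pos ⟨i.2, x.2⟩]

lemma univ_rowP (Z : Fin n → Fin n → ℝ) (i : Fin n) :
    ∑ x, Z i x = rowP Z i n := by
  rw [rowP, ← sum_univ_eq (fun m => zext Z i.1 m)]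
  refine Finset.sum_congr rfl fun x _ => ?_
  unfold zext
  rw [dif_pos ⟨i.2, x.2⟩]

lemma convA (Y : {p : Fin n × Fin n // p.1 ≤ p.2} → ℝ) (i j : Fin n) :
    (∑ i' ∈ (Finset.Iic (min i j)).attach,
        Y ⟨((i' : Fin n), i), le_trans (Finset.mem_Iic.mp i'.2) (min_le_left i j)⟩)
      + (∑ j' ∈ (Finset.Ioc i j).attach,
          Y ⟨(i, (j' : Fin n)), le_of_lt (Finset.mem_Ioc.mp j'.2).1⟩)
    = ∑ x ∈ Iic j, sym n Y i x := by
  have h1 : (∑ i' ∈ (Finset.Iic (min i j)).attach,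
        Y ⟨((i' : Fin n), i), le_trans (Finset.mem_Iic.mp i'.2) (min_le_left i j)⟩)
      = ∑ x ∈ Iic (min i j), sym n Y x i := by
    rw [← Finset.sum_attach (Iic (min i j)) (fun x => sym n Y x i)]
    refine Finset.sum_congr rfl fun x _ => ?_
    simp only [sym]
    rw [dif_pos (le_trans (Finset.mem_Iic.mp x.2) (min_le_left i j))]
  have h2 : (∑ j' ∈ (Finset.Ioc i j).attach,
        Y ⟨(i, (j' : Fin n)), le_of_lt (Finset.mem_Ioc.mp j'.2).1⟩)
      = ∑ x ∈ Ioc i j, sym n Y i x := by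
    rw [← Finset.sum_attach (Ioc i j) (fun x => sym n Y i x)]
    refine Finset.sum_congr rfl fun x _ => ?_
    simp only [sym]
    rw [dif_pos (le_of_lt (Finset.mem_Ioc.mp x.2).1)]
  rw [h1, h2]
  exact constraint_sum (sym n Y) (sym_symm Y) i j

lemma convB (Y : {p : Fin n × Fin n // p.1 ≤ p.2} → ℝ) (i : Fin n) :
    (∑ i' ∈ (Finset.Iic i).attach,
        Y ⟨((i' : Fin n), i), Finset.mem_Iic.mp i'.2⟩)
      + (∑ j' ∈ (Finset.Ioi i).attach,
          Y ⟨(i, (j' : Fin n)), le_of_lt (Finset.mem_Ioi.mp j'.2)⟩)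
    = ∑ x, sym n Y i x := by
  have h1 : (∑ i' ∈ (Finset.Iic i).attach, Y ⟨((i' : Fin n), i), Finset.mem_Iic.mp i'.2⟩)
      = ∑ x ∈ Iic i, sym n Y x i := by
    rw [← Finset.sum_attach (Iic i) (fun x => sym n Y x i)]
    refine Finset.sum_congr rfl fun x _ => ?_
    simp only [sym]
    rw [dif_pos (Finset.mem_Iic.mp x.2)]
  have h2 : (∑ j' ∈ (Finset.Ioi i).attach,
        Y ⟨(i, (j' : Fin n)), le_of_lt (Finset.mem_Ioi.mp j'.2)⟩)
      = ∑ x ∈ Ioi i, sym n Y i x := by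
    rw [← Finset.sum_attach (Ioi i) (fun x => sym n Y i x)]
    refine Finset.sum_congr rfl fun x _ => ?_
    simp only [sym]
    rw [dif_pos (le_of_lt (Finset.mem_Ioi.mp x.2))]
  rw [h1, h2]
  exact constraint_sum_full (sym n Y) (sym_symm Y) i

end DSASMAux

open Finset DSASMAux in
/-- Linear description of the core polytope of diagonally symmetric ASMs:
the convex hull of the upper-triangular parts (including the diagonal) of DSASMs. -/
theorem DSASM_core_polytope (n : ℕ) (hn : 1 ≤ n) :
    convexHull ℝ
        ((fun (X : Fin n → Fin n → ℝ) (p : {p : Fin n × Fin n // p.1 ≤ p.2}) =>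
            X p.1.1 p.1.2) ''
          {X | IsASM n X ∧ ∀ i j, X i j = X j i})
      = {Y : {p : Fin n × Fin n // p.1 ≤ p.2} → ℝ |
          (∀ i j : Fin n, (j : ℕ) + 1 < n →
            0 ≤ (∑ i' ∈ (Finset.Iic (min i j)).attach,
                    Y ⟨((i' : Fin n), i),
                        le_trans (Finset.mem_Iic.mp i'.2) (min_le_left i j)⟩)
                + ∑ j' ∈ (Finset.Ioc i j).attach,
                    Y ⟨(i, (j' : Fin n)), le_of_lt (Finset.mem_Ioc.mp j'.2).1⟩ ∧
            (∑ i' ∈ (Finset.Iic (min i j)).attach,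
                Y ⟨((i' : Fin n), i),
                    le_trans (Finset.mem_Iic.mp i'.2) (min_le_left i j)⟩)
              + (∑ j' ∈ (Finset.Ioc i j).attach,
                  Y ⟨(i, (j' : Fin n)), le_of_lt (Finset.mem_Ioc.mp j'.2).1⟩) ≤ 1) ∧
          (∀ i : Fin n,
            (∑ i' ∈ (Finset.Iic i).attach,
                Y ⟨((i' : Fin n), i), Finset.mem_Iic.mp i'.2⟩)
              + (∑ j' ∈ (Finset.Ioi i).attach,
                  Y ⟨(i, (j' : Fin n)), le_of_lt (Finset.mem_Ioi.mp j'.2)⟩) = 1)} := by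
  apply Set.Subset.antisymm
  · apply convexHull_min
    · rintro _ ⟨X, ⟨hASM, hsymX⟩, rfl⟩
      simp only [Set.mem_setOf_eq]
      constructor
      · intro i j hj
        have hc : (∑ i' ∈ (Finset.Iic (min i j)).attach, X ↑i' i)
            + (∑ j' ∈ (Finset.Ioc i j).attach, X i ↑j') = ∑ x ∈ Iic j, X i x := by
          rw [Finset.sum_attach (Iic (min i j)) (fun x => X x i),
            Finset.sum_attach (Ioc i j) (fun x => X i x)]
          exact constraint_sum X hsymX i j
        rcases hASM.2.1 i j with h | h <;> constructor <;> rw [hc, h] <;> norm_num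
      · intro i
        have hc : (∑ i' ∈ (Finset.Iic i).attach, X ↑i' i)
            + (∑ j' ∈ (Finset.Ioi i).attach, X i ↑j') = ∑ x, X i x := by
          rw [Finset.sum_attach (Iic i) (fun x => X x i),
            Finset.sum_attach (Ioi i) (fun x => X i x)]
          exact constraint_sum_full X hsymX i
        rw [hc]
        exact hASM.2.2.2.1 i
    · intro Y₁ hY₁ Y₂ hY₂ a b ha hb hab
      simp only [Set.mem_setOf_eq] at hY₁ hY₂ ⊢
      simp only [Pi.add_apply, Pi.smul_apply, smul_eq_mul]
      constructor
      · intro i j hj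
        obtain ⟨h1, h2⟩ := hY₁.1 i j hj
        obtain ⟨h3, h4⟩ := hY₂.1 i j hj
        rw [Finset.sum_add_distrib, Finset.sum_add_distrib, ← Finset.mul_sum,
          ← Finset.mul_sum, ← Finset.mul_sum, ← Finset.mul_sum]
        constructor <;> nlinarith
      · intro i
        have h1 := hY₁.2 i
        have h2 := hY₂.2 i
        rw [Finset.sum_add_distrib, Finset.sum_add_distrib, ← Finset.mul_sum,
          ← Finset.mul_sum, ← Finset.mul_sum, ← Finset.mul_sum]
        linear_combination a * h1 + b * h2 + hab
  · intro Y hY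
    simp only [Set.mem_setOf_eq] at hY
    obtain ⟨hY1, hY2⟩ := hY
    have hsym : ∀ i j, sym n Y i j = sym n Y j i := fun i j => sym_symm Y i j
    have hf : ∀ a, a < n → rowP (sym n Y) a n = 1 := by
      intro a ha
      have h := hY2 ⟨a, ha⟩
      rw [convB Y ⟨a, ha⟩] at h
      rw [← univ_rowP (sym n Y) ⟨a, ha⟩]
      exact h
    have hb' : ∀ a, a < n → ∀ b, b ≤ n →
        0 ≤ rowP (sym n Y) a b ∧ rowP (sym n Y) a b ≤ 1 := by
      intro a ha b hbn
      rcases Nat.eq_zero_or_pos b with rfl | hbpos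
      · simp [rowP]
      rcases eq_or_lt_of_le hbn with rfl | hblt
      · rw [hf a ha]; norm_num
      · have hj : b - 1 < n := by omega
        have h := hY1 ⟨a, ha⟩ ⟨b - 1, hj⟩ (show b - 1 + 1 < n by omega)
        rw [convA Y ⟨a, ha⟩ ⟨b - 1, hj⟩] at h
        have hkey : ∑ x ∈ Iic (⟨b - 1, hj⟩ : Fin n), sym n Y ⟨a, ha⟩ x
            = rowP (sym n Y) a b := by
          rw [Iic_rowP]
          congr 1
          show b - 1 + 1 = b
          omega
        rw [hkey] at h
        exact h
    set T : Finset ℝ := insert (0 : ℝ)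
      (((range (n + 1)) ×ˢ (range (n + 1))).image
        (fun q => Int.fract (corner (sym n Y) q.1 q.2))) with hTdef
    have hTprop : ∀ s ∈ T, 0 ≤ s ∧ s < 1 := by
      intro s hs
      rw [hTdef, mem_insert] at hs
      rcases hs with rfl | hs
      · norm_num
      · obtain ⟨q, -, rfl⟩ := mem_image.1 hs
        exact ⟨Int.fract_nonneg _, Int.fract_lt_one _⟩
    have h0T : (0 : ℝ) ∈ T := mem_insert_self _ _
    have hfmem : ∀ a b : ℕ, a ≤ n → b ≤ n → Int.fract (corner (sym n Y) a b) ∈ T := by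
      intro a b ha hbn
      rw [hTdef]
      exact mem_insert_of_mem (mem_image.2 ⟨(a, b),
        mem_product.2 ⟨mem_range.2 (by omega), mem_range.2 (by omega)⟩, rfl⟩)
    have hkey : ∀ a b : ℕ, a ≤ n → b ≤ n →
        ∑ m ∈ range T.card, (fenum T (m + 1) - fenum T m)
            * ((⌈corner (sym n Y) a b - fenum T m⌉ : ℤ) : ℝ)
          = corner (sym n Y) a b :=
      fun a b ha hbn => fenum_key T hTprop h0T (hfmem a b ha hbn)
    have hdecomp : Y = ∑ m ∈ range T.card, (fenum T (m + 1) - fenum T m) •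
        (fun p : {p : Fin n × Fin n // p.1 ≤ p.2} =>
          ceilM (sym n Y) (fenum T m) p.1.1 p.1.2) := by
      funext p
      obtain ⟨⟨i, j⟩, hij⟩ := p
      rw [Finset.sum_apply]
      simp only [Pi.smul_apply, smul_eq_mul]
      have hterm : ∀ m : ℕ,
          (fenum T (m + 1) - fenum T m) * ceilM (sym n Y) (fenum T m) i j
          = (fenum T (m + 1) - fenum T m)
              * ((⌈corner (sym n Y) (↑i + 1) (↑j + 1) - fenum T m⌉ : ℤ) : ℝ)
            - (fenum T (m + 1) - fenum T m)
              * ((⌈corner (sym n Y) ↑i (↑j + 1) - fenum T m⌉ : ℤ) : ℝ)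
            - (fenum T (m + 1) - fenum T m)
              * ((⌈corner (sym n Y) (↑i + 1) ↑j - fenum T m⌉ : ℤ) : ℝ)
            + (fenum T (m + 1) - fenum T m)
              * ((⌈corner (sym n Y) ↑i ↑j - fenum T m⌉ : ℤ) : ℝ) := by
        intro m
        simp only [ceilM, G]
        push_cast
        ring
      rw [Finset.sum_congr rfl (fun m _ => hterm m)]
      rw [Finset.sum_add_distrib, Finset.sum_sub_distrib, Finset.sum_sub_distrib]
      rw [hkey (↑i + 1) (↑j + 1) i.2 j.2, hkey ↑i (↑j + 1) i.2.le j.2,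
        hkey (↑i + 1) ↑j i.2 j.2.le, hkey ↑i ↑j i.2.le j.2.le]
      rw [← entry_eq_corner (sym n Y) i j]
      show Y ⟨(i, j), hij⟩ = sym n Y i j
      unfold sym
      rw [dif_pos hij]
    rw [hdecomp]
    have hw : ∀ m ∈ range T.card, 0 ≤ fenum T (m + 1) - fenum T m :=
      fun m _ => sub_nonneg.2 (fenum_succ_ge T hTprop m)
    have hwsum : ∑ m ∈ range T.card, (fenum T (m + 1) - fenum T m) = 1 :=
      fenum_sum_one T hTprop h0T
    have hmem : ∀ m ∈ range T.card,
        (fun p : {p : Fin n × Fin n // p.1 ≤ p.2} =>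
            ceilM (sym n Y) (fenum T m) p.1.1 p.1.2)
          ∈ ((fun (X : Fin n → Fin n → ℝ) (p : {p : Fin n × Fin n // p.1 ≤ p.2}) =>
                X p.1.1 p.1.2) '' {X | IsASM n X ∧ ∀ i j, X i j = X j i}) := by
      intro m hm
      refine ⟨ceilM (sym n Y) (fenum T m), ⟨?_, fun i j => ceilM_symm hsym _ i j⟩, rfl⟩
      exact ceilM_isASM hsym hb' hf (fenum_nonneg T hTprop m)
        (fenum_lt_one T hTprop (mem_range.1 hm))
    have hcm := Finset.centerMass_mem_convexHull (range T.card) hw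
      (by rw [hwsum]; norm_num) hmem
    simp only [Finset.centerMass] at hcm
    rw [hwsum, inv_one, one_smul] at hcm
    exact hcm
end

section
/- For every n ≥ 1, the dimension of the convex hull of the n×n diagonally symmetric ASMs in ℝ^{n×n} equals n(n−1)/2. -/
namespace DSASMaux

/-- permutation matrix -/
def P (n : ℕ) (σ : Equiv.Perm (Fin n)) : Fin n → Fin n → ℝ :=
  fun i j => if σ i = j then 1 else 0

lemma perm_isASM (n : ℕ) (σ : Equiv.Perm (Fin n)) : IsASM n (P n σ) := by
  have hrow : ∀ (i : Fin n) (s : Finset (Fin n)),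
      (∑ j' ∈ s, P n σ i j') = if σ i ∈ s then (1:ℝ) else 0 := by
    intro i s
    simpa [P] using Finset.sum_ite_eq s (σ i) (fun _ => (1:ℝ))
  have hcol : ∀ (j : Fin n) (s : Finset (Fin n)),
      (∑ i' ∈ s, P n σ i' j) = if σ.symm j ∈ s then (1:ℝ) else 0 := by
    intro j s
    have key : ∀ i' : Fin n, P n σ i' j = if σ.symm j = i' then (1:ℝ) else 0 := by
      intro i'
      have : (σ i' = j) ↔ (σ.symm j = i') := by
        rw [Equiv.symm_apply_eq, eq_comm]
      simp only [P]
      exact if_congr this rfl rfl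
    rw [Finset.sum_congr rfl fun i' _ => key i']
    exact Finset.sum_ite_eq s (σ.symm j) (fun _ => (1:ℝ))
  refine ⟨?_, ?_, ?_, ?_, ?_⟩
  · intro i j; unfold P; split <;> simp
  · intro i j; rw [hrow]; split <;> simp
  · intro i j; rw [hcol]; split <;> simp
  · intro i; rw [hrow]; simp
  · intro j; rw [hcol]; simp

/-- the basis direction matrices -/
def MM (n : ℕ) (i j : Fin n) : Fin n → Fin n → ℝ := fun a b =>
  (if a = i then (1:ℝ) else 0) * (if b = i then 1 else 0)
  + (if a = j then (1:ℝ) else 0) * (if b = j then 1 else 0)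
  - (if a = i then (1:ℝ) else 0) * (if b = j then 1 else 0)
  - (if a = j then (1:ℝ) else 0) * (if b = i then 1 else 0)

lemma MM_eq_sub (n : ℕ) (i j : Fin n) (hij : i ≠ j) :
    MM n i j = P n 1 - P n (Equiv.swap i j) := by
  funext a b
  have : (P n 1 - P n (Equiv.swap i j)) a b = P n 1 a b - P n (Equiv.swap i j) a b := rfl
  rw [this]
  simp only [MM, P, Equiv.Perm.one_apply, Equiv.swap_apply_def]
  by_cases hai : a = i <;> by_cases haj : a = j <;> by_cases hbi : b = i <;>
    by_cases hbj : b = j <;> simp_all <;> split_ifs <;> simp_all <;> ring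

/-- index type -/
abbrev Idx (n : ℕ) := {p : Fin n × Fin n // p.1 < p.2}

lemma card_Idx (n : ℕ) : Fintype.card (Idx n) = n * (n - 1) / 2 := by
  rw [Fintype.card_subtype, Finset.card_filter]
  rw [Fintype.sum_prod_type_right]
  have : ∀ j : Fin n, (∑ i : Fin n, if i < j then 1 else 0) = (j : ℕ) := by
    intro j
    rw [← Finset.card_filter]
    have : Finset.filter (fun i => i < j) Finset.univ = Finset.Iio j := by
      ext x; simp
    rw [this]
    exact Fin.card_Iio j
  rw [Finset.sum_congr rfl fun j _ => this j]
  rw [Fin.sum_univ_eq_sum_range (fun k => k) n]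
  exact Finset.sum_range_id n

noncomputable def fam (n : ℕ) : Idx n → (Fin n → Fin n → ℝ) :=
  fun p => MM n p.1.1 p.1.2

lemma prod_ite_zero {x y : Prop} [Decidable x] [Decidable y] (h : ¬(x ∧ y)) :
    (if x then (1:ℝ) else 0) * (if y then (1:ℝ) else 0) = 0 := by
  split_ifs with h1 h2 <;> simp_all

lemma MM_apply_self (n : ℕ) (i j : Fin n) (hij : i ≠ j) : MM n i j i j = -1 := by
  simp [MM, hij, hij.symm]

lemma MM_apply_ne (n : ℕ) (i j a b : Fin n) (hij : i < j) (hab : a < b)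
    (h : ¬(a = i ∧ b = j)) : MM n i j a b = 0 := by
  have hab' : a ≠ b := ne_of_lt hab
  have h1 : ¬(a = i ∧ b = i) := fun ⟨u, v⟩ => hab' (u.trans v.symm)
  have h2 : ¬(a = j ∧ b = j) := fun ⟨u, v⟩ => hab' (u.trans v.symm)
  have h4 : ¬(a = j ∧ b = i) := by
    rintro ⟨rfl, rfl⟩
    exact absurd (hij.trans hab) (lt_irrefl _)
  simp only [MM]
  rw [prod_ite_zero h1, prod_ite_zero h2, prod_ite_zero h, prod_ite_zero h4]
  ring

lemma indep (n : ℕ) : LinearIndependent ℝ (fam n) := by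
  rw [Fintype.linearIndependent_iff]
  intro g hg q
  have h := congrFun (congrFun hg q.1.1) q.1.2
  rw [Finset.sum_apply, Finset.sum_apply] at h
  simp only [Pi.smul_apply, smul_eq_mul] at h
  rw [Finset.sum_eq_single q ?h1 (by simp)] at h
  · have hq : fam n q q.1.1 q.1.2 = -1 := MM_apply_self n q.1.1 q.1.2 (ne_of_lt q.2)
    rw [hq] at h
    simp only [Pi.zero_apply] at h
    linarith
  case h1 =>
    intro p _ hpq
    have hne : ¬(q.1.1 = p.1.1 ∧ q.1.2 = p.1.2) := by
      rintro ⟨u, v⟩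
      exact hpq (Subtype.ext (Prod.ext u.symm v.symm))
    rw [show fam n p q.1.1 q.1.2 = 0 from MM_apply_ne n p.1.1 p.1.2 q.1.1 q.1.2 p.2 q.2 hne,
      mul_zero]

/-- the enveloping subspace: symmetric matrices with zero row sums -/
def symZero (n : ℕ) : Submodule ℝ (Fin n → Fin n → ℝ) where
  carrier := {Z | (∀ i j, Z i j = Z j i) ∧ ∀ i, (∑ j, Z i j) = 0}
  add_mem' := by
    rintro X Y ⟨hX1, hX2⟩ ⟨hY1, hY2⟩
    refine ⟨fun i j => by simp [Pi.add_apply, hX1 i j, hY1 i j], fun i => ?_⟩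
    simp only [Pi.add_apply]
    rw [Finset.sum_add_distrib, hX2 i, hY2 i, add_zero]
  zero_mem' := by simp
  smul_mem' := by
    rintro c X ⟨hX1, hX2⟩
    refine ⟨fun i j => by simp [hX1 i j], fun i => ?_⟩
    simp only [Pi.smul_apply, smul_eq_mul]
    rw [← Finset.mul_sum, hX2 i, mul_zero]

/-- restriction to strictly upper triangular entries -/
def rmap (n : ℕ) : symZero n →ₗ[ℝ] (Idx n → ℝ) where
  toFun := fun Z p => Z.1 p.1.1 p.1.2
  map_add' := fun _ _ => rfl
  map_smul' := fun _ _ => rfl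

lemma rmap_inj (n : ℕ) : Function.Injective (rmap n) := by
  rw [injective_iff_map_eq_zero]
  intro Z hZ
  obtain ⟨Z, hZ1, hZ2⟩ := Z
  have hoff : ∀ a b : Fin n, a ≠ b → Z a b = 0 := by
    intro a b hab
    rcases lt_or_gt_of_ne hab with h | h
    · exact congrFun hZ ⟨(a, b), h⟩
    · rw [hZ1 a b]; exact congrFun hZ ⟨(b, a), h⟩
  have hdiag : ∀ a : Fin n, Z a a = 0 := by
    intro a
    have h := hZ2 a
    rwa [Finset.sum_eq_single a (fun b _ hb => hoff a b (Ne.symm hb)) (by simp)] at h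
  ext a b
  rcases eq_or_ne a b with rfl | h
  · exact hdiag a
  · exact hoff a b h

theorem main (n : ℕ) :
    Module.finrank ℝ
        ↥(vectorSpan ℝ
          (convexHull ℝ {X : Fin n → Fin n → ℝ | IsASM n X ∧ ∀ i j, X i j = X j i}))
      = n * (n - 1) / 2 := by
  set s : Set (Fin n → Fin n → ℝ) := {X | IsASM n X ∧ ∀ i j, X i j = X j i} with hs
  have hvs : vectorSpan ℝ (convexHull ℝ s) = vectorSpan ℝ s := by
    rw [← direction_affineSpan, affineSpan_convexHull, direction_affineSpan]
  rw [hvs]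
  -- lower bound inclusion
  have hid : P n 1 ∈ s := ⟨perm_isASM n 1, fun i j => by simp only [P, Equiv.Perm.one_apply]; exact if_congr eq_comm rfl rfl⟩
  have hswap : ∀ i j : Fin n, P n (Equiv.swap i j) ∈ s := by
    intro i j
    refine ⟨perm_isASM n _, fun a b => ?_⟩
    simp only [P]
    congr 1
    simp only [eq_iff_iff]
    constructor
    · intro h; rw [← h, Equiv.swap_apply_self]
    · intro h; rw [← h, Equiv.swap_apply_self]
  have h1 : Submodule.span ℝ (Set.range (fam n)) ≤ vectorSpan ℝ s := by
    rw [Submodule.span_le]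
    rintro _ ⟨p, rfl⟩
    have hmem := vsub_mem_vectorSpan ℝ hid (hswap p.1.1 p.1.2)
    have heq : fam n p = P n 1 -ᵥ P n (Equiv.swap p.1.1 p.1.2) := by
      rw [vsub_eq_sub]
      exact MM_eq_sub n p.1.1 p.1.2 (ne_of_lt p.2)
    rw [heq]
    exact hmem
  have h2 : vectorSpan ℝ s ≤ symZero n := by
    rw [vectorSpan_def, Submodule.span_le]
    rintro _ ⟨X, hX, Y, hY, rfl⟩
    obtain ⟨hXa, hXs⟩ := hX
    obtain ⟨hYa, hYs⟩ := hY
    refine ⟨fun i j => ?_, fun i => ?_⟩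
    · show X i j - Y i j = X j i - Y j i
      rw [hXs i j, hYs i j]
    · show (∑ j, (X i j - Y i j)) = 0
      rw [Finset.sum_sub_distrib, hXa.2.2.2.1 i, hYa.2.2.2.1 i, sub_self]
  have hf1 : Module.finrank ℝ ↥(Submodule.span ℝ (Set.range (fam n))) = Fintype.card (Idx n) :=
    finrank_span_eq_card (indep n)
  have hf2 : Module.finrank ℝ ↥(symZero n) ≤ Fintype.card (Idx n) := by
    have := LinearMap.finrank_le_finrank_of_injective (rmap_inj n)
    rwa [Module.finrank_pi] at this
  have hle1 : Fintype.card (Idx n) ≤ Module.finrank ℝ ↥(vectorSpan ℝ s) := by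
    rw [← hf1]; exact Submodule.finrank_mono h1
  have hle2 : Module.finrank ℝ ↥(vectorSpan ℝ s) ≤ Fintype.card (Idx n) :=
    le_trans (Submodule.finrank_mono h2) hf2
  rw [le_antisymm hle2 hle1, card_Idx]

end DSASMaux

/-- For `n ≥ 1`, the dimension of the polytope of `n × n` diagonally symmetric
ASMs is `n(n-1)/2`. -/
theorem DSASM_polytope_dim (n : ℕ) (hn : 1 ≤ n) :
    Module.finrank ℝ
        ↥(vectorSpan ℝ
          (convexHull ℝ {X : Fin n → Fin n → ℝ | IsASM n X ∧ ∀ i j, X i j = X j i}))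
      = n * (n - 1) / 2 := by
  exact DSASMaux.main n
end
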